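/- arXiv:2502.05691 — 10 statements merged into one kernel-verified Lean document; each statement's English description precedes it below -/
import Mathlib

section
/- Let w be a graphon, {S_1,…,S_k} a measurable partition of [0,1], and for each j let ψ_j ∈ L²(S_j) with ‖ψ_j‖ = 1 and ∫_{S_j} ψ_j ≠ 0. Assume that for each j there exists δ_j > 0 such that every f ∈ L²(S_j) with ∫_{S_j} f = 0 satisfies ‖L_j^{1/2} f‖ ≥ δ_j ‖f‖. Then for every f ∈ L²[0,1] and every ε > 0, ‖f‖² ≤ (1+ε) · Σ_{j=1}^{k} ( |S_j| ‖L_j^{1/2} f_j‖² / (δ_j² |∫_{S_j} ψ_j|²) + |S_j| |⟨ψ_j, f_j⟩|² / (ε |∫_{S_j} ψ_j|²) ), where f_j denotes the restriction of f to S_j. -/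
open MeasureTheory Filter
open scoped ENNReal InnerProductSpace

noncomputable section

/-- A graphon: a symmetric measurable function `w : [0,1]² → [0,1]` (extended to `ℝ²`). -/
def IsGraphon (w : ℝ → ℝ → ℝ) : Prop :=
  Measurable (Function.uncurry w) ∧ (∀ x y, w x y = w y x) ∧ ∀ x y, w x y ∈ Set.Icc (0:ℝ) 1

lemma poly_ineq (G Rn a μ V m s ε δ : ℝ) (hG : 0 ≤ G)
    (hδ : 0 < δ) (hε : 0 < ε) (hV : 0 < V) (hμ : μ ≠ 0)
    (hgap : δ * G ≤ Rn) (hs : V * s ^ 2 ≤ (V - μ ^ 2) * G ^ 2)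
    (ha : a = s + m * μ) :
    G ^ 2 + m ^ 2 * V ≤
      (1 + ε) * (V * Rn ^ 2 / (δ ^ 2 * μ ^ 2) + V * a ^ 2 / (ε * μ ^ 2)) := by
  subst ha
  have hμ2 : 0 < μ ^ 2 := by positivity
  have hgap2 : δ ^ 2 * G ^ 2 ≤ Rn ^ 2 := by
    calc δ ^ 2 * G ^ 2 = (δ * G) ^ 2 := by ring
    _ ≤ Rn ^ 2 := pow_le_pow_left₀ (by positivity) hgap 2
  have key : ε * δ ^ 2 * μ ^ 2 * (G ^ 2 + m ^ 2 * V) ≤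
      (1 + ε) * (ε * V * Rn ^ 2 + δ ^ 2 * V * (s + m * μ) ^ 2) := by
    nlinarith [mul_nonneg (mul_nonneg (sq_nonneg δ) hV.le)
        (sq_nonneg (ε * s + (s + m * μ))),
      mul_le_mul_of_nonneg_left hgap2 (by positivity : (0:ℝ) ≤ (1 + ε) * ε * V),
      mul_le_mul_of_nonneg_left hs (by positivity : (0:ℝ) ≤ (1 + ε) * ε * δ ^ 2),
      sq_nonneg (ε * δ * μ * G)]
  have h2 : (1 + ε) * (V * Rn ^ 2 / (δ ^ 2 * μ ^ 2) + V * (s + m * μ) ^ 2 / (ε * μ ^ 2)) =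
      (1 + ε) * (ε * V * Rn ^ 2 + δ ^ 2 * V * (s + m * μ) ^ 2) / (ε * δ ^ 2 * μ ^ 2) := by
    field_simp
  rw [h2, le_div_iff₀ (by positivity)]
  nlinarith [key]

-- real L2 inner product as an integral
lemma l2_inner_eq {α : Type*} [MeasurableSpace α] {μ : Measure α}
    (g h : Lp ℝ 2 μ) : ⟪g, h⟫_ℝ = ∫ x, g x * h x ∂μ := by
  rw [MeasureTheory.L2.inner_def]
  apply integral_congr_ae
  filter_upwards with x
  simp [RCLike.inner_apply, starRingEnd_apply]
  ring


/-- Let `w` be a graphon, `{S_1, …, S_k}` a measurable partition of `[0,1]`,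
and for each `j` let `ψ_j ∈ L²(S_j)` with `‖ψ_j‖ = 1` and `∫_{S_j} ψ_j ≠ 0`.  Assume for each
`j` there is `δ_j > 0` such that every `f ∈ L²(S_j)` with `∫_{S_j} f = 0` satisfies
`‖L_j^{1/2} f‖ ≥ δ_j ‖f‖`, where `L_j` is the Laplacian of the restriction of `w` to
`S_j × S_j` and `L_j^{1/2} = R_j` its positive square root.  Then for every `f ∈ L²[0,1]`
and every `ε > 0`,
`‖f‖² ≤ (1+ε) Σ_j ( |S_j| ‖L_j^{1/2} f_j‖² / (δ_j² |∫_{S_j} ψ_j|²)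
                      + |S_j| |⟨ψ_j, f_j⟩|² / (ε |∫_{S_j} ψ_j|²) )`. -/
theorem graphon_partition_sampling_estimate
    (w : ℝ → ℝ → ℝ) (hw : IsGraphon w)
    (k : ℕ) (S : Fin k → Set ℝ)
    (hSmeas : ∀ j, MeasurableSet (S j))
    (hSdisj : Pairwise (Function.onFun Disjoint S))
    (hScover : (⋃ j, S j) = Set.Icc (0:ℝ) 1)
    -- the Laplacians `L j` on `L²(S j)` and their positive square roots `R j`
    (L R : ∀ j : Fin k, Lp ℝ 2 (volume.restrict (S j)) →L[ℝ] Lp ℝ 2 (volume.restrict (S j)))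
    (hL : ∀ j (g : Lp ℝ 2 (volume.restrict (S j))),
      (L j g : ℝ → ℝ) =ᵐ[volume.restrict (S j)]
        fun x => ∫ y in S j, w x y * (g x - g y))
    (hRsa : ∀ j (g h : Lp ℝ 2 (volume.restrict (S j))), ⟪R j g, h⟫_ℝ = ⟪g, R j h⟫_ℝ)
    (hRpos : ∀ j (g : Lp ℝ 2 (volume.restrict (S j))), 0 ≤ ⟪R j g, g⟫_ℝ)
    (hRsq : ∀ j (g : Lp ℝ 2 (volume.restrict (S j))), R j (R j g) = L j g)
    -- the sampling functions `ψ j`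
    (ψ : ∀ j : Fin k, Lp ℝ 2 (volume.restrict (S j)))
    (hψnorm : ∀ j, ‖ψ j‖ = 1)
    (hψint : ∀ j, (∫ x in S j, ψ j x) ≠ 0)
    -- the spectral gap assumption (i)
    (δ : Fin k → ℝ) (hδpos : ∀ j, 0 < δ j)
    (hgap : ∀ j (g : Lp ℝ 2 (volume.restrict (S j))),
      (∫ x in S j, g x) = 0 → δ j * ‖g‖ ≤ ‖R j g‖)
    -- `f ∈ L²[0,1]` and its restrictions `f j ∈ L²(S j)`
    (f : Lp ℝ 2 (volume.restrict (Set.Icc (0:ℝ) 1)))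
    (fj : ∀ j : Fin k, Lp ℝ 2 (volume.restrict (S j)))
    (hfj : ∀ j, (fj j : ℝ → ℝ) =ᵐ[volume.restrict (S j)] f)
    (ε : ℝ) (hε : 0 < ε) :
    ‖f‖ ^ 2 ≤ (1 + ε) * ∑ j : Fin k,
      ((volume (S j)).toReal * ‖R j (fj j)‖ ^ 2
          / (δ j ^ 2 * (∫ x in S j, ψ j x) ^ 2)
        + (volume (S j)).toReal * ⟪ψ j, fj j⟫_ℝ ^ 2
          / (ε * (∫ x in S j, ψ j x) ^ 2)) := by
  -- finiteness of blocks
  have hSsub : ∀ j, S j ⊆ Set.Icc (0:ℝ) 1 := fun j => hScover ▸ Set.subset_iUnion S j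
  have hSfin : ∀ j, volume (S j) < ⊤ := fun j =>
    lt_of_le_of_lt (measure_mono (hSsub j)) (by simp)
  haveI : ∀ j, IsFiniteMeasure (volume.restrict (S j)) := fun j =>
    ⟨by rw [Measure.restrict_apply_univ]; exact hSfin j⟩
  -- Step 1: per-block estimate
  have block : ∀ j : Fin k, ‖fj j‖ ^ 2 ≤ (1 + ε) *
      ((volume (S j)).toReal * ‖R j (fj j)‖ ^ 2
          / (δ j ^ 2 * (∫ x in S j, ψ j x) ^ 2)
        + (volume (S j)).toReal * ⟪ψ j, fj j⟫_ℝ ^ 2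
          / (ε * (∫ x in S j, ψ j x) ^ 2)) := by
    intro j
    set ν := volume.restrict (S j) with hν
    set μ₀ : ℝ := ∫ x in S j, ψ j x with hμ₀
    have hμne : μ₀ ≠ 0 := hψint j
    set V : ℝ := (volume (S j)).toReal with hVdef
    have hνuniv : ν Set.univ = volume (S j) := Measure.restrict_apply_univ _
    have hV : 0 < V := by
      rcases eq_or_ne (volume (S j)) 0 with h0 | h0
      · exfalso; apply hμne
        have : ν = 0 := Measure.restrict_eq_zero.mpr h0
        rw [hμ₀]; show (∫ x, ψ j x ∂ν) = 0
        rw [this]; simp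
      · exact ENNReal.toReal_pos h0 (hSfin j).ne
    -- constant function 1
    set one : Lp ℝ 2 ν := (memLp_const (1:ℝ)).toLp (fun _ => (1:ℝ)) with honedef
    have hone : (one : ℝ → ℝ) =ᵐ[ν] fun _ => (1:ℝ) := MemLp.coeFn_toLp _
    have hint_one : ∫ x, (one : ℝ → ℝ) x ∂ν = V := by
      rw [integral_congr_ae hone, integral_const, smul_eq_mul, mul_one, Measure.real, hνuniv]
    have hinner_one_one : ⟪one, one⟫_ℝ = V := by
      rw [l2_inner_eq]
      have hcongr : (fun x => (one : ℝ → ℝ) x * (one : ℝ → ℝ) x) =ᵐ[ν]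
          fun _ => (1:ℝ) := by
        filter_upwards [hone] with x hx; rw [hx]; simp
      rw [integral_congr_ae hcongr, integral_const, smul_eq_mul, mul_one, Measure.real, hνuniv]
    -- integrability
    have hint : ∀ g : Lp ℝ 2 ν, Integrable (g : ℝ → ℝ) ν := fun g =>
      (Lp.memLp g).integrable (by norm_num)
    -- mean of fj j
    set m : ℝ := (∫ x, (fj j : ℝ → ℝ) x ∂ν) / V with hm
    set g : Lp ℝ 2 ν := fj j - m • one with hg
    have hfj_eq : fj j = g + m • one := by rw [hg]; abel
    have hgcoe : (g : ℝ → ℝ) =ᵐ[ν] fun x => (fj j : ℝ → ℝ) x - m * (one : ℝ → ℝ) x := by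
      filter_upwards [Lp.coeFn_sub (fj j) (m • one), Lp.coeFn_smul m one] with x h1 h2
      rw [h1]; simp [h2]
    have hgint : ∫ x, (g : ℝ → ℝ) x ∂ν = 0 := by
      rw [integral_congr_ae hgcoe, integral_sub (hint (fj j))
        ((hint one).const_mul m), integral_const_mul, hint_one, hm]
      field_simp
      simp
    -- inner products with one
    have hinner_one_g : ⟪one, g⟫_ℝ = 0 := by
      rw [l2_inner_eq]
      have hcongr : (fun x => (one : ℝ → ℝ) x * (g : ℝ → ℝ) x) =ᵐ[ν]
          fun x => (g : ℝ → ℝ) x := by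
        filter_upwards [hone] with x hx; rw [hx]; simp
      rw [integral_congr_ae hcongr]
      exact hgint
    have hinner_psi_one : ⟪ψ j, one⟫_ℝ = μ₀ := by
      rw [l2_inner_eq]
      have hcongr : (fun x => (ψ j : ℝ → ℝ) x * (one : ℝ → ℝ) x) =ᵐ[ν]
          fun x => (ψ j : ℝ → ℝ) x := by
        filter_upwards [hone] with x hx; rw [hx]; simp
      rw [integral_congr_ae hcongr]
    -- R kills constants
    have hLone : L j one = 0 := by
      rw [Lp.eq_zero_iff_ae_eq_zero]
      have h0 : (fun x => ∫ y in S j, w x y * ((one : ℝ → ℝ) x - (one : ℝ → ℝ) y))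
          =ᵐ[ν] (fun _ => (0:ℝ)) := by
        filter_upwards [hone] with x hx
        rw [hx]
        have : (fun y => w x y * ((1:ℝ) - (one : ℝ → ℝ) y)) =ᵐ[ν]
            fun _ => (0:ℝ) := by
          filter_upwards [hone] with y hy; rw [hy]; ring
        calc (∫ y in S j, w x y * ((1:ℝ) - (one : ℝ → ℝ) y))
            = ∫ _ : ℝ, (0:ℝ) ∂ν := integral_congr_ae this
        _ = 0 := by simp
      exact (hL j one).trans h0
    have hRone : R j one = 0 := by
      have h1 : ⟪R j one, R j one⟫_ℝ = 0 := by
        rw [← hRsa j (R j one) one, hRsq j one, hLone, inner_zero_left]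
      have := real_inner_self_eq_norm_sq (R j one)
      rw [h1] at this
      have : ‖R j one‖ = 0 := by nlinarith [norm_nonneg (R j one)]
      exact norm_eq_zero.mp this
    have hRg : R j g = R j (fj j) := by
      rw [hg, map_sub, ContinuousLinearMap.map_smul, hRone, smul_zero, sub_zero]
    -- spectral gap applied to g
    have hgap' : δ j * ‖g‖ ≤ ‖R j (fj j)‖ := by
      rw [← hRg]; exact hgap j g hgint
    -- Pythagoras
    have hpyth : ‖fj j‖ ^ 2 = ‖g‖ ^ 2 + m ^ 2 * V := by
      have horth : ⟪g, m • one⟫_ℝ = 0 := by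
        rw [real_inner_smul_right, real_inner_comm, hinner_one_g, mul_zero]
      have hnsq : ‖m • one‖ ^ 2 = m ^ 2 * V := by
        rw [← real_inner_self_eq_norm_sq, real_inner_smul_left, real_inner_smul_right,
          hinner_one_one]; ring
      rw [hfj_eq, @norm_add_sq_real, horth, hnsq]; ring
    -- inner products with ψ
    set s : ℝ := ⟪ψ j, g⟫_ℝ with hs
    have ha : ⟪ψ j, fj j⟫_ℝ = s + m * μ₀ := by
      rw [hfj_eq, inner_add_right, real_inner_smul_right, hinner_psi_one]
    -- Bessel-type bound
    have hBessel : V * s ^ 2 ≤ (V - μ₀ ^ 2) * ‖g‖ ^ 2 := by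
      have hproj : ⟪ψ j - (μ₀ / V) • one, g⟫_ℝ = s := by
        rw [inner_sub_left, real_inner_smul_left, hinner_one_g, mul_zero, sub_zero]
      have hnorm : ‖ψ j - (μ₀ / V) • one‖ ^ 2 = 1 - μ₀ ^ 2 / V := by
        have hno : ‖(μ₀ / V) • one‖ ^ 2 = (μ₀ / V) ^ 2 * V := by
          rw [← real_inner_self_eq_norm_sq, real_inner_smul_left,
            real_inner_smul_right, hinner_one_one]; ring
        rw [@norm_sub_sq_real, real_inner_smul_right, hinner_psi_one, hψnorm j, hno]
        field_simp
        ring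
      have hCS : s ^ 2 ≤ (1 - μ₀ ^ 2 / V) * ‖g‖ ^ 2 := by
        have h1 : |s| ≤ ‖ψ j - (μ₀ / V) • one‖ * ‖g‖ := by
          rw [← hproj]; exact abs_real_inner_le_norm _ _
        have h2 : s ^ 2 ≤ (‖ψ j - (μ₀ / V) • one‖ * ‖g‖) ^ 2 :=
          sq_le_sq' (abs_le.mp h1).1 (abs_le.mp h1).2
        calc s ^ 2 ≤ (‖ψ j - (μ₀ / V) • one‖ * ‖g‖) ^ 2 := h2
        _ = ‖ψ j - (μ₀ / V) • one‖ ^ 2 * ‖g‖ ^ 2 := by ring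
        _ = (1 - μ₀ ^ 2 / V) * ‖g‖ ^ 2 := by rw [hnorm]
      calc V * s ^ 2 ≤ V * ((1 - μ₀ ^ 2 / V) * ‖g‖ ^ 2) := by
            exact mul_le_mul_of_nonneg_left hCS hV.le
      _ = (V - μ₀ ^ 2) * ‖g‖ ^ 2 := by field_simp
    rw [hpyth]
    exact poly_ineq ‖g‖ ‖R j (fj j)‖ _ μ₀ V m s ε (δ j) (norm_nonneg _)
      (hδpos j) hε hV hμne hgap' hBessel ha
  -- Step 2: ‖f‖² = Σ ‖fj j‖²
  have hsum : ‖f‖ ^ 2 = ∑ j : Fin k, ‖fj j‖ ^ 2 := by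
    have hint2 : IntegrableOn (fun x => (f : ℝ → ℝ) x * (f : ℝ → ℝ) x)
        (Set.Icc (0:ℝ) 1) volume := by
      have := MeasureTheory.L2.integrable_inner (𝕜 := ℝ) f f
      simpa [RCLike.inner_apply, IntegrableOn, pow_two] using this
    have h1 : ‖f‖ ^ 2 = ∫ x in Set.Icc (0:ℝ) 1, (f : ℝ → ℝ) x * (f : ℝ → ℝ) x := by
      rw [← real_inner_self_eq_norm_sq, l2_inner_eq]
    have hint2' : IntegrableOn (fun x => (f : ℝ → ℝ) x * (f : ℝ → ℝ) x)
        (⋃ j, S j) volume := by rw [hScover]; exact hint2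
    have h2 : ∫ x in Set.Icc (0:ℝ) 1, (f : ℝ → ℝ) x * (f : ℝ → ℝ) x
        = ∑ j : Fin k, ∫ x in S j, (f : ℝ → ℝ) x * (f : ℝ → ℝ) x := by
      have := integral_iUnion hSmeas hSdisj hint2'
      rw [tsum_fintype, hScover] at this
      exact this
    have h3 : ∀ j : Fin k, ∫ x in S j, (f : ℝ → ℝ) x * (f : ℝ → ℝ) x = ‖fj j‖ ^ 2 := by
      intro j
      rw [← real_inner_self_eq_norm_sq, l2_inner_eq]
      apply integral_congr_ae
      filter_upwards [hfj j] with x hx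
      rw [hx]
    rw [h1, h2]
    exact Finset.sum_congr rfl fun j _ => h3 j
  rw [hsum, Finset.mul_sum]
  exact Finset.sum_le_sum fun j _ => block j
end
end

section
/- Let H be a real or complex Hilbert space, φ, ψ ∈ H with ‖φ‖ = ‖ψ‖ = 1, and let P be the orthogonal projection onto the orthogonal complement of φ. Then for every g ∈ H with ⟨g, ψ⟩ = 0, one has |⟨ψ, φ⟩| · ‖g‖ ≤ ‖P g‖. -/
open scoped InnerProductSpace

/-!
Split `g = c φ + P g` and `ψ = d φ + P ψ` along `𝕜 ∙ φ` and its complement, where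
`c = ⟪φ, g⟫`, `d = ⟪φ, ψ⟫`. Since `g ⊥ ψ`, the inner products of the two components cancel, so
`‖c‖ ‖d‖ = ‖⟪P g, P ψ⟫‖ ≤ ‖P g‖ ‖P ψ‖`; combined with Pythagoras for `g` and `ψ` this gives
`‖d‖² ‖g‖² = ‖d‖² (‖c‖² + ‖P g‖²) ≤ ‖P g‖² (‖P ψ‖² + ‖d‖²) = ‖P g‖² ‖ψ‖²`.
-/

namespace Submodule

variable {𝕜 E : Type*} [RCLike 𝕜] [NormedAddCommGroup E] [InnerProductSpace 𝕜 E]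

theorem inner_starProjection_starProjection (K : Submodule 𝕜 E) [K.HasOrthogonalProjection]
    (x y : E) : ⟪K.starProjection x, K.starProjection y⟫_𝕜 = ⟪x, K.starProjection y⟫_𝕜 := by
  rw [inner_starProjection_left_eq_right,
    starProjection_eq_self_iff.2 (starProjection_apply_mem _ y)]

theorem inner_starProjection_orthogonal_eq_neg (K : Submodule 𝕜 E) [K.HasOrthogonalProjection]
    {x y : E} (h : ⟪x, y⟫_𝕜 = 0) :
    ⟪Kᗮ.starProjection x, Kᗮ.starProjection y⟫_𝕜 =
      -⟪K.starProjection x, K.starProjection y⟫_𝕜 := by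
  rw [eq_neg_iff_add_eq_zero, inner_starProjection_starProjection,
    inner_starProjection_starProjection, ← inner_add_right, add_comm,
    starProjection_add_starProjection_orthogonal, h]

theorem norm_inner_eq_norm_mul_norm_of_mem_span_singleton {v u w : E}
    (hu : u ∈ 𝕜 ∙ v) (hw : w ∈ 𝕜 ∙ v) : ‖⟪u, w⟫_𝕜‖ = ‖u‖ * ‖w‖ := by
  obtain ⟨a, rfl⟩ := mem_span_singleton.1 hu
  obtain ⟨b, rfl⟩ := mem_span_singleton.1 hw
  simp only [inner_smul_left, inner_smul_right, inner_self_eq_norm_sq_to_K, norm_mul, norm_smul,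
    RCLike.norm_conj, norm_pow, RCLike.norm_ofReal, abs_norm]
  ring

theorem norm_starProjection_unit_singleton {v : E} (hv : ‖v‖ = 1) (w : E) :
    ‖(𝕜 ∙ v).starProjection w‖ = ‖⟪v, w⟫_𝕜‖ := by
  rw [starProjection_unit_singleton 𝕜 hv, norm_smul, hv, mul_one]

theorem norm_starProjection_singleton_mul_norm_le_of_inner_eq_zero (v : E) {x y : E}
    (h : ⟪x, y⟫_𝕜 = 0) :
    ‖(𝕜 ∙ v).starProjection y‖ * ‖x‖ ≤ ‖y‖ * ‖(𝕜 ∙ v)ᗮ.starProjection x‖ := by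
  set P := (𝕜 ∙ v).starProjection
  set Q := (𝕜 ∙ v)ᗮ.starProjection
  have hPQ : ‖P x‖ * ‖P y‖ ≤ ‖Q x‖ * ‖Q y‖ := calc
    ‖P x‖ * ‖P y‖ = ‖⟪P x, P y⟫_𝕜‖ :=
      (norm_inner_eq_norm_mul_norm_of_mem_span_singleton (starProjection_apply_mem _ x)
        (starProjection_apply_mem _ y)).symm
    _ = ‖⟪Q x, Q y⟫_𝕜‖ := by rw [inner_starProjection_orthogonal_eq_neg _ h, norm_neg]
    _ ≤ ‖Q x‖ * ‖Q y‖ := norm_inner_le_norm _ _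
  have hx := norm_sq_eq_add_norm_sq_starProjection x (𝕜 ∙ v)
  have hy := norm_sq_eq_add_norm_sq_starProjection y (𝕜 ∙ v)
  have hsq : (‖P y‖ * ‖x‖) ^ 2 ≤ (‖y‖ * ‖Q x‖) ^ 2 := by
    have := mul_le_mul hPQ hPQ (by positivity) (by positivity)
    rw [mul_pow, mul_pow, hx, hy]
    nlinarith
  exact (pow_le_pow_iff_left₀ (by positivity) (by positivity) two_ne_zero).1 hsq

end Submodule

theorem norm_inner_mul_norm_le_norm_orthogonalProjection_general
    {𝕜 H : Type*} [RCLike 𝕜] [NormedAddCommGroup H] [InnerProductSpace 𝕜 H]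
    (φ ψ : H) (hφ : ‖φ‖ = 1) (hψ : ‖ψ‖ = 1)
    (g : H) (hg : ⟪g, ψ⟫_𝕜 = 0) :
    ‖⟪ψ, φ⟫_𝕜‖ * ‖g‖ ≤ ‖(Submodule.orthogonalProjectionOnto (𝕜 ∙ φ)ᗮ g : H)‖ := by
  have key := Submodule.norm_starProjection_singleton_mul_norm_le_of_inner_eq_zero φ hg
  rwa [Submodule.norm_starProjection_unit_singleton hφ, hψ, one_mul, ← inner_conj_symm,
    RCLike.norm_conj] at key

/-- Let `H` be a real or complex Hilbert space, `φ, ψ ∈ H` with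
`‖φ‖ = ‖ψ‖ = 1`, and let `P` be the orthogonal projection onto the orthogonal complement
of `φ`.  Then for every `g ∈ H` with `⟨g, ψ⟩ = 0`, one has `|⟨ψ, φ⟩| ⬝ ‖g‖ ≤ ‖P g‖`. -/
theorem norm_inner_mul_norm_le_norm_orthogonalProjection
    {𝕜 H : Type*} [RCLike 𝕜] [NormedAddCommGroup H] [InnerProductSpace 𝕜 H]
    [CompleteSpace H] (φ ψ : H) (hφ : ‖φ‖ = 1) (hψ : ‖ψ‖ = 1)
    (g : H) (hg : ⟪g, ψ⟫_𝕜 = 0) :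
    ‖⟪ψ, φ⟫_𝕜‖ * ‖g‖ ≤ ‖(Submodule.orthogonalProjectionOnto (𝕜 ∙ φ)ᗮ g : H)‖ :=
  norm_inner_mul_norm_le_norm_orthogonalProjection_general φ ψ hφ hψ g hg
end

section
/- Let S ⊆ [0,1] be measurable with |S| > 0, let w : S × S → [0,1] be symmetric and measurable, and let L be the operator on L²(S) given by (L f)(x) = ∫_S w(x,y)(f(x) − f(y)) dy, with positive square root L^{1/2}. Let φ = 1_S/√|S| and let ψ ∈ L²(S) with ‖ψ‖ = 1 and ∫_S ψ ≠ 0. Suppose there exists δ > 0 such that every f ∈ L²(S) with ∫_S f = 0 satisfies ‖L^{1/2} f‖ ≥ δ ‖f‖. Then for every g ∈ L²(S) with ⟨g, ψ⟩ = 0, one has ‖L^{1/2} g‖ ≥ δ |⟨ψ, φ⟩| ‖g‖. -/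
open MeasureTheory Filter
open scoped ENNReal InnerProductSpace

noncomputable section

private lemma aux_abs_mul_le (a c x y : ℝ) (hx : 0 ≤ x) (hy : 0 ≤ y)
    (h1 : x^2 = c^2 + y^2) (h2 : (c*a)^2 ≤ y^2 * (1 - a^2)) : |a| * x ≤ y := by
  have key : (|a| * x)^2 ≤ y^2 := by
    have : (|a| * x)^2 = a^2 * (c^2 + y^2) := by rw [mul_pow, sq_abs, h1]
    nlinarith
  nlinarith [mul_nonneg (abs_nonneg a) hx]


set_option maxHeartbeats 1000000 in
/-- Let `S ⊆ [0,1]` be measurable with `|S| > 0`, `w : S × S → [0,1]`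
symmetric measurable, `L` the Laplacian on `L²(S)` with positive square root `R = L^{1/2}`,
`φ = 1_S/√|S|`, and `ψ ∈ L²(S)` with `‖ψ‖ = 1` and `∫_S ψ ≠ 0`.  If there is `δ > 0` such
that every `f ∈ L²(S)` with `∫_S f = 0` satisfies `‖L^{1/2} f‖ ≥ δ ‖f‖`, then every
`g ∈ L²(S)` with `⟨g, ψ⟩ = 0` satisfies `‖L^{1/2} g‖ ≥ δ |⟨ψ, φ⟩| ‖g‖`. -/
theorem sqrt_laplacian_lower_bound_of_inner_psi_eq_zero
    (S : Set ℝ) (hSsub : S ⊆ Set.Icc (0:ℝ) 1) (hSmeas : MeasurableSet S)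
    (hSpos : 0 < volume S)
    (w : ℝ → ℝ → ℝ)
    (hwmeas : Measurable (Function.uncurry w))
    (hwsym : ∀ x y, w x y = w y x)
    (hwrange : ∀ x y, w x y ∈ Set.Icc (0:ℝ) 1)
    (L R : Lp ℝ 2 (volume.restrict S) →L[ℝ] Lp ℝ 2 (volume.restrict S))
    (hL : ∀ g : Lp ℝ 2 (volume.restrict S),
      (L g : ℝ → ℝ) =ᵐ[volume.restrict S] fun x => ∫ y in S, w x y * (g x - g y))
    (hRsa : ∀ g h : Lp ℝ 2 (volume.restrict S), ⟪R g, h⟫_ℝ = ⟪g, R h⟫_ℝ)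
    (hRpos : ∀ g : Lp ℝ 2 (volume.restrict S), 0 ≤ ⟪R g, g⟫_ℝ)
    (hRsq : ∀ g : Lp ℝ 2 (volume.restrict S), R (R g) = L g)
    (φ : Lp ℝ 2 (volume.restrict S))
    (hφ : (φ : ℝ → ℝ) =ᵐ[volume.restrict S] fun _ => 1 / Real.sqrt (volume S).toReal)
    (ψ : Lp ℝ 2 (volume.restrict S)) (hψnorm : ‖ψ‖ = 1)
    (hψint : (∫ x in S, ψ x) ≠ 0)
    (δ : ℝ) (hδpos : 0 < δ)
    (hgap : ∀ g : Lp ℝ 2 (volume.restrict S), (∫ x in S, g x) = 0 → δ * ‖g‖ ≤ ‖R g‖)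
    (g : Lp ℝ 2 (volume.restrict S)) (hg : ⟪g, ψ⟫_ℝ = 0) :
    δ * |⟪ψ, φ⟫_ℝ| * ‖g‖ ≤ ‖R g‖ := by
  have hfin : volume S < ⊤ :=
    lt_of_le_of_lt (measure_mono hSsub) (by simp [Real.volume_Icc])
  haveI : IsFiniteMeasure (volume.restrict S) :=
    ⟨by simpa [Measure.restrict_apply_univ] using hfin⟩
  set m := (volume S).toReal with hm
  have hmpos : 0 < m := ENNReal.toReal_pos hSpos.ne' hfin.ne
  have hsm : 0 < Real.sqrt m := Real.sqrt_pos.mpr hmpos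
  -- inner product with φ computes the integral
  have hinnerφ : ∀ h : Lp ℝ 2 (volume.restrict S),
      ⟪h, φ⟫_ℝ = (∫ x in S, h x) / Real.sqrt m := by
    intro h
    rw [MeasureTheory.L2.inner_def]
    have heq : (fun x => ⟪h x, φ x⟫_ℝ) =ᵐ[volume.restrict S]
        fun x => h x * (1 / Real.sqrt m) := by
      filter_upwards [hφ] with x hx
      simp [hx, RCLike.inner_apply]; ring
    rw [integral_congr_ae heq, integral_mul_const]
    ring
  -- ∫ φ = √m
  have hφint : (∫ x in S, φ x) = Real.sqrt m := by
    rw [integral_congr_ae hφ]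
    rw [setIntegral_const]
    rw [smul_eq_mul]
    change m * (1 / Real.sqrt m) = Real.sqrt m
    rw [div_eq_mul_inv, one_mul]
    rw [← Real.sqrt_mul_self hmpos.le]
    field_simp
    rw [Real.sq_sqrt (Real.sqrt_nonneg _)]
  have hφφ : ⟪φ, φ⟫_ℝ = 1 := by
    rw [hinnerφ φ, hφint, div_self hsm.ne']
  have hφnorm : ‖φ‖ = 1 := by
    have := real_inner_self_eq_norm_sq φ
    rw [hφφ] at this
    nlinarith [norm_nonneg φ]
  -- L φ = 0 a.e., hence R φ = 0
  have hLφ : (L φ : ℝ → ℝ) =ᵐ[volume.restrict S] 0 := by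
    filter_upwards [hL φ, hφ] with x hx hφx
    rw [hx]
    have h0 : ∀ᵐ y ∂(volume.restrict S), w x y * (φ x - φ y) = 0 := by
      filter_upwards [hφ] with y hy
      rw [hφx, hy]; ring
    calc (∫ y in S, w x y * (φ x - φ y))
        = ∫ y in S, (0:ℝ) := integral_congr_ae h0
      _ = 0 := by simp
  have hRφ : R φ = 0 := by
    have h1 : ⟪R φ, R φ⟫_ℝ = 0 := by
      rw [hRsa, hRsq]
      rw [MeasureTheory.L2.inner_def]
      have : (fun x => ⟪φ x, (L φ : ℝ → ℝ) x⟫_ℝ) =ᵐ[volume.restrict S] 0 := by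
        filter_upwards [hLφ] with x hx
        simp [hx, RCLike.inner_apply]
      rw [integral_congr_ae this]
      simp
    exact inner_self_eq_zero.mp h1
  -- decomposition
  set a := ⟪ψ, φ⟫_ℝ with ha
  set c := ⟪g, φ⟫_ℝ with hc
  set g' := g - c • φ with hg'
  have hg'φ : ⟪g', φ⟫_ℝ = 0 := by
    rw [hg', inner_sub_left, real_inner_smul_left, hφφ, ← hc]; ring
  have hg'int : (∫ x in S, g' x) = 0 := by
    have := hinnerφ g'
    rw [hg'φ] at this
    have h2 : (∫ x in S, g' x) / Real.sqrt m = 0 := this.symm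
    exact (div_eq_zero_iff.mp h2).resolve_right hsm.ne'
  have hgapg' : δ * ‖g'‖ ≤ ‖R g'‖ := hgap g' hg'int
  have hRg' : R g' = R g := by
    rw [hg', map_sub, R.map_smul, hRφ, smul_zero, sub_zero]
  -- Pythagoras : ‖g‖² = c² + ‖g'‖²
  have hgsq : ‖g‖^2 = c^2 + ‖g'‖^2 := by
    have hgdec : g = g' + c • φ := by rw [hg']; abel
    rw [hgdec, norm_add_sq_real, real_inner_smul_right, hg'φ, norm_smul, hφnorm]
    simp [mul_pow, sq_abs]
    ring
  -- ⟪g', ψ - a•φ⟫ = -c*a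
  set ψ' := ψ - a • φ with hψ'
  have hg'ψ : ⟪g', ψ⟫_ℝ = -(c*a) := by
    rw [hg', inner_sub_left, hg, real_inner_smul_left, real_inner_comm]
    rw [← ha]
    ring
  have hg'ψ' : ⟪g', ψ'⟫_ℝ = -(c*a) := by
    rw [hψ', inner_sub_right, real_inner_smul_right, hg'φ, hg'ψ]; ring
  have hψ'sq : ‖ψ'‖^2 = 1 - a^2 := by
    rw [hψ', norm_sub_sq_real, real_inner_smul_right, norm_smul, hφnorm, hψnorm]
    simp [mul_pow, sq_abs]
    ring
  -- Cauchy-Schwarz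
  have hCS : |⟪g', ψ'⟫_ℝ| ≤ ‖g'‖ * ‖ψ'‖ := abs_real_inner_le_norm _ _
  have hCS2 : (c*a)^2 ≤ ‖g'‖^2 * (1 - a^2) := by
    have := sq_le_sq' (neg_le_of_abs_le hCS) (le_of_abs_le hCS)
    rw [hg'ψ'] at this
    calc (c*a)^2 = (-(c*a))^2 := by ring
      _ ≤ (‖g'‖ * ‖ψ'‖)^2 := this
      _ = ‖g'‖^2 * ‖ψ'‖^2 := by ring
      _ = ‖g'‖^2 * (1 - a^2) := by rw [hψ'sq]
  -- key: |a| * ‖g‖ ≤ ‖g'‖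
  have hkey : |a| * ‖g‖ ≤ ‖g'‖ :=
    aux_abs_mul_le a c ‖g‖ ‖g'‖ (norm_nonneg g) (norm_nonneg g') hgsq hCS2
  calc δ * |a| * ‖g‖ = δ * (|a| * ‖g‖) := by ring
    _ ≤ δ * ‖g'‖ := mul_le_mul_of_nonneg_left hkey hδpos.le
    _ ≤ ‖R g'‖ := hgapg'
    _ = ‖R g‖ := by rw [hRg']
end
end

section
/- Let S ⊆ [0,1] be measurable with |S| > 0 and let w : S × S → [0,1] be symmetric and measurable. Say w is connected if for every measurable E ⊆ S with 0 < |E| < |S| one has ∫_{E × (S∖E)} w(x,y) dx dy > 0. Let L be the operator on L²(S) given by (L f)(x) = ∫_S w(x,y)(f(x) − f(y)) dy. If w is connected, then 0 is a simple eigenvalue of L; that is, every f ∈ L²(S) with L f = 0 is almost everywhere equal to a constant multiple of the constant function 1 on S. -/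
open MeasureTheory Filter
open scoped ENNReal InnerProductSpace

noncomputable section

/-- If every super-level set of a measurable `g` on `S` has measure `0` or full measure,
then `g` is a.e. constant on `S`. -/
lemma ae_const_of_levels {S : Set ℝ} (hSmeas : MeasurableSet S) (hSfin : volume S ≠ ⊤)
    (hSpos : 0 < volume S) {g : ℝ → ℝ} (hg : Measurable g)
    (hno : ∀ c : ℝ, volume (S ∩ g ⁻¹' Set.Ioi c) = 0 ∨ volume (S ∩ g ⁻¹' Set.Ioi c) = volume S) :
    ∃ c : ℝ, ∀ᵐ x ∂(volume.restrict S), g x = c := by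
  set E : ℝ → Set ℝ := fun c => S ∩ g ⁻¹' Set.Ioi c with hE
  have hEmeas : ∀ c, MeasurableSet (E c) := fun c => hSmeas.inter (hg measurableSet_Ioi)
  have hEmono : ∀ {a b : ℝ}, a ≤ b → E b ⊆ E a := by
    intro a b hab x hx
    exact ⟨hx.1, lt_of_le_of_lt hab hx.2⟩
  set A : Set ℝ := {c | volume (E c) = 0} with hA
  -- A is nonempty
  have hAne : A.Nonempty := by
    have hanti : Antitone fun n : ℕ => E n := fun a b hab => hEmono (by exact_mod_cast hab)
    have hiInter : ⋂ n : ℕ, E n = ∅ := by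
      ext x
      simp only [Set.mem_iInter, Set.mem_empty_iff_false, iff_false, not_forall]
      obtain ⟨n, hn⟩ := exists_nat_gt (g x)
      exact ⟨n, fun hmem => lt_asymm hn hmem.2⟩
    have htends := tendsto_measure_iInter_atTop (μ := volume)
      (fun n : ℕ => (hEmeas n).nullMeasurableSet) hanti
      ⟨0, ne_top_of_le_ne_top hSfin (measure_mono Set.inter_subset_left)⟩
    rw [hiInter] at htends
    simp only [measure_empty] at htends
    have : ∀ᶠ n : ℕ in atTop, volume (E n) < volume S := by
      have := htends.eventually_lt_const hSpos  -- (μ ∘ E) n < volume S eventually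
      simpa using this
    obtain ⟨n, hn⟩ := this.exists
    rcases hno n with h0 | hfull
    · exact ⟨n, h0⟩
    · exact absurd hfull hn.ne
  -- A is bounded below
  have hAbdd : BddBelow A := by
    have hmono : Monotone fun n : ℕ => E (-(n : ℝ)) := fun a b hab =>
      hEmono (by simpa using (Nat.cast_le.mpr hab : (a:ℝ) ≤ b))
    have hiUnion : ⋃ n : ℕ, E (-(n : ℝ)) = S := by
      ext x
      simp only [Set.mem_iUnion, hE, Set.mem_inter_iff, Set.mem_preimage, Set.mem_Ioi]
      constructor
      · rintro ⟨n, hn, _⟩; exact hn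
      · intro hx
        obtain ⟨n, hn⟩ := exists_nat_gt (-(g x))
        exact ⟨n, hx, by linarith⟩
    have htends := tendsto_measure_iUnion_atTop (μ := volume) hmono
    rw [hiUnion] at htends
    obtain ⟨n, hn⟩ : ∃ n : ℕ, 0 < volume (E (-(n:ℝ))) := by
      have h := htends.eventually_const_lt hSpos
      obtain ⟨n, hn⟩ := h.exists
      exact ⟨n, hn⟩
    refine ⟨-(n:ℝ), fun c hc => ?_⟩
    by_contra hlt
    push_neg at hlt
    have : volume (E (-(n:ℝ))) = 0 :=
      measure_mono_null (hEmono hlt.le) hc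
    exact absurd this hn.ne'
  set c := sInf A with hc
  refine ⟨c, ?_⟩
  have hupper : ∀ n : ℕ, ∀ᵐ x ∂(volume.restrict S), g x ≤ c + 1 / (n + 1) := by
    intro n
    have hpos : (0:ℝ) < 1 / (n + 1) := by positivity
    obtain ⟨a, haA, ha⟩ := (csInf_lt_iff hAbdd hAne).mp (by linarith : sInf A < c + 1 / (n+1))
    have h0 : volume (E (c + 1/(n+1))) = 0 := measure_mono_null (hEmono ha.le) haA
    have : (volume.restrict S) {x | c + 1/(n+1) < g x} = 0 := by
      have hms : MeasurableSet {x : ℝ | c + 1/(n+1) < g x} := measurableSet_lt measurable_const hg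
      rw [Measure.restrict_apply hms]
      refine measure_mono_null ?_ h0
      rintro x ⟨hx1, hx2⟩
      exact ⟨hx2, hx1⟩
    have := (ae_iff (p := fun x => g x ≤ c + 1/(n+1))).mpr (by simpa [not_le] using this)
    exact this
  have hlower : ∀ n : ℕ, ∀ᵐ x ∂(volume.restrict S), c - 1 / (n + 1) < g x := by
    intro n
    have hpos : (0:ℝ) < 1 / (n + 1) := by positivity
    have hnotA : c - 1/(n+1) ∉ A := fun h =>
      absurd (csInf_le hAbdd h) (by rw [← hc]; linarith)
    have hfull : volume (E (c - 1/(n+1))) = volume S := by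
      rcases hno (c - 1/(n+1)) with h | h
      · exact absurd h hnotA
      · exact h
    have hdiff : volume (S \ E (c - 1/(n+1))) = 0 := by
      rw [measure_diff Set.inter_subset_left ((hEmeas _).nullMeasurableSet)
        (ne_top_of_le_ne_top hSfin (measure_mono Set.inter_subset_left)), hfull, tsub_self]
    have : (volume.restrict S) {x | ¬ (c - 1/(n+1) < g x)} = 0 := by
      rw [Measure.restrict_apply]
      · refine measure_mono_null ?_ hdiff
        intro x hx
        simp only [Set.mem_inter_iff, Set.mem_setOf_eq, not_lt] at hx
        exact ⟨hx.2, fun hmem => absurd hmem.2 (by simpa using hx.1)⟩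
      · have : MeasurableSet {x | c - 1/(n+1) < g x} := hg measurableSet_Ioi
        exact this.compl
    exact (ae_iff (p := fun x => c - 1/(n+1) < g x)).mpr this
  have h1 := (ae_all_iff).mpr hupper
  have h2 := (ae_all_iff).mpr hlower
  filter_upwards [h1, h2] with x hx1 hx2
  have hle : g x ≤ c := by
    by_contra h
    push_neg at h
    obtain ⟨n, hn⟩ := exists_nat_one_div_lt (by linarith : (0:ℝ) < g x - c)
    have := hx1 n
    linarith [hn]
  have hge : c ≤ g x := by
    by_contra h
    push_neg at h
    obtain ⟨n, hn⟩ := exists_nat_one_div_lt (by linarith : (0:ℝ) < c - g x)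
    have := hx2 n
    linarith [hn]
  linarith

theorem laplacian_kernel_eq_constants_of_connected
    (S : Set ℝ) (hSsub : S ⊆ Set.Icc (0:ℝ) 1) (hSmeas : MeasurableSet S)
    (hSpos : 0 < volume S)
    (w : ℝ → ℝ → ℝ)
    (hwmeas : Measurable (Function.uncurry w))
    (hwsym : ∀ x y, w x y = w y x)
    (hwrange : ∀ x y, w x y ∈ Set.Icc (0:ℝ) 1)
    (hconn : ∀ E : Set ℝ, MeasurableSet E → E ⊆ S → 0 < volume E → volume E < volume S →
      0 < ∫ x in E, ∫ y in S \ E, w x y)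
    (L : Lp ℝ 2 (volume.restrict S) →L[ℝ] Lp ℝ 2 (volume.restrict S))
    (hL : ∀ g : Lp ℝ 2 (volume.restrict S),
      (L g : ℝ → ℝ) =ᵐ[volume.restrict S] fun x => ∫ y in S, w x y * (g x - g y))
    (f : Lp ℝ 2 (volume.restrict S)) (hf : L f = 0) :
    ∃ c : ℝ, (f : ℝ → ℝ) =ᵐ[volume.restrict S] fun _ => c := by
  have hSfin : volume S ≠ ⊤ := by
    refine ne_top_of_le_ne_top ?_ (measure_mono hSsub)
    simp [Real.volume_Icc]
  haveI hfinS : IsFiniteMeasure (volume.restrict S) := by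
    constructor
    rw [Measure.restrict_apply_univ]
    exact lt_top_iff_ne_top.mpr hSfin
  -- measurable representative
  have hfaem : AEMeasurable (f : ℝ → ℝ) (volume.restrict S) := (Lp.aestronglyMeasurable f).aemeasurable
  set g : ℝ → ℝ := hfaem.mk _ with hgdef
  have hg : Measurable g := hfaem.measurable_mk
  have hfg : (f : ℝ → ℝ) =ᵐ[volume.restrict S] g := hfaem.ae_eq_mk
  -- integrability of g on S
  have hfint : Integrable (f : ℝ → ℝ) (volume.restrict S) :=
    (Lp.memLp f).integrable (by norm_num)
  have hgint : Integrable g (volume.restrict S) := hfint.congr hfg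
  -- the equation for g
  have h1 : (fun x => ∫ y in S, w x y * ((f : ℝ → ℝ) x - (f : ℝ → ℝ) y)) =ᵐ[volume.restrict S] 0 := by
    refine (hL f).symm.trans ?_
    rw [hf]
    exact Lp.coeFn_zero ℝ 2 (volume.restrict S)
  have hg0 : ∀ᵐ x ∂(volume.restrict S), ∫ y in S, w x y * (g x - g y) = 0 := by
    filter_upwards [h1, hfg] with x hx hfx
    have hinner : ∫ y in S, w x y * (g x - g y) = ∫ y in S, w x y * ((f : ℝ → ℝ) x - (f : ℝ → ℝ) y) := by
      refine integral_congr_ae ?_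
      filter_upwards [hfg] with y hy
      rw [hy, hfx]
    rw [hinner]
    exact hx
  -- measurability of the kernel as a function on the product space
  have hwmeas' : Measurable fun p : ℝ × ℝ => w p.1 p.2 := hwmeas
  have hF : Measurable fun p : ℝ × ℝ => w p.1 p.2 * (g p.1 - g p.2) :=
    hwmeas'.mul ((hg.comp measurable_fst).sub (hg.comp measurable_snd))
  -- pointwise bound
  have hFbnd : ∀ p : ℝ × ℝ, ‖w p.1 p.2 * (g p.1 - g p.2)‖ ≤ |g p.1| + |g p.2| := by
    intro p
    rw [Real.norm_eq_abs, abs_mul]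
    have h1 : |w p.1 p.2| ≤ 1 := by
      rw [abs_of_nonneg (hwrange p.1 p.2).1]; exact (hwrange p.1 p.2).2
    have h2 : |g p.1 - g p.2| ≤ |g p.1| + |g p.2| := by
      have := abs_add_le (g p.1) (-(g p.2))
      simpa [sub_eq_add_neg] using this
    calc |w p.1 p.2| * |g p.1 - g p.2| ≤ 1 * (|g p.1| + |g p.2|) :=
          mul_le_mul h1 h2 (abs_nonneg _) zero_le_one
      _ = |g p.1| + |g p.2| := one_mul _
  -- product integrability
  have keyint : ∀ A B : Set ℝ, A ⊆ S → B ⊆ S →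
      Integrable g (volume.restrict A) → Integrable g (volume.restrict B) →
      Integrable (fun p : ℝ × ℝ => w p.1 p.2 * (g p.1 - g p.2))
        ((volume.restrict A).prod (volume.restrict B)) := by
    intro A B hAS hBS hA hB
    haveI : IsFiniteMeasure (volume.restrict A) := by
      constructor; rw [Measure.restrict_apply_univ]
      exact lt_of_le_of_lt (measure_mono hAS) (lt_top_iff_ne_top.mpr hSfin)
    haveI : IsFiniteMeasure (volume.restrict B) := by
      constructor; rw [Measure.restrict_apply_univ]
      exact lt_of_le_of_lt (measure_mono hBS) (lt_top_iff_ne_top.mpr hSfin)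
    have h1 : Integrable (fun p : ℝ × ℝ => |g p.1| * 1)
        ((volume.restrict A).prod (volume.restrict B)) :=
      hA.abs.mul_prod (integrable_const 1)
    have h2 : Integrable (fun p : ℝ × ℝ => 1 * |g p.2|)
        ((volume.restrict A).prod (volume.restrict B)) :=
      (integrable_const 1).mul_prod hB.abs
    have hbound : Integrable (fun p : ℝ × ℝ => |g p.1| + |g p.2|)
        ((volume.restrict A).prod (volume.restrict B)) := by
      exact (h1.add h2).congr (Eventually.of_forall fun p => by simp)
    exact hbound.mono' hF.aestronglyMeasurable (Eventually.of_forall hFbnd)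
  -- inner integrability for every x
  have hinner : ∀ x : ℝ, ∀ B : Set ℝ, B ⊆ S → Integrable g (volume.restrict B) →
      Integrable (fun y => w x y * (g x - g y)) (volume.restrict B) := by
    intro x B hBS hB
    haveI : IsFiniteMeasure (volume.restrict B) := by
      constructor; rw [Measure.restrict_apply_univ]
      exact lt_of_le_of_lt (measure_mono hBS) (lt_top_iff_ne_top.mpr hSfin)
    have hmeas : Measurable fun y => w x y * (g x - g y) :=
      (hwmeas.comp (measurable_prodMk_left)).mul (measurable_const.sub hg)
    have hbound : Integrable (fun y => |g x| + |g y|) (volume.restrict B) :=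
      (integrable_const _).add hB.abs
    exact hbound.mono' hmeas.aestronglyMeasurable (Eventually.of_forall fun y => hFbnd (x, y))
  -- main case split
  by_cases hcut : ∃ c : ℝ, 0 < volume (S ∩ g ⁻¹' Set.Ioi c) ∧ volume (S ∩ g ⁻¹' Set.Ioi c) < volume S
  · -- connected case: contradiction
    exfalso
    obtain ⟨c, hEpos, hElt⟩ := hcut
    set E : Set ℝ := S ∩ g ⁻¹' Set.Ioi c with hEdef
    set D : Set ℝ := S \ E with hDdef
    have hEmeas : MeasurableSet E := hSmeas.inter (hg measurableSet_Ioi)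
    have hDmeas : MeasurableSet D := hSmeas.diff hEmeas
    have hEsub : E ⊆ S := Set.inter_subset_left
    have hDsub : D ⊆ S := Set.diff_subset
    have hgE : Integrable g (volume.restrict E) := IntegrableOn.mono_set hgint hEsub
    have hgD : Integrable g (volume.restrict D) := IntegrableOn.mono_set hgint hDsub
    have hwpos := hconn E hEmeas hEsub hEpos hElt
    -- the zero identity on E
    have hzero : ∫ x in E, (∫ y in S, w x y * (g x - g y)) = 0 :=
      integral_eq_zero_of_ae (ae_restrict_of_ae_restrict_of_subset hEsub hg0)
    -- split inner integral
    have hsplit : ∀ x : ℝ, (∫ y in S, w x y * (g x - g y))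
        = (∫ y in E, w x y * (g x - g y)) + (∫ y in D, w x y * (g x - g y)) := by
      intro x
      have hun : E ∪ D = S := Set.union_diff_cancel hEsub
      rw [← hun]
      exact setIntegral_union Set.disjoint_sdiff_right hDmeas
        (hinner x E hEsub hgE) (hinner x D hDsub hgD)
    have hIEE : Integrable (fun x => ∫ y in E, w x y * (g x - g y)) (volume.restrict E) := by
      exact (keyint E E hEsub hEsub hgE hgE).integral_prod_left
    have hIED : Integrable (fun x => ∫ y in D, w x y * (g x - g y)) (volume.restrict E) := by
      exact (keyint E D hEsub hDsub hgE hgD).integral_prod_left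
    have hzero' : (∫ x in E, ∫ y in E, w x y * (g x - g y))
        + (∫ x in E, ∫ y in D, w x y * (g x - g y)) = 0 := by
      rw [← integral_add hIEE hIED]
      rw [← hzero]
      exact integral_congr_ae (Eventually.of_forall fun x => (hsplit x).symm)
    -- the symmetric term vanishes
    have hJ : (∫ x in E, ∫ y in E, w x y * (g x - g y)) = 0 := by
      have hswap : (∫ x in E, ∫ y in E, w x y * (g x - g y))
          = ∫ y in E, ∫ x in E, w x y * (g x - g y) := by
        exact integral_integral_swap (keyint E E hEsub hEsub hgE hgE)
      have hneg : (∫ y in E, ∫ x in E, w x y * (g x - g y))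
          = - ∫ x in E, ∫ y in E, w x y * (g x - g y) := by
        calc (∫ y in E, ∫ x in E, w x y * (g x - g y))
            = ∫ x in E, ∫ y in E, w y x * (g y - g x) := rfl
          _ = ∫ x in E, ∫ y in E, -(w x y * (g x - g y)) := by
              refine integral_congr_ae (Eventually.of_forall fun x => ?_)
              refine integral_congr_ae (Eventually.of_forall fun y => ?_)
              dsimp only
              rw [hwsym y x]; ring
          _ = - ∫ x in E, ∫ y in E, w x y * (g x - g y) := by simp [integral_neg]
      rw [hneg] at hswap
      linarith
    have hK : (∫ x in E, ∫ y in D, w x y * (g x - g y)) = 0 := by linarith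
    -- convert to product integral
    have hii : (∫ x in E, ∫ y in D, w x y * (g x - g y))
        = ∫ p : ℝ × ℝ, w p.1 p.2 * (g p.1 - g p.2)
          ∂((volume.restrict E).prod (volume.restrict D)) := by
      exact integral_integral (keyint E D hEsub hDsub hgE hgD)
    have hKprod : ∫ p : ℝ × ℝ, w p.1 p.2 * (g p.1 - g p.2)
        ∂((volume.restrict E).prod (volume.restrict D)) = 0 := by
      rw [← hii]; exact hK
    -- a.e. membership on the product
    have hmem : ∀ᵐ p : ℝ × ℝ ∂((volume.restrict E).prod (volume.restrict D)),
        p.1 ∈ E ∧ p.2 ∈ D := by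
      have h1 : ∀ᵐ x ∂(volume.restrict E), x ∈ E := ae_restrict_mem hEmeas
      have h2 : ∀ᵐ y ∂(volume.restrict D), y ∈ D := ae_restrict_mem hDmeas
      refine (Measure.ae_prod_iff_ae_ae ?_).mpr ?_
      · exact hEmeas.prod hDmeas
      · filter_upwards [h1] with x hx
        filter_upwards [h2] with y hy
        exact ⟨hx, hy⟩
    -- nonnegativity
    have hnonneg : 0 ≤ᵐ[(volume.restrict E).prod (volume.restrict D)]
        fun p : ℝ × ℝ => w p.1 p.2 * (g p.1 - g p.2) := by
      filter_upwards [hmem] with p hp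
      have hgx : c < g p.1 := hp.1.2
      have hgy : g p.2 ≤ c := by
        have h2 := hp.2
        rw [hDdef] at h2
        by_contra hlt
        push_neg at hlt
        exact h2.2 ⟨h2.1, hlt⟩
      have : (0:ℝ) ≤ g p.1 - g p.2 := by linarith
      exact mul_nonneg (hwrange p.1 p.2).1 this
    have hFzero := (integral_eq_zero_iff_of_nonneg_ae hnonneg (keyint E D hEsub hDsub hgE hgD)).mp hKprod
    -- hence w vanishes a.e. on E × D
    have hwzero : (fun p : ℝ × ℝ => w p.1 p.2)
        =ᵐ[(volume.restrict E).prod (volume.restrict D)] 0 := by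
      filter_upwards [hFzero, hmem] with p hp hpm
      have hgx : c < g p.1 := hpm.1.2
      have hgy : g p.2 ≤ c := by
        have h2 := hpm.2
        rw [hDdef] at h2
        by_contra hlt
        push_neg at hlt
        exact h2.2 ⟨h2.1, hlt⟩
      have hne : g p.1 - g p.2 ≠ 0 := ne_of_gt (by linarith)
      have hp' : w p.1 p.2 * (g p.1 - g p.2) = 0 := hp
      show w p.1 p.2 = 0
      rcases mul_eq_zero.mp hp' with h | h
      · exact h
      · exact absurd h hne
    -- but then the connectivity integral vanishes
    haveI : IsFiniteMeasure (volume.restrict E) := by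
      constructor; rw [Measure.restrict_apply_univ]
      exact lt_of_le_of_lt (measure_mono hEsub) (lt_top_iff_ne_top.mpr hSfin)
    haveI : IsFiniteMeasure (volume.restrict D) := by
      constructor; rw [Measure.restrict_apply_univ]
      exact lt_of_le_of_lt (measure_mono hDsub) (lt_top_iff_ne_top.mpr hSfin)
    have hwint : Integrable (fun p : ℝ × ℝ => w p.1 p.2)
        ((volume.restrict E).prod (volume.restrict D)) := by
      refine (integrable_const (1:ℝ)).mono' hwmeas'.aestronglyMeasurable ?_
      refine Eventually.of_forall fun p => ?_
      rw [Real.norm_eq_abs, abs_of_nonneg (hwrange p.1 p.2).1]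
      exact (hwrange p.1 p.2).2
    have hw2 : (∫ x in E, ∫ y in D, w x y)
        = ∫ p : ℝ × ℝ, w p.1 p.2 ∂((volume.restrict E).prod (volume.restrict D)) := by
      exact integral_integral hwint
    have : (∫ x in E, ∫ y in D, w x y) = 0 := by
      rw [hw2]
      exact integral_eq_zero_of_ae hwzero
    rw [hDdef] at this  -- D = S \ E
    exact absurd this hwpos.ne'
  · -- constant case
    push_neg at hcut
    have hno : ∀ c : ℝ, volume (S ∩ g ⁻¹' Set.Ioi c) = 0 ∨ volume (S ∩ g ⁻¹' Set.Ioi c) = volume S := by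
      intro c
      rcases eq_or_lt_of_le (zero_le : (0:ℝ≥0∞) ≤ volume (S ∩ g ⁻¹' Set.Ioi c)) with h | h
      · exact Or.inl h.symm
      · right
        have hle : volume (S ∩ g ⁻¹' Set.Ioi c) ≤ volume S := measure_mono Set.inter_subset_left
        exact le_antisymm hle (hcut c h)
    obtain ⟨c, hc⟩ := ae_const_of_levels hSmeas hSfin hSpos hg hno
    refine ⟨c, ?_⟩
    filter_upwards [hfg, hc] with x hx1 hx2
    rw [hx1, hx2]
end
end

section
/- Let w be a graphon and {S_1,…,S_k} a measurable partition of [0,1]. For each j let L_j be the Laplacian on L²(S_j) associated with the restriction of w to S_j × S_j. Then for every f ∈ L²[0,1], Σ_{j=1}^{k} ‖L_j^{1/2} f_j‖² ≤ ‖L_w^{1/2} f‖², where f_j denotes the restriction of f to S_j. -/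
open MeasureTheory Filter
open scoped ENNReal InnerProductSpace

noncomputable section

/-- The dominating function `2 F(x)² + 2 F(y)²` is integrable on the product. -/
lemma graphon_dom_integrable (ν : Measure ℝ) [IsFiniteMeasure ν] {F : ℝ → ℝ}
    (hF : MemLp F 2 ν) :
    Integrable (fun z : ℝ × ℝ => 2 * F z.1 ^ 2 + 2 * F z.2 ^ 2) (ν.prod ν) := by
  have h1 : Integrable (fun z : ℝ × ℝ => (F z.1 ^ 2) * (1 : ℝ)) (ν.prod ν) :=
    hF.integrable_sq.mul_prod (integrable_const 1)
  have h2 : Integrable (fun z : ℝ × ℝ => (1 : ℝ) * (F z.2 ^ 2)) (ν.prod ν) :=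
    (integrable_const 1).mul_prod hF.integrable_sq
  exact ((h1.const_mul 2).add (h2.const_mul 2)).congr (Eventually.of_forall fun z => by simp)

lemma graphon_int_G {w : ℝ → ℝ → ℝ} (hw : IsGraphon w) (ν : Measure ℝ) [IsFiniteMeasure ν]
    {F : ℝ → ℝ} (hF : MemLp F 2 ν) :
    Integrable (fun z : ℝ × ℝ => w z.1 z.2 * (F z.1 - F z.2) * F z.1) (ν.prod ν) := by
  obtain ⟨hwm, -, hwmem⟩ := hw
  have hFm := hF.aestronglyMeasurable
  have h1 : AEStronglyMeasurable (fun z : ℝ × ℝ => F z.1) (ν.prod ν) := hFm.comp_fst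
  have h2 : AEStronglyMeasurable (fun z : ℝ × ℝ => F z.2) (ν.prod ν) := hFm.comp_snd
  have hwasm : AEStronglyMeasurable (fun z : ℝ × ℝ => w z.1 z.2) (ν.prod ν) :=
    Measurable.aestronglyMeasurable (by exact hwm)
  refine (graphon_dom_integrable ν hF).mono' ((hwasm.mul (h1.sub h2)).mul h1) ?_
  refine Eventually.of_forall fun z => ?_
  obtain ⟨w0, w1⟩ := hwmem z.1 z.2
  set a := F z.1; set b := F z.2
  have ht : |(a - b) * a| ≤ 2 * a ^ 2 + 2 * b ^ 2 := by
    rw [abs_le]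
    constructor <;>
      nlinarith [sq_nonneg (a + b), sq_nonneg (a - b), sq_nonneg a, sq_nonneg b,
        sq_nonneg (a - 2 * b), sq_nonneg (2 * a - b), sq_nonneg (a + 2 * b),
        sq_nonneg (2 * a + b)]
  have hkey : |w z.1 z.2 * ((a - b) * a)| ≤ 2 * a ^ 2 + 2 * b ^ 2 := by
    rw [abs_mul, abs_of_nonneg w0]
    calc w z.1 z.2 * |(a - b) * a| ≤ 1 * |(a - b) * a| :=
          mul_le_mul_of_nonneg_right w1 (abs_nonneg _)
      _ ≤ 2 * a ^ 2 + 2 * b ^ 2 := by rw [one_mul]; exact ht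
  rw [Real.norm_eq_abs, mul_assoc]
  exact hkey

lemma graphon_int_Q {w : ℝ → ℝ → ℝ} (hw : IsGraphon w) (ν : Measure ℝ) [IsFiniteMeasure ν]
    {F : ℝ → ℝ} (hF : MemLp F 2 ν) :
    Integrable (fun z : ℝ × ℝ => w z.1 z.2 * (F z.1 - F z.2) ^ 2) (ν.prod ν) := by
  obtain ⟨hwm, -, hwmem⟩ := hw
  have hFm := hF.aestronglyMeasurable
  have h1 : AEStronglyMeasurable (fun z : ℝ × ℝ => F z.1) (ν.prod ν) := hFm.comp_fst
  have h2 : AEStronglyMeasurable (fun z : ℝ × ℝ => F z.2) (ν.prod ν) := hFm.comp_snd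
  have hwasm : AEStronglyMeasurable (fun z : ℝ × ℝ => w z.1 z.2) (ν.prod ν) :=
    Measurable.aestronglyMeasurable (by exact hwm)
  refine (graphon_dom_integrable ν hF).mono' (hwasm.mul ((h1.sub h2).pow 2)) ?_
  refine Eventually.of_forall fun z => ?_
  obtain ⟨w0, w1⟩ := hwmem z.1 z.2
  set a := F z.1; set b := F z.2
  rw [Real.norm_eq_abs, abs_of_nonneg (mul_nonneg w0 (sq_nonneg _))]
  nlinarith [sq_nonneg (a + b), sq_nonneg (a - b),
    mul_le_of_le_one_left (sq_nonneg (a - b)) w1]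

/-- The key energy identity: `2⟨F, L F⟩ = ∫∫ w(x,y)(F x − F y)²`. -/
lemma graphon_energy {w : ℝ → ℝ → ℝ} (hw : IsGraphon w) (ν : Measure ℝ) [IsFiniteMeasure ν]
    {F : ℝ → ℝ} (hF : MemLp F 2 ν) :
    2 * ∫ x, F x * ∫ y, w x y * (F x - F y) ∂ν ∂ν
      = ∫ z : ℝ × ℝ, w z.1 z.2 * (F z.1 - F z.2) ^ 2 ∂(ν.prod ν) := by
  have hws := hw.2.1
  have hG := graphon_int_G hw ν hF
  have hG' : Integrable (fun z : ℝ × ℝ => w z.1 z.2 * (F z.2 - F z.1) * F z.2) (ν.prod ν) :=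
    hG.swap.congr (Eventually.of_forall fun z => by
      simp only [Function.comp_apply, Prod.fst_swap, Prod.snd_swap, hws z.2 z.1])
  have hiter : ∫ x, F x * ∫ y, w x y * (F x - F y) ∂ν ∂ν
      = ∫ z : ℝ × ℝ, w z.1 z.2 * (F z.1 - F z.2) * F z.1 ∂(ν.prod ν) := by
    have hii := integral_integral (μ := ν) (ν := ν)
      (f := fun x y => w x y * (F x - F y) * F x) hG
    rw [← hii]
    refine integral_congr_ae (Eventually.of_forall fun x => ?_)
    show F x * ∫ y, w x y * (F x - F y) ∂ν = ∫ y, w x y * (F x - F y) * F x ∂ν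
    rw [integral_mul_const, mul_comm]
  have hswap : ∫ z : ℝ × ℝ, w z.1 z.2 * (F z.1 - F z.2) * F z.1 ∂(ν.prod ν)
      = ∫ z : ℝ × ℝ, w z.1 z.2 * (F z.2 - F z.1) * F z.2 ∂(ν.prod ν) := by
    rw [← integral_prod_swap (fun z : ℝ × ℝ => w z.1 z.2 * (F z.1 - F z.2) * F z.1)]
    refine integral_congr_ae (Eventually.of_forall fun z => ?_)
    simp only [Prod.fst_swap, Prod.snd_swap, hws z.2 z.1]
  rw [hiter, two_mul]
  nth_rewrite 2 [hswap]
  rw [← integral_add hG hG']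
  refine integral_congr_ae (Eventually.of_forall fun z => ?_)
  ring

/-- Let `w` be a graphon and `{S_1, …, S_k}` a measurable partition of
`[0,1]`.  For each `j` let `L_j` be the Laplacian on `L²(S_j)` associated with the
restriction of `w` to `S_j × S_j`, with positive square root `R_j = L_j^{1/2}`, and let
`L_w` be the graphon Laplacian on `L²[0,1]` with positive square root `R_w = L_w^{1/2}`.
Then for every `f ∈ L²[0,1]`, `Σ_j ‖L_j^{1/2} f_j‖² ≤ ‖L_w^{1/2} f‖²`, where `f_j` is the
restriction of `f` to `S_j`. -/
theorem sum_sq_norm_sqrt_local_laplacian_le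
    (w : ℝ → ℝ → ℝ) (hw : IsGraphon w)
    (k : ℕ) (S : Fin k → Set ℝ)
    (hSmeas : ∀ j, MeasurableSet (S j))
    (hSdisj : Pairwise (Function.onFun Disjoint S))
    (hScover : (⋃ j, S j) = Set.Icc (0:ℝ) 1)
    -- the graphon Laplacian `Lw` on `L²[0,1]` and its positive square root `Rw`
    (Lw Rw : Lp ℝ 2 (volume.restrict (Set.Icc (0:ℝ) 1)) →L[ℝ]
      Lp ℝ 2 (volume.restrict (Set.Icc (0:ℝ) 1)))
    (hLw : ∀ f : Lp ℝ 2 (volume.restrict (Set.Icc (0:ℝ) 1)),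
      (Lw f : ℝ → ℝ) =ᵐ[volume.restrict (Set.Icc (0:ℝ) 1)]
        fun x => ∫ y in Set.Icc (0:ℝ) 1, w x y * (f x - f y))
    (hRwsa : ∀ f g : Lp ℝ 2 (volume.restrict (Set.Icc (0:ℝ) 1)), ⟪Rw f, g⟫_ℝ = ⟪f, Rw g⟫_ℝ)
    (hRwpos : ∀ f : Lp ℝ 2 (volume.restrict (Set.Icc (0:ℝ) 1)), 0 ≤ ⟪Rw f, f⟫_ℝ)
    (hRwsq : ∀ f : Lp ℝ 2 (volume.restrict (Set.Icc (0:ℝ) 1)), Rw (Rw f) = Lw f)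
    -- the Laplacians `L j` on `L²(S j)` and their positive square roots `R j`
    (L R : ∀ j : Fin k, Lp ℝ 2 (volume.restrict (S j)) →L[ℝ] Lp ℝ 2 (volume.restrict (S j)))
    (hL : ∀ j (g : Lp ℝ 2 (volume.restrict (S j))),
      (L j g : ℝ → ℝ) =ᵐ[volume.restrict (S j)]
        fun x => ∫ y in S j, w x y * (g x - g y))
    (hRsa : ∀ j (g h : Lp ℝ 2 (volume.restrict (S j))), ⟪R j g, h⟫_ℝ = ⟪g, R j h⟫_ℝ)
    (hRpos : ∀ j (g : Lp ℝ 2 (volume.restrict (S j))), 0 ≤ ⟪R j g, g⟫_ℝ)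
    (hRsq : ∀ j (g : Lp ℝ 2 (volume.restrict (S j))), R j (R j g) = L j g)
    -- `f ∈ L²[0,1]` and its restrictions `f j ∈ L²(S j)`
    (f : Lp ℝ 2 (volume.restrict (Set.Icc (0:ℝ) 1)))
    (fj : ∀ j : Fin k, Lp ℝ 2 (volume.restrict (S j)))
    (hfj : ∀ j, (fj j : ℝ → ℝ) =ᵐ[volume.restrict (S j)] f) :
    ∑ j : Fin k, ‖R j (fj j)‖ ^ 2 ≤ ‖Rw f‖ ^ 2 := by
  classical
  have hIcc : ∀ j, S j ⊆ Set.Icc (0:ℝ) 1 := fun j => hScover ▸ Set.subset_iUnion S j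
  haveI : IsFiniteMeasure (volume.restrict (Set.Icc (0:ℝ) 1)) := by
    constructor
    rw [Measure.restrict_apply_univ]
    simp [Real.volume_Icc]
  have hνfin : ∀ j, IsFiniteMeasure (volume.restrict (S j)) := fun j => by
    constructor
    rw [Measure.restrict_apply_univ]
    exact lt_of_le_of_lt (measure_mono (hIcc j)) (by simp [Real.volume_Icc])
  have hFmem : MemLp (f : ℝ → ℝ) 2 (volume.restrict (Set.Icc (0:ℝ) 1)) := Lp.memLp f
  have hrest : ∀ j, volume.restrict (S j)
      = (volume.restrict (Set.Icc (0:ℝ) 1)).restrict (S j) := fun j => by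
    rw [Measure.restrict_restrict (hSmeas j), Set.inter_eq_self_of_subset_left (hIcc j)]
  have hFj : ∀ j, MemLp (f : ℝ → ℝ) 2 (volume.restrict (S j)) := fun j => by
    rw [hrest j]; exact hFmem.restrict _
  -- the global quadratic form
  have hglob : ‖Rw f‖ ^ 2 = ∫ x in Set.Icc (0:ℝ) 1,
      (f : ℝ → ℝ) x * ∫ y in Set.Icc (0:ℝ) 1, w x y * (f x - f y) := by
    rw [← real_inner_self_eq_norm_sq, hRwsa f (Rw f), hRwsq, L2.inner_def]
    refine integral_congr_ae ?_
    filter_upwards [hLw f] with x hx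
    simp only [RCLike.inner_apply, conj_trivial, hx]
    exact mul_comm _ _
  -- the local quadratic forms
  have hloc : ∀ j, ‖R j (fj j)‖ ^ 2 = ∫ x in S j,
      (f : ℝ → ℝ) x * ∫ y in S j, w x y * (f x - f y) := by
    intro j
    rw [← real_inner_self_eq_norm_sq, hRsa j (fj j) (R j (fj j)), hRsq, L2.inner_def]
    refine integral_congr_ae ?_
    filter_upwards [hL j (fj j), hfj j] with x hx hfx
    simp only [RCLike.inner_apply, conj_trivial, hx, hfx]
    rw [mul_comm]
    congr 1
    refine integral_congr_ae ?_
    filter_upwards [hfj j] with y hy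
    rw [hy]
  -- energy identities
  have hEg : 2 * ‖Rw f‖ ^ 2 = ∫ z : ℝ × ℝ, w z.1 z.2 * ((f : ℝ → ℝ) z.1 - f z.2) ^ 2
      ∂((volume.restrict (Set.Icc (0:ℝ) 1)).prod (volume.restrict (Set.Icc (0:ℝ) 1))) := by
    rw [hglob]
    exact graphon_energy hw _ hFmem
  have hEl : ∀ j, 2 * ‖R j (fj j)‖ ^ 2
      = ∫ z : ℝ × ℝ, w z.1 z.2 * ((f : ℝ → ℝ) z.1 - f z.2) ^ 2
        ∂((volume.restrict (S j)).prod (volume.restrict (S j))) := by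
    intro j
    haveI := hνfin j
    rw [hloc j]
    exact graphon_energy hw _ (hFj j)
  have hprod : ∀ j, (volume.restrict (S j)).prod (volume.restrict (S j))
      = ((volume.restrict (Set.Icc (0:ℝ) 1)).prod
          (volume.restrict (Set.Icc (0:ℝ) 1))).restrict (S j ×ˢ S j) := fun j => by
    rw [hrest j, Measure.prod_restrict]
  have hQ : Integrable (fun z : ℝ × ℝ => w z.1 z.2 * ((f : ℝ → ℝ) z.1 - f z.2) ^ 2)
      ((volume.restrict (Set.Icc (0:ℝ) 1)).prod (volume.restrict (Set.Icc (0:ℝ) 1))) :=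
    graphon_int_Q hw _ hFmem
  have hQpos : 0 ≤ᵐ[(volume.restrict (Set.Icc (0:ℝ) 1)).prod
      (volume.restrict (Set.Icc (0:ℝ) 1))]
      fun z : ℝ × ℝ => w z.1 z.2 * ((f : ℝ → ℝ) z.1 - f z.2) ^ 2 :=
    Eventually.of_forall fun z => mul_nonneg (hw.2.2 z.1 z.2).1 (sq_nonneg _)
  have hdisj : Pairwise (Function.onFun Disjoint fun j => S j ×ˢ S j) := by
    intro i j hij
    refine Set.disjoint_left.mpr fun z hz1 hz2 => ?_
    exact Set.disjoint_left.mp (hSdisj hij) hz1.1 hz2.1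
  have hsum : ∑ j, ∫ z in S j ×ˢ S j,
        w z.1 z.2 * ((f : ℝ → ℝ) z.1 - f z.2) ^ 2
        ∂((volume.restrict (Set.Icc (0:ℝ) 1)).prod (volume.restrict (Set.Icc (0:ℝ) 1)))
      ≤ ∫ z : ℝ × ℝ, w z.1 z.2 * ((f : ℝ → ℝ) z.1 - f z.2) ^ 2
        ∂((volume.restrict (Set.Icc (0:ℝ) 1)).prod (volume.restrict (Set.Icc (0:ℝ) 1))) := by
    rw [← integral_biUnion_finset Finset.univ
      (fun j _ => (hSmeas j).prod (hSmeas j))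
      (hdisj.set_pairwise _)
      (fun j _ => hQ.integrableOn)]
    exact setIntegral_le_integral hQ hQpos
  have h2 : ∑ j : Fin k, 2 * ‖R j (fj j)‖ ^ 2 ≤ 2 * ‖Rw f‖ ^ 2 := by
    rw [hEg]
    calc ∑ j : Fin k, 2 * ‖R j (fj j)‖ ^ 2
        = ∑ j : Fin k, ∫ z in S j ×ˢ S j,
            w z.1 z.2 * ((f : ℝ → ℝ) z.1 - f z.2) ^ 2
            ∂((volume.restrict (Set.Icc (0:ℝ) 1)).prod
              (volume.restrict (Set.Icc (0:ℝ) 1))) :=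
          Finset.sum_congr rfl fun j _ => by rw [hEl j, hprod j]
      _ ≤ _ := hsum
  rw [← Finset.mul_sum] at h2
  linarith
end
end

section
/- Let w be a graphon, {S_1,…,S_k} a measurable partition of [0,1], ψ_j ∈ L²(S_j) with ‖ψ_j‖ = 1 and ∫_{S_j} ψ_j ≠ 0 for each j, and suppose for each j there exists δ_j > 0 such that every f ∈ L²(S_j) with ∫_{S_j} f = 0 satisfies ‖L_j^{1/2} f‖ ≥ δ_j ‖f‖. Set θ_j := |S_j|/|∫_{S_j} ψ_j|², θ := max_j θ_j, δ := min_j δ_j. Then for every f ∈ L²[0,1] and every ε > 0, ‖f‖² ≤ ((1+ε)θ/δ²) ‖L_w^{1/2} f‖² + ((1+ε)/ε) θ Σ_{j=1}^{k} |⟨ψ_j, f⟩|². -/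
open MeasureTheory Filter
open scoped ENNReal InnerProductSpace

noncomputable section

private lemma inner_L2 {μ : Measure ℝ} (u v : Lp ℝ 2 μ) :
    ⟪u, v⟫_ℝ = ∫ x, u x * v x ∂μ := by
  rw [L2.inner_def]; simp [RCLike.inner_apply]; exact integral_congr_ae (Filter.Eventually.of_forall fun x => mul_comm _ _)


private lemma absGbd (c a b : ℝ) (hc : 0 ≤ c) (hc1 : c ≤ 1) :
    |c * (a - b) * a| ≤ 2 * a ^ 2 + b ^ 2 := by
  have h1 : |c * (a - b) * a| = c * |a - b| * |a| := by
    rw [abs_mul, abs_mul, abs_of_nonneg hc]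
  rw [h1]
  have h2 : |a - b| ≤ |a| + |b| := abs_sub a b
  have h3 : c * |a - b| * |a| ≤ |a - b| * |a| := by
    nlinarith [abs_nonneg (a - b), abs_nonneg a, mul_nonneg (abs_nonneg (a-b)) (abs_nonneg a)]
  have h4 : |a - b| * |a| ≤ (|a| + |b|) * |a| := by
    nlinarith [abs_nonneg a]
  nlinarith [sq_abs a, sq_abs b, sq_nonneg (|a| - |b|), abs_nonneg a, abs_nonneg b]

private lemma absHbd (c a b : ℝ) (hc : 0 ≤ c) (hc1 : c ≤ 1) :
    |c * (a - b) ^ 2| ≤ 2 * a ^ 2 + 2 * b ^ 2 := by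
  rw [abs_mul, abs_of_nonneg hc, abs_of_nonneg (sq_nonneg _)]
  nlinarith [sq_nonneg (a - b), sq_nonneg (a + b)]

/-- integrability of the energy integrand on a product of restricted measures -/
private lemma H_integrable (w : ℝ → ℝ → ℝ)
    (hwm : Measurable (Function.uncurry w))
    (hbd : ∀ x y, w x y ∈ Set.Icc (0:ℝ) 1)
    (A : Set ℝ) (hAfin : volume A < ⊤)
    (F : ℝ → ℝ) (hF : Measurable F)
    (hF2 : Integrable (fun x => F x ^ 2) (volume.restrict A)) :
    Integrable (fun p : ℝ × ℝ => w p.1 p.2 * (F p.1 - F p.2) ^ 2)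
      ((volume.restrict A).prod (volume.restrict A)) := by
  set ν := volume.restrict A with hν
  haveI : IsFiniteMeasure ν := ⟨by rwa [hν, Measure.restrict_apply_univ]⟩
  have hfst : Integrable (fun p : ℝ × ℝ => F p.1 ^ 2) (ν.prod ν) := by
    simpa using hF2.mul_prod (integrable_const (1:ℝ))
  have hsnd : Integrable (fun p : ℝ × ℝ => F p.2 ^ 2) (ν.prod ν) := by
    simpa using (integrable_const (1:ℝ)).mul_prod hF2
  have hb : Integrable (fun p : ℝ × ℝ => 2 * F p.1 ^ 2 + 2 * F p.2 ^ 2) (ν.prod ν) :=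
    (hfst.const_mul 2).add (hsnd.const_mul 2)
  have hm : Measurable (fun p : ℝ × ℝ => w p.1 p.2 * (F p.1 - F p.2) ^ 2) := by
    exact hwm.mul (((hF.comp measurable_fst).sub (hF.comp measurable_snd)).pow_const 2)
  refine hb.mono' hm.aestronglyMeasurable ?_
  filter_upwards with p
  rw [Real.norm_eq_abs]
  exact absHbd _ _ _ (hbd p.1 p.2).1 (hbd p.1 p.2).2

private lemma G_integrable (w : ℝ → ℝ → ℝ)
    (hwm : Measurable (Function.uncurry w))
    (hbd : ∀ x y, w x y ∈ Set.Icc (0:ℝ) 1)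
    (A : Set ℝ) (hAfin : volume A < ⊤)
    (F : ℝ → ℝ) (hF : Measurable F)
    (hF2 : Integrable (fun x => F x ^ 2) (volume.restrict A)) :
    Integrable (fun p : ℝ × ℝ => w p.1 p.2 * (F p.1 - F p.2) * F p.1)
      ((volume.restrict A).prod (volume.restrict A)) := by
  set ν := volume.restrict A with hν
  haveI : IsFiniteMeasure ν := ⟨by rwa [hν, Measure.restrict_apply_univ]⟩
  have hfst : Integrable (fun p : ℝ × ℝ => F p.1 ^ 2) (ν.prod ν) := by
    simpa using hF2.mul_prod (integrable_const (1:ℝ))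
  have hsnd : Integrable (fun p : ℝ × ℝ => F p.2 ^ 2) (ν.prod ν) := by
    simpa using (integrable_const (1:ℝ)).mul_prod hF2
  have hb : Integrable (fun p : ℝ × ℝ => 2 * F p.1 ^ 2 + F p.2 ^ 2) (ν.prod ν) :=
    (hfst.const_mul 2).add hsnd
  have hm : Measurable (fun p : ℝ × ℝ => w p.1 p.2 * (F p.1 - F p.2) * F p.1) := by
    exact (hwm.mul ((hF.comp measurable_fst).sub (hF.comp measurable_snd))).mul
      (hF.comp measurable_fst)
  refine hb.mono' hm.aestronglyMeasurable ?_
  filter_upwards with p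
  rw [Real.norm_eq_abs]
  exact absGbd _ _ _ (hbd p.1 p.2).1 (hbd p.1 p.2).2

private lemma dirichlet_identity (w : ℝ → ℝ → ℝ)
    (hwm : Measurable (Function.uncurry w))
    (hsymm : ∀ x y, w x y = w y x)
    (hbd : ∀ x y, w x y ∈ Set.Icc (0:ℝ) 1)
    (A : Set ℝ) (hAfin : volume A < ⊤)
    (F : ℝ → ℝ) (hF : Measurable F)
    (hF2 : Integrable (fun x => F x ^ 2) (volume.restrict A)) :
    ∫ x in A, F x * ∫ y in A, w x y * (F x - F y)
      = (1/2) * ∫ p in A ×ˢ A, w p.1 p.2 * (F p.1 - F p.2) ^ 2 ∂(volume.prod volume) := by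
  set ν := volume.restrict A with hν
  have hG := G_integrable w hwm hbd A hAfin F hF hF2
  have hH := H_integrable w hwm hbd A hAfin F hF hF2
  have e1 : ∫ x in A, F x * ∫ y in A, w x y * (F x - F y)
      = ∫ x, (∫ y, w x y * (F x - F y) * F x ∂ν) ∂ν := by
    refine integral_congr_ae (Filter.Eventually.of_forall fun x => ?_)
    show F x * (∫ y, w x y * (F x - F y) ∂ν) = ∫ y, w x y * (F x - F y) * F x ∂ν
    rw [integral_mul_const]
    ring
  have e2 : ∫ x, (∫ y, w x y * (F x - F y) * F x ∂ν) ∂ν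
      = ∫ p : ℝ × ℝ, w p.1 p.2 * (F p.1 - F p.2) * F p.1 ∂(ν.prod ν) :=
    integral_integral hG
  -- swap
  have e3 : ∫ p : ℝ × ℝ, w p.1 p.2 * (F p.1 - F p.2) * F p.1 ∂(ν.prod ν)
      = ∫ p : ℝ × ℝ, w p.1 p.2 * (F p.2 - F p.1) * F p.2 ∂(ν.prod ν) := by
    rw [← integral_prod_swap]
    refine integral_congr_ae (Filter.Eventually.of_forall fun p => ?_)
    simp only [Prod.fst_swap, Prod.snd_swap, Prod.swap]
    rw [hsymm p.2 p.1]
  have hG' : Integrable (fun p : ℝ × ℝ => w p.1 p.2 * (F p.2 - F p.1) * F p.2) (ν.prod ν) := by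
    refine hG.swap.congr (Filter.Eventually.of_forall fun p => ?_)
    simp only [Function.comp_apply, Prod.fst_swap, Prod.snd_swap]
    rw [hsymm p.2 p.1]
  have e4 : ∫ p : ℝ × ℝ, w p.1 p.2 * (F p.1 - F p.2) * F p.1 ∂(ν.prod ν)
        + ∫ p : ℝ × ℝ, w p.1 p.2 * (F p.2 - F p.1) * F p.2 ∂(ν.prod ν)
      = ∫ p : ℝ × ℝ, w p.1 p.2 * (F p.1 - F p.2) ^ 2 ∂(ν.prod ν) := by
    rw [← integral_add hG hG']
    refine integral_congr_ae (Filter.Eventually.of_forall fun p => ?_)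
    ring
  have e5 : ∫ p : ℝ × ℝ, w p.1 p.2 * (F p.1 - F p.2) ^ 2 ∂(ν.prod ν)
      = ∫ p in A ×ˢ A, w p.1 p.2 * (F p.1 - F p.2) ^ 2 ∂(volume.prod volume) := by
    rw [hν, Measure.prod_restrict]
  rw [e1, e2]
  rw [e5] at e4
  linarith [e3, e4]

private lemma alg_key (G X t a b B d ε ip : ℝ)
    (hG : 0 ≤ G) (hX : 0 ≤ X) (hB : 0 < B) (hb : b ≠ 0) (hd : 0 < d) (hε : 0 < ε)
    (hCS : t ^ 2 ≤ (1 - b ^ 2 / B) * G ^ 2)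
    (hip : ip = t + a * b)
    (hgap : d * G ≤ X) :
    G ^ 2 + a ^ 2 * B ≤ (1 + ε) * (B / b ^ 2) / d ^ 2 * X ^ 2
      + (1 + 1 / ε) * (B / b ^ 2) * ip ^ 2 := by
  have hb2 : 0 < b ^ 2 := by positivity
  have h4 : G ^ 2 ≤ X ^ 2 / d ^ 2 := by
    rw [le_div_iff₀ (by positivity)]
    nlinarith [mul_self_le_mul_self (by positivity : (0:ℝ) ≤ d * G) hgap]
  have h1 : (a * b) ^ 2 ≤ (1 + ε) * t ^ 2 + (1 + 1 / ε) * ip ^ 2 := by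
    rw [hip]
    have step : ε * (a * b) ^ 2 ≤ ε * ((1 + ε) * t ^ 2) + (1 + ε) * (t + a * b) ^ 2 := by
      nlinarith [sq_nonneg (t + a * b + ε * t)]
    calc (a * b) ^ 2 = ε * (a * b) ^ 2 / ε := by field_simp
      _ ≤ (ε * ((1 + ε) * t ^ 2) + (1 + ε) * (t + a * b) ^ 2) / ε :=
          (div_le_div_iff_of_pos_right hε).mpr step
      _ = (1 + ε) * t ^ 2 + (1 + 1 / ε) * (t + a * b) ^ 2 := by field_simp; ring
  have h3 : a ^ 2 * B ≤ (1 + ε) * (B / b ^ 2 - 1) * G ^ 2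
      + (1 + 1 / ε) * (B / b ^ 2) * ip ^ 2 := by
    have h5 : (a * b) ^ 2 ≤ (1 + ε) * ((1 - b ^ 2 / B) * G ^ 2) + (1 + 1 / ε) * ip ^ 2 := by
      have := mul_le_mul_of_nonneg_left hCS (by linarith : (0:ℝ) ≤ 1 + ε)
      linarith
    have hmul := mul_le_mul_of_nonneg_left h5 (le_of_lt (show (0:ℝ) < B / b ^ 2 by positivity))
    have e : B / b ^ 2 * (a * b) ^ 2 = a ^ 2 * B := by field_simp
    have e3 : B / b ^ 2 * ((1 + ε) * ((1 - b ^ 2 / B) * G ^ 2) + (1 + 1 / ε) * ip ^ 2)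
        = (1 + ε) * (B / b ^ 2 - 1) * G ^ 2 + (1 + 1 / ε) * (B / b ^ 2) * ip ^ 2 := by
      field_simp
    linarith [hmul, e, e3]
  have hεG : 0 ≤ ε * G ^ 2 := mul_nonneg hε.le (sq_nonneg G)
  have e7 : (1 + ε) * (B / b ^ 2) * G ^ 2
      = (1 + ε) * (B / b ^ 2 - 1) * G ^ 2 + G ^ 2 + ε * G ^ 2 := by ring
  have h6 : G ^ 2 + a ^ 2 * B ≤ (1 + ε) * (B / b ^ 2) * G ^ 2
      + (1 + 1 / ε) * (B / b ^ 2) * ip ^ 2 := by linarith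
  have h8 := mul_le_mul_of_nonneg_left h4 (show (0:ℝ) ≤ (1 + ε) * (B / b ^ 2) by positivity)
  have e9 : (1 + ε) * (B / b ^ 2) * (X ^ 2 / d ^ 2)
      = (1 + ε) * (B / b ^ 2) / d ^ 2 * X ^ 2 := by ring
  linarith

set_option maxHeartbeats 1000000 in
/-- With the setup of Statement 0, let `θ_j := |S_j|/|∫_{S_j} ψ_j|²`,
`θ := max_j θ_j` and `δ := min_j δ_j`.  Then for every `f ∈ L²[0,1]` and every `ε > 0`,
`‖f‖² ≤ ((1+ε)θ/δ²) ‖L_w^{1/2} f‖² + ((1+ε)/ε) θ Σ_j |⟨ψ_j, f⟩|²`, the `ψ_j` being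
regarded as elements `Ψ_j` of `L²[0,1]` extended by zero off `S_j`. -/
theorem graphon_sampling_estimate_global
    (w : ℝ → ℝ → ℝ) (hw : IsGraphon w)
    (k : ℕ) (hk : 0 < k) (S : Fin k → Set ℝ)
    (hSmeas : ∀ j, MeasurableSet (S j))
    (hSdisj : Pairwise (Function.onFun Disjoint S))
    (hScover : (⋃ j, S j) = Set.Icc (0:ℝ) 1)
    -- the graphon Laplacian `Lw` on `L²[0,1]` and its positive square root `Rw`
    (Lw Rw : Lp ℝ 2 (volume.restrict (Set.Icc (0:ℝ) 1)) →L[ℝ]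
      Lp ℝ 2 (volume.restrict (Set.Icc (0:ℝ) 1)))
    (hLw : ∀ f : Lp ℝ 2 (volume.restrict (Set.Icc (0:ℝ) 1)),
      (Lw f : ℝ → ℝ) =ᵐ[volume.restrict (Set.Icc (0:ℝ) 1)]
        fun x => ∫ y in Set.Icc (0:ℝ) 1, w x y * (f x - f y))
    (hRwsa : ∀ f g : Lp ℝ 2 (volume.restrict (Set.Icc (0:ℝ) 1)), ⟪Rw f, g⟫_ℝ = ⟪f, Rw g⟫_ℝ)
    (hRwpos : ∀ f : Lp ℝ 2 (volume.restrict (Set.Icc (0:ℝ) 1)), 0 ≤ ⟪Rw f, f⟫_ℝ)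
    (hRwsq : ∀ f : Lp ℝ 2 (volume.restrict (Set.Icc (0:ℝ) 1)), Rw (Rw f) = Lw f)
    -- the Laplacians `L j` on `L²(S j)` and their positive square roots `R j`
    (L R : ∀ j : Fin k, Lp ℝ 2 (volume.restrict (S j)) →L[ℝ] Lp ℝ 2 (volume.restrict (S j)))
    (hL : ∀ j (g : Lp ℝ 2 (volume.restrict (S j))),
      (L j g : ℝ → ℝ) =ᵐ[volume.restrict (S j)]
        fun x => ∫ y in S j, w x y * (g x - g y))
    (hRsa : ∀ j (g h : Lp ℝ 2 (volume.restrict (S j))), ⟪R j g, h⟫_ℝ = ⟪g, R j h⟫_ℝ)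
    (hRpos : ∀ j (g : Lp ℝ 2 (volume.restrict (S j))), 0 ≤ ⟪R j g, g⟫_ℝ)
    (hRsq : ∀ j (g : Lp ℝ 2 (volume.restrict (S j))), R j (R j g) = L j g)
    -- the sampling functions `ψ j ∈ L²(S j)` and their extensions `Ψ j ∈ L²[0,1]` by zero
    (ψ : ∀ j : Fin k, Lp ℝ 2 (volume.restrict (S j)))
    (hψnorm : ∀ j, ‖ψ j‖ = 1)
    (hψint : ∀ j, (∫ x in S j, ψ j x) ≠ 0)
    (Ψ : Fin k → Lp ℝ 2 (volume.restrict (Set.Icc (0:ℝ) 1)))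
    (hΨ : ∀ j, (Ψ j : ℝ → ℝ) =ᵐ[volume.restrict (S j)] ψ j)
    (hΨzero : ∀ j, (Ψ j : ℝ → ℝ) =ᵐ[volume.restrict (Set.Icc (0:ℝ) 1 \ S j)] 0)
    -- the spectral gap assumption (i)
    (δj : Fin k → ℝ) (hδpos : ∀ j, 0 < δj j)
    (hgap : ∀ j (g : Lp ℝ 2 (volume.restrict (S j))),
      (∫ x in S j, g x) = 0 → δj j * ‖g‖ ≤ ‖R j g‖)
    -- the constants `θ = max_j θ_j` and `δ = min_j δ_j`
    (θ δ : ℝ)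
    (hθ : θ = Finset.univ.sup' (Finset.univ_nonempty_iff.mpr ⟨⟨0, hk⟩⟩)
      fun j => (volume (S j)).toReal / (∫ x in S j, ψ j x) ^ 2)
    (hδ : δ = Finset.univ.inf' (Finset.univ_nonempty_iff.mpr ⟨⟨0, hk⟩⟩) δj)
    (f : Lp ℝ 2 (volume.restrict (Set.Icc (0:ℝ) 1)))
    (ε : ℝ) (hε : 0 < ε) :
    ‖f‖ ^ 2 ≤ (1 + ε) * θ / δ ^ 2 * ‖Rw f‖ ^ 2
      + (1 + ε) / ε * θ * ∑ j : Fin k, ⟪Ψ j, f⟫_ℝ ^ 2 := by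
  obtain ⟨hwm, hwsymm, hwbd⟩ := hw
  have hImeas : MeasurableSet (Set.Icc (0:ℝ) 1) := measurableSet_Icc
  have hIfin : volume (Set.Icc (0:ℝ) 1) < ⊤ := by
    rw [Real.volume_Icc]; exact ENNReal.ofReal_lt_top
  haveI hIfm : IsFiniteMeasure (volume.restrict (Set.Icc (0:ℝ) 1)) :=
    ⟨by rw [Measure.restrict_apply_univ]; exact hIfin⟩
  have hSsub : ∀ j, S j ⊆ Set.Icc (0:ℝ) 1 := fun j => hScover ▸ Set.subset_iUnion S j
  have hSfin : ∀ j, volume (S j) < ⊤ := fun j =>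
    lt_of_le_of_lt (measure_mono (hSsub j)) hIfin
  have hSfm : ∀ j, IsFiniteMeasure (volume.restrict (S j)) := fun j =>
    ⟨by rw [Measure.restrict_apply_univ]; exact hSfin j⟩
  have hrr : ∀ j, (volume.restrict (Set.Icc (0:ℝ) 1)).restrict (S j) = volume.restrict (S j) :=
    fun j => Measure.restrict_restrict_of_subset (hSsub j)
  -- measurable representative of f
  have hFsm : AEStronglyMeasurable (⇑f) (volume.restrict (Set.Icc (0:ℝ) 1)) :=
    (Lp.memLp f).aestronglyMeasurable
  set F' : ℝ → ℝ := hFsm.mk ⇑f with hF'def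
  have hF'm : Measurable F' := hFsm.stronglyMeasurable_mk.measurable
  have hFF' : ⇑f =ᵐ[volume.restrict (Set.Icc (0:ℝ) 1)] F' := hFsm.ae_eq_mk
  have hFF'j : ∀ j, ⇑f =ᵐ[volume.restrict (S j)] F' := fun j => by
    rw [← hrr j]; exact ae_restrict_of_ae hFF'
  have hF'mem : MemLp F' 2 (volume.restrict (Set.Icc (0:ℝ) 1)) := (Lp.memLp f).ae_eq hFF'
  have hF'memj : ∀ j, MemLp F' 2 (volume.restrict (S j)) := fun j => by
    rw [← hrr j]; exact hF'mem.restrict (S j)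
  have hF'sqI : Integrable (fun x => F' x ^ 2) (volume.restrict (Set.Icc (0:ℝ) 1)) :=
    hF'mem.integrable_sq
  have hF'sq : ∀ j, Integrable (fun x => F' x ^ 2) (volume.restrict (S j)) := fun j =>
    (hF'memj j).integrable_sq
  -- the restrictions of f to the pieces
  have hFmemj : ∀ j, MemLp (⇑f) 2 (volume.restrict (S j)) := fun j => by
    rw [← hrr j]; exact (Lp.memLp f).restrict (S j)
  set fj : ∀ j : Fin k, Lp ℝ 2 (volume.restrict (S j)) :=
    fun j => (hFmemj j).toLp ⇑f with hfjdef
  have hfj : ∀ j, ⇑(fj j) =ᵐ[volume.restrict (S j)] ⇑f := fun j => (hFmemj j).coeFn_toLp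
  have hfjF' : ∀ j, ⇑(fj j) =ᵐ[volume.restrict (S j)] F' := fun j => (hfj j).trans (hFF'j j)
  -- the energy integrand
  set H : ℝ × ℝ → ℝ := fun p => w p.1 p.2 * (F' p.1 - F' p.2) ^ 2 with hHdef
  have hHnn : ∀ p : ℝ × ℝ, 0 ≤ H p := fun p => mul_nonneg (hwbd p.1 p.2).1 (sq_nonneg _)
  -- Dirichlet identity on the pieces
  have hDj : ∀ j, ‖R j (fj j)‖ ^ 2
      = (1/2) * ∫ p in (S j) ×ˢ (S j), H p ∂(volume.prod volume) := by
    intro j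
    have h1 : ‖R j (fj j)‖ ^ 2 = ⟪fj j, L j (fj j)⟫_ℝ := by
      rw [← real_inner_self_eq_norm_sq, hRsa j, hRsq j]
    have h2 : (L j (fj j) : ℝ → ℝ) =ᵐ[volume.restrict (S j)]
        fun x => ∫ y in S j, w x y * (F' x - F' y) := by
      refine (hL j (fj j)).trans ?_
      filter_upwards [hfjF' j] with x hx
      show (∫ y in S j, w x y * (fj j x - fj j y)) = ∫ y in S j, w x y * (F' x - F' y)
      rw [hx]
      refine integral_congr_ae ?_
      filter_upwards [hfjF' j] with y hy
      rw [hy]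
    have h3 : ⟪fj j, L j (fj j)⟫_ℝ = ∫ x in S j, F' x * ∫ y in S j, w x y * (F' x - F' y) := by
      rw [inner_L2]
      refine integral_congr_ae ?_
      filter_upwards [hfjF' j, h2] with x hx1 hx2
      rw [hx1, hx2]
    rw [h1, h3, dirichlet_identity w hwm hwsymm hwbd (S j) (hSfin j) F' hF'm (hF'sq j)]
  -- Dirichlet identity globally
  have hDw : ‖Rw f‖ ^ 2
      = (1/2) * ∫ p in (Set.Icc (0:ℝ) 1) ×ˢ (Set.Icc (0:ℝ) 1), H p ∂(volume.prod volume) := by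
    have h1 : ‖Rw f‖ ^ 2 = ⟪f, Lw f⟫_ℝ := by
      rw [← real_inner_self_eq_norm_sq, hRwsa, hRwsq]
    have h2 : (Lw f : ℝ → ℝ) =ᵐ[volume.restrict (Set.Icc (0:ℝ) 1)]
        fun x => ∫ y in Set.Icc (0:ℝ) 1, w x y * (F' x - F' y) := by
      refine (hLw f).trans ?_
      filter_upwards [hFF'] with x hx
      show (∫ y in Set.Icc (0:ℝ) 1, w x y * (f x - f y))
          = ∫ y in Set.Icc (0:ℝ) 1, w x y * (F' x - F' y)
      rw [hx]
      refine integral_congr_ae ?_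
      filter_upwards [hFF'] with y hy
      rw [hy]
    have h3 : ⟪f, Lw f⟫_ℝ
        = ∫ x in Set.Icc (0:ℝ) 1, F' x * ∫ y in Set.Icc (0:ℝ) 1, w x y * (F' x - F' y) := by
      rw [inner_L2]
      refine integral_congr_ae ?_
      filter_upwards [hFF', h2] with x hx1 hx2
      rw [hx1, hx2]
    rw [h1, h3,
      dirichlet_identity w hwm hwsymm hwbd (Set.Icc (0:ℝ) 1) hIfin F' hF'm hF'sqI]
  -- comparison of Dirichlet energies
  have hHint : IntegrableOn H ((Set.Icc (0:ℝ) 1) ×ˢ (Set.Icc (0:ℝ) 1)) (volume.prod volume) := by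
    have := H_integrable w hwm hwbd (Set.Icc (0:ℝ) 1) hIfin F' hF'm hF'sqI
    rwa [Measure.prod_restrict] at this
  have hsub : ∀ j, (S j) ×ˢ (S j) ⊆ (Set.Icc (0:ℝ) 1) ×ˢ (Set.Icc (0:ℝ) 1) := fun j =>
    Set.prod_mono (hSsub j) (hSsub j)
  have hRsum : ∑ j, ‖R j (fj j)‖ ^ 2 ≤ ‖Rw f‖ ^ 2 := by
    have hpd : Pairwise (Function.onFun Disjoint fun j => (S j) ×ˢ (S j)) := by
      intro i j hij
      rw [Function.onFun, Set.disjoint_left]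
      rintro ⟨x, y⟩ ⟨hx1, _⟩ ⟨hx2, _⟩
      exact Set.disjoint_left.mp (hSdisj hij) hx1 hx2
    have hintOn : ∀ j, IntegrableOn H ((S j) ×ˢ (S j)) (volume.prod volume) := fun j =>
      hHint.mono_set (hsub j)
    have hU : ∫ p in ⋃ j, (S j) ×ˢ (S j), H p ∂(volume.prod volume)
        = ∑ j, ∫ p in (S j) ×ˢ (S j), H p ∂(volume.prod volume) :=
      integral_iUnion_fintype (fun j => (hSmeas j).prod (hSmeas j)) hpd hintOn
    have hle : ∫ p in ⋃ j, (S j) ×ˢ (S j), H p ∂(volume.prod volume)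
        ≤ ∫ p in (Set.Icc (0:ℝ) 1) ×ˢ (Set.Icc (0:ℝ) 1), H p ∂(volume.prod volume) :=
      setIntegral_mono_set hHint (Eventually.of_forall hHnn)
        (HasSubset.Subset.eventuallyLE (Set.iUnion_subset fun j => hsub j))
    calc ∑ j, ‖R j (fj j)‖ ^ 2
        = ∑ j, (1/2) * ∫ p in (S j) ×ˢ (S j), H p ∂(volume.prod volume) :=
          Finset.sum_congr rfl fun j _ => hDj j
      _ = (1/2) * ∑ j, ∫ p in (S j) ×ˢ (S j), H p ∂(volume.prod volume) := by
          rw [Finset.mul_sum]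
      _ ≤ (1/2) * ∫ p in (Set.Icc (0:ℝ) 1) ×ˢ (Set.Icc (0:ℝ) 1), H p ∂(volume.prod volume) := by
          rw [← hU]; linarith
      _ = ‖Rw f‖ ^ 2 := hDw.symm
  -- decomposition of the norm of f
  have hff : Integrable (fun x => f x * f x) (volume.restrict (Set.Icc (0:ℝ) 1)) := by
    have := (Lp.memLp f).integrable_sq
    simpa [sq] using this
  have hnorm : ‖f‖ ^ 2 = ∑ j, ‖fj j‖ ^ 2 := by
    have h1 : ‖f‖ ^ 2 = ∫ x in Set.Icc (0:ℝ) 1, f x * f x := by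
      rw [← real_inner_self_eq_norm_sq, inner_L2]
    have h2 : ∀ j, ‖fj j‖ ^ 2 = ∫ x in S j, f x * f x := by
      intro j
      rw [← real_inner_self_eq_norm_sq, inner_L2]
      refine integral_congr_ae ?_
      filter_upwards [hfj j] with x hx
      rw [hx]
    have hintOn : ∀ j, IntegrableOn (fun x => f x * f x) (S j) volume := fun j => by
      have := hff.restrict (s := S j)
      rwa [hrr j] at this
    rw [h1]
    calc (∫ x in Set.Icc (0:ℝ) 1, f x * f x)
        = ∫ x in ⋃ j, S j, f x * f x := by rw [hScover]
      _ = ∑ j, ∫ x in S j, f x * f x := integral_iUnion_fintype hSmeas hSdisj hintOn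
      _ = ∑ j, ‖fj j‖ ^ 2 := Finset.sum_congr rfl fun j _ => (h2 j).symm
  -- key estimate for each piece
  have key : ∀ j, ‖fj j‖ ^ 2
      ≤ (1 + ε) * ((volume (S j)).toReal / (∫ x in S j, ψ j x) ^ 2) / (δj j) ^ 2
          * ‖R j (fj j)‖ ^ 2
        + (1 + 1 / ε) * ((volume (S j)).toReal / (∫ x in S j, ψ j x) ^ 2) * ⟪Ψ j, f⟫_ℝ ^ 2 := by
    intro j
    haveI := hSfm j
    have hμ0 : volume (S j) ≠ 0 := by
      intro h0
      apply hψint j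
      have hz : (volume.restrict (S j)) = 0 := Measure.restrict_eq_zero.mpr h0
      simp only [hz, integral_zero_measure]
    have hB : 0 < (volume (S j)).toReal := ENNReal.toReal_pos hμ0 (hSfin j).ne
    set B : ℝ := (volume (S j)).toReal with hBdef
    set b : ℝ := ∫ x in S j, ψ j x with hbdef
    have hb : b ≠ 0 := hψint j
    -- the constant function 1
    set one : Lp ℝ 2 (volume.restrict (S j)) :=
      (memLp_const (1:ℝ)).toLp (fun _ => (1:ℝ)) with honedef
    have hone : ⇑one =ᵐ[volume.restrict (S j)] fun _ => (1:ℝ) := MemLp.coeFn_toLp _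
    have honein : ∀ u : Lp ℝ 2 (volume.restrict (S j)), ⟪u, one⟫_ℝ = ∫ x in S j, u x := by
      intro u
      rw [inner_L2]
      refine integral_congr_ae ?_
      filter_upwards [hone] with x hx
      rw [hx]; ring
    have hone_norm : ‖one‖ ^ 2 = B := by
      rw [← real_inner_self_eq_norm_sq, honein]
      have : (∫ x in S j, one x) = ∫ x in S j, (1:ℝ) := by
        refine integral_congr_ae ?_
        filter_upwards [hone] with x hx
        rw [hx]
      rw [this, setIntegral_const, smul_eq_mul, mul_one, measureReal_def]
    set a : ℝ := (∫ x in S j, f x) / B with hadef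
    set g : Lp ℝ 2 (volume.restrict (S j)) := fj j - a • one with hgdef
    have hgf : fj j = g + a • one := by rw [hgdef, sub_add_cancel]
    have hgc : ⇑g =ᵐ[volume.restrict (S j)] fun x => f x - a := by
      have h1 := Lp.coeFn_sub (fj j) (a • one)
      have h2 := Lp.coeFn_smul a one
      rw [hgdef]
      filter_upwards [h1, h2, hone, hfj j] with x hx1 hx2 hx3 hx4
      rw [hx1, Pi.sub_apply, hx2, Pi.smul_apply, hx3, hx4, smul_eq_mul, mul_one]
    have hfint : Integrable (⇑f) (volume.restrict (S j)) :=
      (hFmemj j).integrable one_le_two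
    have hg0 : (∫ x in S j, g x) = 0 := by
      have h1 : (∫ x in S j, g x) = ∫ x in S j, (f x - a) :=
        integral_congr_ae hgc
      rw [h1, integral_sub hfint (integrable_const a), setIntegral_const, smul_eq_mul, measureReal_def, ← hBdef, hadef]
      field_simp
      simp
    -- inner products
    have hone_g : ⟪g, one⟫_ℝ = 0 := by rw [honein, hg0]
    have hψone : ⟪ψ j, one⟫_ℝ = b := honein (ψ j)
    have hdecomp : ‖fj j‖ ^ 2 = ‖g‖ ^ 2 + a ^ 2 * B := by
      rw [hgf, norm_add_sq_real, real_inner_smul_right, hone_g, norm_smul, mul_pow]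
      rw [Real.norm_eq_abs, sq_abs, hone_norm]
      ring
    have hip : ⟪Ψ j, f⟫_ℝ = ⟪ψ j, g⟫_ℝ + a * b := by
      have h0 : ⟪Ψ j, f⟫_ℝ = ⟪ψ j, fj j⟫_ℝ := by
        have hint : Integrable (fun x => Ψ j x * f x) (volume.restrict (Set.Icc (0:ℝ) 1)) := by
          have := L2.integrable_inner (𝕜 := ℝ) (Ψ j) f
          simpa [RCLike.inner_apply, mul_comm] using this
        have hi1 : IntegrableOn (fun x => Ψ j x * f x) (S j) volume := by
          have := hint.restrict (s := S j)
          rwa [hrr j] at this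
        have hi2 : IntegrableOn (fun x => Ψ j x * f x) (Set.Icc (0:ℝ) 1 \ S j) volume := by
          have := hint.restrict (s := Set.Icc (0:ℝ) 1 \ S j)
          rwa [Measure.restrict_restrict_of_subset Set.diff_subset] at this
        calc ⟪Ψ j, f⟫_ℝ
            = ∫ x in (S j) ∪ (Set.Icc (0:ℝ) 1 \ S j), Ψ j x * f x := by
              rw [inner_L2]
              congr 1
              rw [Set.union_diff_cancel (hSsub j)]
          _ = (∫ x in S j, Ψ j x * f x) + ∫ x in Set.Icc (0:ℝ) 1 \ S j, Ψ j x * f x :=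
              setIntegral_union disjoint_sdiff_self_right (hImeas.diff (hSmeas j)) hi1 hi2
          _ = (∫ x in S j, ψ j x * fj j x) + 0 := by
              congr 1
              · refine integral_congr_ae ?_
                filter_upwards [hΨ j, hfj j] with x hx1 hx2
                rw [hx1, hx2]
              · refine integral_eq_zero_of_ae ?_
                filter_upwards [hΨzero j] with x hx
                rw [hx]
                simp
          _ = ⟪ψ j, fj j⟫_ℝ := by rw [inner_L2, add_zero]
      rw [h0, hgf, inner_add_right, real_inner_smul_right, hψone]
    -- Cauchy-Schwarz for the orthogonal part
    have hCS : ⟪ψ j, g⟫_ℝ ^ 2 ≤ (1 - b ^ 2 / B) * ‖g‖ ^ 2 := by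
      have h1 : ⟪ψ j, g⟫_ℝ = ⟪ψ j - (b / B) • one, g⟫_ℝ := by
        rw [inner_sub_left, real_inner_smul_left,
          show ⟪one, g⟫_ℝ = 0 from (real_inner_comm g one) ▸ hone_g]
        ring
      have h2 : |⟪ψ j - (b / B) • one, g⟫_ℝ| ≤ ‖ψ j - (b / B) • one‖ * ‖g‖ :=
        abs_real_inner_le_norm _ _
      have h3 : ‖ψ j - (b / B) • one‖ ^ 2 = 1 - b ^ 2 / B := by
        rw [norm_sub_sq_real, real_inner_smul_right, hψone, norm_smul, mul_pow,
          Real.norm_eq_abs, sq_abs, hone_norm, hψnorm j]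
        field_simp
        ring
      have h4 : ⟪ψ j, g⟫_ℝ ^ 2 ≤ (‖ψ j - (b / B) • one‖ * ‖g‖) ^ 2 := by
        rw [h1, ← sq_abs]
        exact pow_le_pow_left₀ (abs_nonneg _) h2 2
      rw [mul_pow, h3] at h4
      exact h4
    -- the square root of the Laplacian kills constants
    have hRone : R j one = 0 := by
      have hLone : (L j one : ℝ → ℝ) =ᵐ[volume.restrict (S j)] fun _ => (0:ℝ) := by
        refine (hL j one).trans ?_
        filter_upwards [hone] with x hx
        show (∫ y in S j, w x y * (one x - one y)) = 0
        have : (∫ y in S j, w x y * (one x - one y)) = ∫ y in S j, (0:ℝ) := by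
          refine integral_congr_ae ?_
          filter_upwards [hone] with y hy
          rw [hx, hy]
          ring
        rw [this, integral_zero]
      have hn : ‖R j one‖ ^ 2 = 0 := by
        rw [← real_inner_self_eq_norm_sq, hRsa j, hRsq j, inner_L2]
        have : (fun x => one x * (L j one) x) =ᵐ[volume.restrict (S j)] fun _ => (0:ℝ) := by
          filter_upwards [hLone] with x hx
          rw [hx]
          ring
        rw [integral_congr_ae this, integral_zero]
      have := pow_eq_zero_iff (n := 2) (by norm_num) |>.mp hn
      exact norm_eq_zero.mp this
    have hRfj : R j (fj j) = R j g := by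
      have hsm : R j (a • one) = a • R j one := (R j).map_smul a one
      rw [hgf, map_add, hsm, hRone, smul_zero, add_zero]
    have hgapj : δj j * ‖g‖ ≤ ‖R j (fj j)‖ := by
      rw [hRfj]
      exact hgap j g hg0
    have halg := alg_key ‖g‖ ‖R j (fj j)‖ ⟪ψ j, g⟫_ℝ a b B (δj j) ε ⟪Ψ j, f⟫_ℝ
      (norm_nonneg _) (norm_nonneg _) hB hb (hδpos j) hε hCS hip hgapj
    rw [hdecomp]
    exact halg
  -- positivity of the constants
  have hθj_le : ∀ j, (volume (S j)).toReal / (∫ x in S j, ψ j x) ^ 2 ≤ θ := fun j => by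
    rw [hθ]
    exact Finset.le_sup'
      (fun j => (volume (S j)).toReal / (∫ x in S j, ψ j x) ^ 2) (Finset.mem_univ j)
  have hθpos : 0 < θ := by
    refine lt_of_lt_of_le ?_ (hθj_le ⟨0, hk⟩)
    have hμ0 : volume (S ⟨0, hk⟩) ≠ 0 := by
      intro h0
      apply hψint ⟨0, hk⟩
      have hz : (volume.restrict (S ⟨0, hk⟩)) = 0 := Measure.restrict_eq_zero.mpr h0
      simp only [hz, integral_zero_measure]
    have h1 : 0 < (volume (S ⟨0, hk⟩)).toReal := ENNReal.toReal_pos hμ0 (hSfin _).ne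
    have h2 : (∫ x in S ⟨0, hk⟩, ψ ⟨0, hk⟩ x) ≠ 0 := hψint _
    positivity
  have hδ_le : ∀ j, δ ≤ δj j := fun j => by
    rw [hδ]
    exact Finset.inf'_le _ (Finset.mem_univ j)
  have hδ_pos : 0 < δ := by
    rw [hδ]
    rw [Finset.lt_inf'_iff]
    exact fun j _ => hδpos j
  -- assemble
  have hcoef : ∀ j, (1 + ε) * ((volume (S j)).toReal / (∫ x in S j, ψ j x) ^ 2) / (δj j) ^ 2
        * ‖R j (fj j)‖ ^ 2
      + (1 + 1 / ε) * ((volume (S j)).toReal / (∫ x in S j, ψ j x) ^ 2) * ⟪Ψ j, f⟫_ℝ ^ 2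
      ≤ (1 + ε) * θ / δ ^ 2 * ‖R j (fj j)‖ ^ 2 + (1 + ε) / ε * θ * ⟪Ψ j, f⟫_ℝ ^ 2 := by
    intro j
    have h1 : (1 + ε) * ((volume (S j)).toReal / (∫ x in S j, ψ j x) ^ 2) / (δj j) ^ 2
        ≤ (1 + ε) * θ / δ ^ 2 := by
      apply div_le_div₀ (by positivity)
        (mul_le_mul_of_nonneg_left (hθj_le j) (by linarith)) (by positivity)
      have := hδ_le j
      nlinarith [hδ_pos, hδpos j]
    have h2 : (1 + 1 / ε) * ((volume (S j)).toReal / (∫ x in S j, ψ j x) ^ 2)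
        ≤ (1 + ε) / ε * θ := by
      have he : (1 + 1 / ε) = (1 + ε) / ε := by field_simp; ring
      rw [he]
      exact mul_le_mul_of_nonneg_left (hθj_le j) (by positivity)
    have t1 := mul_le_mul_of_nonneg_right h1 (sq_nonneg ‖R j (fj j)‖)
    have t2 := mul_le_mul_of_nonneg_right h2 (sq_nonneg ⟪Ψ j, f⟫_ℝ)
    linarith
  calc ‖f‖ ^ 2 = ∑ j, ‖fj j‖ ^ 2 := hnorm
    _ ≤ ∑ j, ((1 + ε) * θ / δ ^ 2 * ‖R j (fj j)‖ ^ 2 + (1 + ε) / ε * θ * ⟪Ψ j, f⟫_ℝ ^ 2) :=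
        Finset.sum_le_sum fun j _ => le_trans (key j) (hcoef j)
    _ = (1 + ε) * θ / δ ^ 2 * ∑ j, ‖R j (fj j)‖ ^ 2
        + (1 + ε) / ε * θ * ∑ j, ⟪Ψ j, f⟫_ℝ ^ 2 := by
        rw [Finset.sum_add_distrib, Finset.mul_sum, Finset.mul_sum]
    _ ≤ (1 + ε) * θ / δ ^ 2 * ‖Rw f‖ ^ 2 + (1 + ε) / ε * θ * ∑ j, ⟪Ψ j, f⟫_ℝ ^ 2 := by
        have hc : 0 ≤ (1 + ε) * θ / δ ^ 2 := by positivity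
        have := mul_le_mul_of_nonneg_left hRsum hc
        linarith
end
end

section
/- Let w be a graphon, {S_1,…,S_k} a measurable partition of [0,1], ψ_j ∈ L²(S_j) with ‖ψ_j‖ = 1 and ∫_{S_j} ψ_j ≠ 0 for each j, and suppose for each j there exists δ_j > 0 such that every f ∈ L²(S_j) with ∫_{S_j} f = 0 satisfies ‖L_j^{1/2} f‖ ≥ δ_j ‖f‖. Set θ_j := |S_j|/|∫_{S_j} ψ_j|² and θ := max_j θ_j. Fix 0 ≤ σ < 1, and for each j choose τ_j > 0 with (θ_j/δ_j²) τ_j² ≤ σ. Then for every f ∈ L²[0,1] whose restriction f_j to S_j satisfies ‖L_j^{1/2} f_j‖ ≤ τ_j ‖f_j‖ for every j, and for every ε > 0 with (1+ε)σ < 1, one has ((1 − (1+ε)σ) ε / ((1+ε)θ)) ‖f‖² ≤ Σ_{j=1}^{k} |⟨f, ψ_j⟩|² ≤ ‖f‖². -/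
open MeasureTheory Filter
open scoped ENNReal InnerProductSpace

noncomputable section

section Aux

variable {μ : Measure ℝ}

/-- The inner product on real `L²` is the integral of the pointwise product. -/
theorem inner_eq_integral_mul (f g : Lp ℝ 2 μ) :
    ⟪f, g⟫_ℝ = ∫ a, f a * g a ∂μ := by
  rw [L2.inner_def]; simp [RCLike.inner_apply]
  congr 1; funext a; ring

theorem integrable_mul_of_L2 (f g : Lp ℝ 2 μ) :
    Integrable (fun a => f a * g a) μ := by
  simpa [RCLike.inner_apply] using L2.integrable_inner (𝕜 := ℝ) g f

end Aux

theorem integral_restrict_split (F : ℝ → ℝ) (s t : Set ℝ) (hs : MeasurableSet s)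
    (ht : MeasurableSet t) (hsub : s ⊆ t) (hF : Integrable F (volume.restrict t)) :
    ∫ a, F a ∂(volume.restrict t)
      = (∫ a, F a ∂(volume.restrict s)) + ∫ a, F a ∂(volume.restrict (t \ s)) := by
  have hsplit : volume.restrict t = volume.restrict s + volume.restrict (t \ s) := by
    rw [← Measure.restrict_union disjoint_sdiff_self_right (ht.diff hs),
      Set.union_diff_cancel hsub]
  rw [hsplit] at hF ⊢
  exact integral_add_measure hF.left_of_add_measure hF.right_of_add_measure

theorem integral_restrict_cover {ι : Type*} [Fintype ι] (s : ι → Set ℝ) (t : Set ℝ)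
    (hm : ∀ i, MeasurableSet (s i)) (hd : Pairwise (Function.onFun Disjoint s))
    (hc : (⋃ i, s i) = t) (F : ℝ → ℝ) (hF : IntegrableOn F t volume) :
    ∫ x in t, F x = ∑ i, ∫ x in s i, F x := by
  rw [← hc] at hF ⊢
  rw [integral_iUnion hm hd hF, tsum_fintype]


set_option maxHeartbeats 2000000 in
/-- With the setup of Statement 0, set `θ_j := |S_j|/|∫_{S_j} ψ_j|²` and
`θ := max_j θ_j`.  Fix `0 ≤ σ < 1` and `τ_j > 0` with `(θ_j/δ_j²) τ_j² ≤ σ`.  Then for every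
`f ∈ L²[0,1]` whose restrictions satisfy `‖L_j^{1/2} f_j‖ ≤ τ_j ‖f_j‖` for all `j`, and every
`ε > 0` with `(1+ε)σ < 1`,
`((1 − (1+ε)σ) ε / ((1+ε)θ)) ‖f‖² ≤ Σ_j |⟨f, ψ_j⟩|² ≤ ‖f‖²`. -/
theorem graphon_sampling_two_sided_estimate
    (w : ℝ → ℝ → ℝ) (hw : IsGraphon w)
    (k : ℕ) (hk : 0 < k) (S : Fin k → Set ℝ)
    (hSmeas : ∀ j, MeasurableSet (S j))
    (hSdisj : Pairwise (Function.onFun Disjoint S))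
    (hScover : (⋃ j, S j) = Set.Icc (0:ℝ) 1)
    -- the Laplacians `L j` on `L²(S j)` and their positive square roots `R j`
    (L R : ∀ j : Fin k, Lp ℝ 2 (volume.restrict (S j)) →L[ℝ] Lp ℝ 2 (volume.restrict (S j)))
    (hL : ∀ j (g : Lp ℝ 2 (volume.restrict (S j))),
      (L j g : ℝ → ℝ) =ᵐ[volume.restrict (S j)]
        fun x => ∫ y in S j, w x y * (g x - g y))
    (hRsa : ∀ j (g h : Lp ℝ 2 (volume.restrict (S j))), ⟪R j g, h⟫_ℝ = ⟪g, R j h⟫_ℝ)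
    (hRpos : ∀ j (g : Lp ℝ 2 (volume.restrict (S j))), 0 ≤ ⟪R j g, g⟫_ℝ)
    (hRsq : ∀ j (g : Lp ℝ 2 (volume.restrict (S j))), R j (R j g) = L j g)
    -- the sampling functions `ψ j ∈ L²(S j)` and their extensions `Ψ j ∈ L²[0,1]` by zero
    (ψ : ∀ j : Fin k, Lp ℝ 2 (volume.restrict (S j)))
    (hψnorm : ∀ j, ‖ψ j‖ = 1)
    (hψint : ∀ j, (∫ x in S j, ψ j x) ≠ 0)
    (Ψ : Fin k → Lp ℝ 2 (volume.restrict (Set.Icc (0:ℝ) 1)))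
    (hΨ : ∀ j, (Ψ j : ℝ → ℝ) =ᵐ[volume.restrict (S j)] ψ j)
    (hΨzero : ∀ j, (Ψ j : ℝ → ℝ) =ᵐ[volume.restrict (Set.Icc (0:ℝ) 1 \ S j)] 0)
    -- the spectral gap assumption (i)
    (δj : Fin k → ℝ) (hδpos : ∀ j, 0 < δj j)
    (hgap : ∀ j (g : Lp ℝ 2 (volume.restrict (S j))),
      (∫ x in S j, g x) = 0 → δj j * ‖g‖ ≤ ‖R j g‖)
    -- the constant `θ = max_j θ_j`
    (θ : ℝ)
    (hθ : θ = Finset.univ.sup' (Finset.univ_nonempty_iff.mpr ⟨⟨0, hk⟩⟩)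
      fun j => (volume (S j)).toReal / (∫ x in S j, ψ j x) ^ 2)
    -- `σ` and the local bandwidths `τ j`
    (σ : ℝ) (hσ0 : 0 ≤ σ) (hσ1 : σ < 1)
    (τ : Fin k → ℝ) (hτpos : ∀ j, 0 < τ j)
    (hτ : ∀ j, (volume (S j)).toReal / (∫ x in S j, ψ j x) ^ 2 / (δj j) ^ 2 * (τ j) ^ 2 ≤ σ)
    -- `f ∈ L²[0,1]`, its restrictions `f j ∈ L²(S j)`, with `f j ∈ χ_j(τ_j)`
    (f : Lp ℝ 2 (volume.restrict (Set.Icc (0:ℝ) 1)))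
    (fj : ∀ j : Fin k, Lp ℝ 2 (volume.restrict (S j)))
    (hfj : ∀ j, (fj j : ℝ → ℝ) =ᵐ[volume.restrict (S j)] f)
    (hband : ∀ j, ‖R j (fj j)‖ ≤ τ j * ‖fj j‖)
    (ε : ℝ) (hε : 0 < ε) (hεσ : (1 + ε) * σ < 1) :
    (1 - (1 + ε) * σ) * ε / ((1 + ε) * θ) * ‖f‖ ^ 2 ≤ ∑ j : Fin k, ⟪f, Ψ j⟫_ℝ ^ 2 ∧
      ∑ j : Fin k, ⟪f, Ψ j⟫_ℝ ^ 2 ≤ ‖f‖ ^ 2 := by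
  have hsub : ∀ j, S j ⊆ Set.Icc (0:ℝ) 1 := fun j => by
    rw [← hScover]; exact Set.subset_iUnion S j
  have hfin : ∀ j, volume (S j) ≠ ⊤ := fun j =>
    ((measure_mono (hsub j)).trans_lt (by simp [Real.volume_Icc])).ne
  -- Step A: `⟪f, Ψ j⟫ = ⟪fj j, ψ j⟫`
  have hA : ∀ j, ⟪f, Ψ j⟫_ℝ = ⟪fj j, ψ j⟫_ℝ := by
    intro j
    have hint : Integrable (fun a => (f : ℝ → ℝ) a * (Ψ j : ℝ → ℝ) a)
        (volume.restrict (Set.Icc (0:ℝ) 1)) := integrable_mul_of_L2 f (Ψ j)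
    rw [inner_eq_integral_mul, inner_eq_integral_mul]
    rw [integral_restrict_split _ (S j) _ (hSmeas j) measurableSet_Icc (hsub j) hint]
    have h1 : ∫ a, (f : ℝ → ℝ) a * (Ψ j : ℝ → ℝ) a ∂(volume.restrict (S j))
        = ∫ a, (fj j : ℝ → ℝ) a * (ψ j : ℝ → ℝ) a ∂(volume.restrict (S j)) := by
      apply integral_congr_ae
      filter_upwards [hfj j, hΨ j] with x hx hx' using by rw [hx, hx']
    have h2 : ∫ a, (f : ℝ → ℝ) a * (Ψ j : ℝ → ℝ) a
        ∂(volume.restrict (Set.Icc (0:ℝ) 1 \ S j)) = 0 := by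
      apply integral_eq_zero_of_ae
      filter_upwards [hΨzero j] with x hx using by rw [hx, Pi.zero_apply, mul_zero]
    rw [h1, h2, add_zero]
  -- Step B: `‖f‖² = ∑ j ‖fj j‖²`
  have hB : ‖f‖ ^ 2 = ∑ j, ‖fj j‖ ^ 2 := by
    have h0 : ‖f‖ ^ 2 = ∫ x in Set.Icc (0:ℝ) 1, (f : ℝ → ℝ) x * (f : ℝ → ℝ) x := by
      rw [← real_inner_self_eq_norm_sq, inner_eq_integral_mul]
    have hint : IntegrableOn (fun x => (f : ℝ → ℝ) x * (f : ℝ → ℝ) x)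
        (Set.Icc (0:ℝ) 1) volume := integrable_mul_of_L2 f f
    rw [h0, integral_restrict_cover S _ hSmeas hSdisj hScover _ hint]
    apply Finset.sum_congr rfl
    intro j _
    have h1 : ∫ x in S j, (f : ℝ → ℝ) x * (f : ℝ → ℝ) x
        = ∫ a, (fj j : ℝ → ℝ) a * (fj j : ℝ → ℝ) a ∂(volume.restrict (S j)) := by
      apply integral_congr_ae
      filter_upwards [hfj j] with x hx using by rw [hx]
    rw [h1, ← inner_eq_integral_mul, real_inner_self_eq_norm_sq]
  -- Step C: per-`j` lower bound for `⟪fj j, ψ j⟫²`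
  have hC : ∀ j, (1 - (1 + ε) * σ) * ε / ((1 + ε) * θ) * ‖fj j‖ ^ 2
      ≤ ⟪fj j, ψ j⟫_ℝ ^ 2 := by
    intro j
    haveI : IsFiniteMeasure (volume.restrict (S j)) :=
      ⟨by rw [Measure.restrict_apply_univ]; exact (hfin j).lt_top⟩
    have hμS : (volume.restrict (S j)) (S j) ≠ ⊤ := by
      rw [Measure.restrict_apply_self]; exact hfin j
    set V : ℝ := (volume (S j)).toReal with hVdef
    set I : ℝ := ∫ x in S j, (ψ j : ℝ → ℝ) x with hIdef
    have hI0 : I ≠ 0 := hψint j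
    have hV0 : 0 < V := by
      apply ENNReal.toReal_pos _ (hfin j)
      intro h0
      apply hI0
      rw [hIdef]
      exact MeasureTheory.setIntegral_measure_zero _ h0
    -- the constant function 1 on S j
    set one : Lp ℝ 2 (volume.restrict (S j)) :=
      indicatorConstLp 2 (hSmeas j) hμS (1:ℝ) with hone_def
    have h1 : (one : ℝ → ℝ) =ᵐ[volume.restrict (S j)] fun _ => 1 := by
      filter_upwards [indicatorConstLp_coeFn (p := 2) (μ := volume.restrict (S j))
        (hs := hSmeas j) (hμs := hμS) (c := (1:ℝ)), ae_restrict_mem (hSmeas j)]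
        with x hx hmem
      simp only [hone_def, hx, Set.indicator_of_mem hmem]
    have hinner_one : ∀ g : Lp ℝ 2 (volume.restrict (S j)),
        ⟪g, one⟫_ℝ = ∫ x, (g : ℝ → ℝ) x ∂(volume.restrict (S j)) := by
      intro g
      rw [inner_eq_integral_mul]
      apply integral_congr_ae
      filter_upwards [h1] with x hx using by simp [hx]
    have hone_int : ∫ x, (one : ℝ → ℝ) x ∂(volume.restrict (S j)) = V := by
      rw [integral_congr_ae h1, integral_const, smul_eq_mul, mul_one,
        measureReal_restrict_apply_univ, measureReal_def]
    have hone_V : ⟪one, one⟫_ℝ = V := by rw [hinner_one one]; exact hone_int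
    have hψ_one : ⟪ψ j, one⟫_ℝ = I := hinner_one (ψ j)
    have hone_ψ : ⟪one, ψ j⟫_ℝ = I := by rw [real_inner_comm]; exact hψ_one
    have hone_sq : ‖one‖ ^ 2 = V := by rw [← real_inner_self_eq_norm_sq]; exact hone_V
    -- the mean-zero part g of fj j
    set c : ℝ := (∫ x, (fj j : ℝ → ℝ) x ∂(volume.restrict (S j))) / V with hcdef
    set g : Lp ℝ 2 (volume.restrict (S j)) := fj j - c • one with hgdef
    have hfj_eq : fj j = g + c • one := by rw [hgdef]; abel
    have hint_g : ∀ u : Lp ℝ 2 (volume.restrict (S j)),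
        Integrable (u : ℝ → ℝ) (volume.restrict (S j)) := fun u =>
      (Lp.memLp u).integrable one_le_two
    have hg0 : ∫ x, (g : ℝ → ℝ) x ∂(volume.restrict (S j)) = 0 := by
      have hcoe : (g : ℝ → ℝ) =ᵐ[volume.restrict (S j)]
          fun x => (fj j : ℝ → ℝ) x - c * (one : ℝ → ℝ) x := by
        filter_upwards [Lp.coeFn_sub (fj j) (c • one), Lp.coeFn_smul c one] with x hx hx'
        rw [hgdef, hx, Pi.sub_apply, hx', Pi.smul_apply, smul_eq_mul]
      rw [integral_congr_ae hcoe, integral_sub (hint_g (fj j))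
        ((hint_g one).const_mul c), integral_const_mul, hone_int, hcdef,
        div_mul_cancel₀ _ hV0.ne', sub_self]
    have hg_one : ⟪g, one⟫_ℝ = 0 := by rw [hinner_one g, hg0]
    -- `R j one = 0`
    have hLone : (L j one : ℝ → ℝ) =ᵐ[volume.restrict (S j)] fun _ => 0 := by
      filter_upwards [hL j one, h1] with x hx h1x
      rw [hx]
      have : ∫ y in S j, w x y * ((one : ℝ → ℝ) x - (one : ℝ → ℝ) y)
          = ∫ y in S j, (0:ℝ) := by
        apply integral_congr_ae
        filter_upwards [h1] with y hy using by simp [hy, h1x]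
      rw [this, integral_zero]
    have hRone : R j one = 0 := by
      have hsq : ‖R j one‖ ^ 2 = 0 := by
        rw [← real_inner_self_eq_norm_sq, hRsa j one (R j one), hRsq j one,
          real_inner_comm, hinner_one (L j one), integral_congr_ae hLone,
          integral_zero]
      exact norm_eq_zero.mp (pow_eq_zero_iff (n := 2) (by norm_num) |>.mp hsq)
    have hRg : R j g = R j (fj j) := by
      rw [hgdef, (R j).map_sub, (R j).map_smul, hRone, smul_zero, sub_zero]
    -- the spectral gap bound on g
    have hGbound : δj j * ‖g‖ ≤ τ j * ‖fj j‖ := by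
      calc δj j * ‖g‖ ≤ ‖R j g‖ := hgap j g hg0
        _ = ‖R j (fj j)‖ := by rw [hRg]
        _ ≤ τ j * ‖fj j‖ := hband j
    -- Pythagoras
    have hF2 : ‖fj j‖ ^ 2 = ‖g‖ ^ 2 + c ^ 2 * V := by
      rw [hfj_eq, norm_add_sq_real, real_inner_smul_right, hg_one, mul_zero,
        norm_smul, mul_pow, mul_zero, add_zero, hone_sq]
      simp [Real.norm_eq_abs, sq_abs]
    -- the inner product with ψ j
    have ht : ⟪fj j, ψ j⟫_ℝ = ⟪g, ψ j⟫_ℝ + c * I := by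
      rw [hfj_eq, inner_add_left, real_inner_smul_left, hone_ψ]
    set b : ℝ := ⟪g, ψ j⟫_ℝ with hbdef
    -- the refined Cauchy-Schwarz bound on b
    set q : ℝ := I ^ 2 / V with hqdef
    have hq0 : 0 < q := by rw [hqdef]; positivity
    have hbb : b ^ 2 ≤ ‖g‖ ^ 2 * (1 - q) ∧ 0 ≤ 1 - q := by
      set ψ' : Lp ℝ 2 (volume.restrict (S j)) := ψ j - (I / V) • one with hψ'def
      have hψ'norm : ‖ψ'‖ ^ 2 = 1 - q := by
        have hψψ : ⟪ψ j, ψ j⟫_ℝ = 1 := by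
          rw [real_inner_self_eq_norm_sq, hψnorm j]; norm_num
        rw [hψ'def, ← real_inner_self_eq_norm_sq, inner_sub_sub_self]
        simp only [real_inner_smul_left, real_inner_smul_right, hψ_one, hone_ψ,
          hone_V, hψψ]
        rw [hqdef]
        field_simp
        ring
      have hb' : b = ⟪g, ψ'⟫_ℝ := by
        rw [hψ'def, inner_sub_right, real_inner_smul_right, hg_one, mul_zero,
          sub_zero, hbdef]
      constructor
      · rw [hb']
        calc ⟪g, ψ'⟫_ℝ ^ 2 ≤ (‖g‖ * ‖ψ'‖) ^ 2 := by
              rw [← sq_abs]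
              exact pow_le_pow_left₀ (abs_nonneg _) (abs_real_inner_le_norm g ψ') 2
          _ = ‖g‖ ^ 2 * (1 - q) := by rw [mul_pow, hψ'norm]
      · rw [← hψ'norm]; positivity
    obtain ⟨hb2, hq1'⟩ := hbb
    have hq1 : q ≤ 1 := by linarith
    -- `θ ≥ θ_j = 1/q`
    have hθj : V / I ^ 2 ≤ θ := by
      rw [hVdef, hIdef, hθ]
      exact Finset.le_sup'
        (fun i => (volume (S i)).toReal / (∫ x in S i, (ψ i : ℝ → ℝ) x) ^ 2)
        (Finset.mem_univ j)
    have hθpos : 0 < θ := lt_of_lt_of_le (by positivity) hθj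
    have hqθ : 1 ≤ q * θ := by
      have hVI : V / I ^ 2 = 1 / q := by rw [hqdef]; field_simp
      calc (1:ℝ) = q * (1 / q) := by field_simp
        _ ≤ q * θ := by
            apply mul_le_mul_of_nonneg_left _ hq0.le
            rw [← hVI]; exact hθj
    -- `G² ≤ σ q F²`
    have hδ2 : (0:ℝ) < (δj j) ^ 2 := pow_pos (hδpos j) 2
    have hτδ : (τ j) ^ 2 / (δj j) ^ 2 ≤ σ * q := by
      have h := hτ j
      rw [← hVdef, ← hIdef] at h
      have hkey : (τ j) ^ 2 / (δj j) ^ 2 = q * (V / I ^ 2 / (δj j) ^ 2 * (τ j) ^ 2) := by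
        rw [hqdef]
        field_simp
      rw [hkey]
      calc q * (V / I ^ 2 / (δj j) ^ 2 * (τ j) ^ 2) ≤ q * σ :=
            mul_le_mul_of_nonneg_left h hq0.le
        _ = σ * q := mul_comm _ _
    have hG2 : ‖g‖ ^ 2 ≤ σ * q * ‖fj j‖ ^ 2 := by
      have h2 : (δj j) ^ 2 * ‖g‖ ^ 2 ≤ (τ j) ^ 2 * ‖fj j‖ ^ 2 := by
        have h3 := mul_self_le_mul_self (mul_nonneg (hδpos j).le (norm_nonneg g)) hGbound
        calc (δj j) ^ 2 * ‖g‖ ^ 2 = (δj j * ‖g‖) * (δj j * ‖g‖) := by ring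
          _ ≤ (τ j * ‖fj j‖) * (τ j * ‖fj j‖) := h3
          _ = (τ j) ^ 2 * ‖fj j‖ ^ 2 := by ring
      calc ‖g‖ ^ 2 ≤ (τ j) ^ 2 / (δj j) ^ 2 * ‖fj j‖ ^ 2 := by
            rw [div_mul_eq_mul_div, le_div_iff₀ hδ2]
            linarith only [h2]
        _ ≤ σ * q * ‖fj j‖ ^ 2 :=
            mul_le_mul_of_nonneg_right hτδ (sq_nonneg _)
    -- final algebra
    have ha2 : (c * I) ^ 2 = q * (‖fj j‖ ^ 2 - ‖g‖ ^ 2) := by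
      have hcV : c ^ 2 * V = ‖fj j‖ ^ 2 - ‖g‖ ^ 2 := by rw [hF2]; ring
      rw [hqdef, ← hcV]
      field_simp
    have hab : ⟪fj j, ψ j⟫_ℝ = c * I + b := by rw [ht]; ring
    have hstep1 : q * (1 - (1 + ε) * σ) * ‖fj j‖ ^ 2
        ≤ (c * I) ^ 2 - (1 + ε) * b ^ 2 := by
      have e1 : (1 + ε) * b ^ 2 ≤ (1 + ε) * (‖g‖ ^ 2 * (1 - q)) :=
        mul_le_mul_of_nonneg_left hb2 (by linarith)
      have e2 : (1 + ε - ε * q) * ‖g‖ ^ 2 ≤ (1 + ε - ε * q) * (σ * q * ‖fj j‖ ^ 2) :=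
        mul_le_mul_of_nonneg_left hG2
          (by linarith only [mul_le_mul_of_nonneg_left hq1 hε.le])
      have e3 : (1 + ε - ε * q) * (σ * q * ‖fj j‖ ^ 2) ≤ (1 + ε) * (σ * q * ‖fj j‖ ^ 2) := by
        have hnn : 0 ≤ σ * q * ‖fj j‖ ^ 2 := by positivity
        linarith only [mul_nonneg (mul_nonneg hε.le hq0.le) hnn]
      linarith only [ha2, e1, e2, e3]
    have hstep2 : ε * ((c * I) ^ 2 - (1 + ε) * b ^ 2) ≤ (1 + ε) * ⟪fj j, ψ j⟫_ℝ ^ 2 := by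
      rw [hab]
      have hid : (1 + ε) * (c * I + b) ^ 2 - ε * ((c * I) ^ 2 - (1 + ε) * b ^ 2)
          = (c * I + b + ε * b) ^ 2 := by ring
      linarith only [sq_nonneg (c * I + b + ε * b), hid]
    have hA0 : 0 ≤ 1 - (1 + ε) * σ := by linarith
    rw [div_mul_eq_mul_div, div_le_iff₀ (by positivity)]
    have key : ε * (q * (1 - (1 + ε) * σ) * ‖fj j‖ ^ 2) ≤ (1 + ε) * ⟪fj j, ψ j⟫_ℝ ^ 2 :=
      le_trans (mul_le_mul_of_nonneg_left hstep1 hε.le) hstep2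
    have k3 := mul_le_mul_of_nonneg_right key hθpos.le
    have k2 : ε * ((1 - (1 + ε) * σ) * ‖fj j‖ ^ 2)
        ≤ ε * ((1 - (1 + ε) * σ) * ‖fj j‖ ^ 2) * (q * θ) := by
      have hnn : 0 ≤ ε * ((1 - (1 + ε) * σ) * ‖fj j‖ ^ 2) :=
        mul_nonneg hε.le (mul_nonneg hA0 (sq_nonneg _))
      calc ε * ((1 - (1 + ε) * σ) * ‖fj j‖ ^ 2)
          = ε * ((1 - (1 + ε) * σ) * ‖fj j‖ ^ 2) * 1 := by ring
        _ ≤ ε * ((1 - (1 + ε) * σ) * ‖fj j‖ ^ 2) * (q * θ) :=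
            mul_le_mul_of_nonneg_left hqθ hnn
    linarith only [k2, k3]
  -- assemble
  constructor
  · calc (1 - (1 + ε) * σ) * ε / ((1 + ε) * θ) * ‖f‖ ^ 2
        = ∑ j, (1 - (1 + ε) * σ) * ε / ((1 + ε) * θ) * ‖fj j‖ ^ 2 := by
          rw [hB, Finset.mul_sum]
      _ ≤ ∑ j, ⟪fj j, ψ j⟫_ℝ ^ 2 := Finset.sum_le_sum fun j _ => hC j
      _ = ∑ j : Fin k, ⟪f, Ψ j⟫_ℝ ^ 2 := by
          apply Finset.sum_congr rfl
          intro j _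
          rw [hA j]
  · calc ∑ j : Fin k, ⟪f, Ψ j⟫_ℝ ^ 2 = ∑ j, ⟪fj j, ψ j⟫_ℝ ^ 2 := by
          apply Finset.sum_congr rfl; intro j _; rw [hA j]
      _ ≤ ∑ j, ‖fj j‖ ^ 2 := by
          apply Finset.sum_le_sum
          intro j _
          calc ⟪fj j, ψ j⟫_ℝ ^ 2 ≤ (‖fj j‖ * ‖ψ j‖) ^ 2 := by
                rw [← sq_abs]
                exact pow_le_pow_left₀ (abs_nonneg _) (abs_real_inner_le_norm _ _) 2
            _ = ‖fj j‖ ^ 2 := by rw [hψnorm j, mul_one]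
      _ = ‖f‖ ^ 2 := hB.symm
end
end

section
/- Let w and w_n (n ∈ ℕ) be graphons with ‖w_n − w‖_□ → 0 as n → ∞. Then for every h ∈ L¹[0,1], ∫₀¹ (d_{w_n}(x) − d_w(x)) h(x) dx → 0 as n → ∞, where d_{w_n} and d_w are the degree functions of w_n and w. -/
open MeasureTheory Filter
open scoped ENNReal InnerProductSpace

noncomputable section

/-- The degree function of a graphon: `d_w(x) = ∫₀¹ w(x,y) dy`. -/
def degreeFn (w : ℝ → ℝ → ℝ) (x : ℝ) : ℝ := ∫ y in Set.Icc (0:ℝ) 1, w x y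

/-- The cut norm of a kernel `u` on `[0,1]²`:
`‖u‖_□ = sup_{S,T ⊆ [0,1] measurable} |∫_{S×T} u(x,y) dx dy|`. -/
def cutNorm (u : ℝ → ℝ → ℝ) : ℝ :=
  ⨆ p : {S : Set ℝ // MeasurableSet S} × {T : Set ℝ // MeasurableSet T},
    |∫ x in p.1.1 ∩ Set.Icc (0:ℝ) 1, ∫ y in p.2.1 ∩ Set.Icc (0:ℝ) 1, u x y|

abbrev I01 : Set ℝ := Set.Icc (0:ℝ) 1

instance : IsFiniteMeasure (volume.restrict I01) :=
  ⟨by rw [Measure.restrict_apply_univ]; simp⟩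

lemma sect_meas {w : ℝ → ℝ → ℝ} (hw : IsGraphon w) (x : ℝ) : Measurable (w x) :=
  hw.1.of_uncurry_left

lemma sect_int {w : ℝ → ℝ → ℝ} (hw : IsGraphon w) (x : ℝ) :
    Integrable (w x) (volume.restrict I01) := by
  refine Integrable.mono' (integrable_const 1) (sect_meas hw x).aestronglyMeasurable ?_
  refine Eventually.of_forall fun y => ?_
  have := hw.2.2 x y
  rw [Real.norm_eq_abs, abs_le]
  constructor <;> linarith [this.1, this.2]

lemma deg_meas {w : ℝ → ℝ → ℝ} (hw : IsGraphon w) : Measurable (degreeFn w) := by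
  have : StronglyMeasurable fun x => ∫ y, w x y ∂(volume.restrict I01) :=
    (hw.1.stronglyMeasurable).integral_prod_right'
  exact this.measurable

lemma deg_bound {w : ℝ → ℝ → ℝ} (hw : IsGraphon w) (x : ℝ) : |degreeFn w x| ≤ 1 := by
  have : ‖∫ y in I01, w x y‖ ≤ 1 * (volume I01).toReal := by
    refine norm_setIntegral_le_of_norm_le_const (by simp) fun y _ => ?_
    rw [Real.norm_eq_abs, abs_le]
    exact ⟨by linarith [(hw.2.2 x y).1], (hw.2.2 x y).2⟩
  simpa [degreeFn] using this


lemma cut_bdd {w w' : ℝ → ℝ → ℝ} (hw : IsGraphon w) (hw' : IsGraphon w') :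
    BddAbove (Set.range fun p : {S : Set ℝ // MeasurableSet S} × {T : Set ℝ // MeasurableSet T} =>
      |∫ x in p.1.1 ∩ I01, ∫ y in p.2.1 ∩ I01, (w x y - w' x y)|) := by
  refine ⟨2, ?_⟩
  rintro r ⟨p, rfl⟩
  have hsub : ∀ a b : Set ℝ, volume (a ∩ I01) ≤ 1 := fun a b => by
    calc volume (a ∩ I01) ≤ volume I01 := measure_mono Set.inter_subset_right
    _ = 1 := by simp
  have hfin : ∀ a : Set ℝ, volume (a ∩ I01) < ⊤ := fun a =>
    lt_of_le_of_lt (hsub a a) (by norm_num)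
  have inner : ∀ x, ‖∫ y in p.2.1 ∩ I01, (w x y - w' x y)‖ ≤ 2 := by
    intro x
    have : ‖∫ y in p.2.1 ∩ I01, (w x y - w' x y)‖ ≤
        2 * (volume (p.2.1 ∩ I01)).toReal := by
      refine norm_setIntegral_le_of_norm_le_const (hfin _)
        fun y _ => ?_
      have h1 := hw.2.2 x y; have h2 := hw'.2.2 x y
      rw [Real.norm_eq_abs, abs_le]
      constructor <;> [linarith [h1.1, h2.2]; linarith [h1.2, h2.1]]
    refine this.trans ?_
    have := ENNReal.toReal_mono (by norm_num) (hsub p.2.1 p.2.1)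
    simp only [ENNReal.toReal_one] at this
    nlinarith [ENNReal.toReal_nonneg (a := volume (p.2.1 ∩ I01))]
  have outer : ‖∫ x in p.1.1 ∩ I01, ∫ y in p.2.1 ∩ I01, (w x y - w' x y)‖ ≤
      2 * (volume (p.1.1 ∩ I01)).toReal :=
    norm_setIntegral_le_of_norm_le_const (hfin _)
      fun x _ => inner x
  rw [Real.norm_eq_abs] at outer
  refine outer.trans ?_
  have := ENNReal.toReal_mono (by norm_num) (hsub p.1.1 p.1.1)
  simp only [ENNReal.toReal_one] at this
  nlinarith [ENNReal.toReal_nonneg (a := volume (p.1.1 ∩ I01))]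

lemma deg_sub_eq {w w' : ℝ → ℝ → ℝ} (hw : IsGraphon w) (hw' : IsGraphon w') (x : ℝ) :
    degreeFn w x - degreeFn w' x = ∫ y in I01, (w x y - w' x y) :=
  (integral_sub (sect_int hw x) (sect_int hw' x)).symm

lemma key_bound {w w' : ℝ → ℝ → ℝ} (hw : IsGraphon w) (hw' : IsGraphon w')
    {S : Set ℝ} (hS : MeasurableSet S) :
    |∫ x in S ∩ I01, (degreeFn w x - degreeFn w' x)| ≤
      cutNorm (fun x y => w x y - w' x y) := by
  have : (fun x => degreeFn w x - degreeFn w' x) =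
      fun x => ∫ y in Set.univ ∩ I01, (w x y - w' x y) := by
    funext x; rw [deg_sub_eq hw hw', Set.univ_inter]
  rw [this]
  exact le_ciSup (cut_bdd hw hw') (⟨S, hS⟩, ⟨Set.univ, MeasurableSet.univ⟩)

lemma lip_est {D : ℝ → ℝ} (hDm : Measurable D) (hDb : ∀ x, |D x| ≤ 2)
    {f g : ℝ → ℝ} (hf : Integrable f (volume.restrict I01))
    (hg : Integrable g (volume.restrict I01)) :
    |(∫ x, D x * f x ∂(volume.restrict I01)) - ∫ x, D x * g x ∂(volume.restrict I01)| ≤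
      2 * ∫ x, |f x - g x| ∂(volume.restrict I01) := by
  set μ := volume.restrict I01
  have Dint : ∀ {u : ℝ → ℝ}, Integrable u μ → Integrable (fun x => D x * u x) μ := fun hu =>
    hu.bdd_mul (c := 2) hDm.aestronglyMeasurable (Eventually.of_forall fun x => by simpa using hDb x)
  rw [← integral_sub (Dint hf) (Dint hg)]
  simp only [← mul_sub]
  calc |∫ x, D x * (f x - g x) ∂μ| ≤ ∫ x, |D x * (f x - g x)| ∂μ := by
        simpa only [Real.norm_eq_abs] using
          norm_integral_le_integral_norm (μ := μ) (f := fun x => D x * (f x - g x))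
    _ ≤ ∫ x, 2 * |f x - g x| ∂μ := by
        refine integral_mono (Dint (hf.sub hg)).abs ((hf.sub hg).abs.const_mul 2) fun x => ?_
        rw [abs_mul]
        exact mul_le_mul_of_nonneg_right (hDb x) (abs_nonneg _)
    _ = 2 * ∫ x, |f x - g x| ∂μ := integral_const_mul 2 _


set_option maxHeartbeats 1000000 in
set_option synthInstance.maxHeartbeats 400000 in
/-- Let `w` and `w_n` be graphons with `‖w_n − w‖_□ → 0`.  Then for every
`h ∈ L¹[0,1]`, `∫₀¹ (d_{w_n}(x) − d_w(x)) h(x) dx → 0`. -/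
theorem degree_pairing_tendsto_zero_of_cutNorm_tendsto_zero
    (w : ℝ → ℝ → ℝ) (hw : IsGraphon w)
    (wn : ℕ → ℝ → ℝ → ℝ) (hwn : ∀ n, IsGraphon (wn n))
    (hconv : Tendsto (fun n => cutNorm fun x y => wn n x y - w x y) atTop (nhds 0))
    (h : ℝ → ℝ) (hh : Integrable h (volume.restrict (Set.Icc (0:ℝ) 1))) :
    Tendsto (fun n => ∫ x in Set.Icc (0:ℝ) 1, (degreeFn (wn n) x - degreeFn w x) * h x)
      atTop (nhds 0) := by
  set μ := volume.restrict I01 with hμ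
  set D : ℕ → ℝ → ℝ := fun n x => degreeFn (wn n) x - degreeFn w x with hDdef
  have Dmeas : ∀ n, Measurable (D n) := fun n => (deg_meas (hwn n)).sub (deg_meas hw)
  have Dbd : ∀ n x, |D n x| ≤ 2 := fun n x => by
    have h1 := deg_bound (hwn n) x
    have h2 := deg_bound hw x
    calc |D n x| ≤ |degreeFn (wn n) x| + |degreeFn w x| := abs_sub _ _
      _ ≤ 2 := by linarith
  have Dint : ∀ n {f : ℝ → ℝ}, Integrable f μ → Integrable (fun x => D n x * f x) μ :=
    fun n f hf => hf.bdd_mul (Dmeas n).aestronglyMeasurable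
      (c := 2) (Eventually.of_forall fun x => by simpa using Dbd n x)
  have key : ∀ n {S : Set ℝ}, MeasurableSet S →
      |∫ x in S, D n x ∂μ| ≤ cutNorm fun x y => wn n x y - w x y := by
    intro n S hS
    rw [hμ, Measure.restrict_restrict hS]
    exact key_bound (hwn n) hw hS
  suffices H : ∀ {f : ℝ → ℝ}, Integrable f μ →
      Tendsto (fun n => ∫ x, D n x * f x ∂μ) atTop (nhds 0) from H hh
  intro f hf
  refine Integrable.induction (μ := μ)
    (P := fun f => Tendsto (fun n => ∫ x, D n x * f x ∂μ) atTop (nhds 0))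
    ?_ ?_ ?_ ?_ hf
  · -- indicator
    intro c s hs hsfin
    rw [tendsto_zero_iff_abs_tendsto_zero]
    refine squeeze_zero (fun n => abs_nonneg _)
      (g := fun n => (cutNorm fun x y => wn n x y - w x y) * |c|) (fun n => ?_) ?_
    · simp only [Function.comp_apply]
      have : (fun x => D n x * s.indicator (fun _ => c) x) =
          s.indicator fun x => D n x * c := by
        funext x
        by_cases hx : x ∈ s <;> simp [Set.indicator, hx]
      rw [this, integral_indicator hs, integral_mul_const, abs_mul]
      exact mul_le_mul_of_nonneg_right (key n hs) (abs_nonneg _)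
    · simpa using hconv.mul_const |c|
  · -- additivity
    intro f g hdisj hfi hgi hPf hPg
    have : (fun n => ∫ x, D n x * (f + g) x ∂μ) =
        fun n => (∫ x, D n x * f x ∂μ) + ∫ x, D n x * g x ∂μ := by
      funext n
      rw [← integral_add (Dint n hfi) (Dint n hgi)]
      congr 1; funext x; simp [mul_add]
    rw [this]
    simpa using hPf.add hPg
  · -- closedness
    refine IsSeqClosed.isClosed ?_
    intro g f hg hgf
    refine Metric.tendsto_atTop.mpr fun ε hε => ?_
    obtain ⟨k, hk⟩ : ∃ k, ‖g k - f‖ < ε / 8 := by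
      obtain ⟨N, hN⟩ := Metric.tendsto_atTop.mp hgf (ε / 8) (by linarith)
      exact ⟨N, by simpa [dist_eq_norm] using hN N le_rfl⟩
    obtain ⟨N, hN⟩ := Metric.tendsto_atTop.mp (hg k) (ε / 2) (by linarith)
    refine ⟨N, fun n hn => ?_⟩
    have hfi : Integrable (f : ℝ → ℝ) μ := L1.integrable_coeFn f
    have hgi : Integrable (g k : ℝ → ℝ) μ := L1.integrable_coeFn (g k)
    have lip := lip_est (Dmeas n) (Dbd n) hfi hgi
    have hnorm : (∫ x, |(f : ℝ → ℝ) x - (g k : ℝ → ℝ) x| ∂μ) = ‖f - g k‖ := by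
      rw [L1.norm_eq_integral_norm]
      refine integral_congr_ae ?_
      filter_upwards [Lp.coeFn_sub f (g k)] with x hx
      rw [hx]; simp [Real.norm_eq_abs]
    rw [hnorm] at lip
    have hk' : ‖f - g k‖ < ε / 8 := by rwa [norm_sub_rev] at hk
    have hgk := hN n hn
    rw [Real.dist_eq, sub_zero] at hgk ⊢
    calc |∫ x, D n x * (f : ℝ → ℝ) x ∂μ|
        ≤ |(∫ x, D n x * (f : ℝ → ℝ) x ∂μ) - ∫ x, D n x * (g k : ℝ → ℝ) x ∂μ| +
          |∫ x, D n x * (g k : ℝ → ℝ) x ∂μ| := by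
          simpa using abs_add_le ((∫ x, D n x * (f : ℝ → ℝ) x ∂μ) -
            ∫ x, D n x * (g k : ℝ → ℝ) x ∂μ) (∫ x, D n x * (g k : ℝ → ℝ) x ∂μ)
      _ < ε := by linarith [lip, hgk, hk']
  · -- ae congruence
    intro f g hfg hfi hPf
    have : (fun n => ∫ x, D n x * g x ∂μ) = fun n => ∫ x, D n x * f x ∂μ := by
      funext n
      refine integral_congr_ae ?_
      filter_upwards [hfg] with x hx
      rw [hx]
    rw [this]
    exact hPf
end
end

section
/- Let w and w_n (n ∈ ℕ) be graphons with ‖w_n − w‖_□ → 0 as n → ∞. Then the multiplication operators M_{w_n} converge to M_w in the weak operator topology on L²[0,1]; that is, for all f, g ∈ L²[0,1], ⟨M_{w_n} f, g⟩ → ⟨M_w f, g⟩ as n → ∞. -/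
open MeasureTheory Filter
open scoped ENNReal InnerProductSpace

noncomputable section

namespace CutNormAux

lemma vol_inter_le_one (T : Set ℝ) : volume (T ∩ Set.Icc (0:ℝ) 1) ≤ 1 := by
  calc volume (T ∩ Set.Icc (0:ℝ) 1) ≤ volume (Set.Icc (0:ℝ) 1) :=
        measure_mono Set.inter_subset_right
    _ = 1 := by simp [Real.volume_Icc]

lemma slice_integrable {w : ℝ → ℝ → ℝ} (hw : IsGraphon w) (x : ℝ) :
    IntegrableOn (w x) (Set.Icc (0:ℝ) 1) := by
  have hm : Measurable (w x) := hw.1.of_uncurry_left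
  refine Integrable.mono' (integrable_const 1) hm.aestronglyMeasurable ?_
  filter_upwards with y
  have h := hw.2.2 x y
  rw [Real.norm_eq_abs, abs_le]
  exact ⟨by linarith [h.1], h.2⟩

lemma degreeFn_mem {w : ℝ → ℝ → ℝ} (hw : IsGraphon w) (x : ℝ) :
    degreeFn w x ∈ Set.Icc (0:ℝ) 1 := by
  constructor
  · exact setIntegral_nonneg measurableSet_Icc fun y _ => (hw.2.2 x y).1
  · calc degreeFn w x ≤ ∫ y in Set.Icc (0:ℝ) 1, (1:ℝ) :=
        setIntegral_mono_on (slice_integrable hw x) (integrable_const 1)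
          measurableSet_Icc fun y _ => (hw.2.2 x y).2
      _ = 1 := by simp [Real.volume_Icc]

lemma measurable_degreeFn {w : ℝ → ℝ → ℝ} (hw : Measurable (Function.uncurry w)) :
    Measurable (degreeFn w) :=
  (hw.stronglyMeasurable.integral_prod_right
    (ν := volume.restrict (Set.Icc (0:ℝ) 1))).measurable

lemma cutNorm_term_le {u : ℝ → ℝ → ℝ} (_hm : Measurable (Function.uncurry u))
    (hu : ∀ x y, |u x y| ≤ 1)
    (p : {S : Set ℝ // MeasurableSet S} × {T : Set ℝ // MeasurableSet T}) :
    |∫ x in p.1.1 ∩ Set.Icc (0:ℝ) 1, ∫ y in p.2.1 ∩ Set.Icc (0:ℝ) 1, u x y| ≤ 1 := by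
  have hB : volume (p.2.1 ∩ Set.Icc (0:ℝ) 1) ≤ 1 := vol_inter_le_one _
  have hA : volume (p.1.1 ∩ Set.Icc (0:ℝ) 1) ≤ 1 := vol_inter_le_one _
  have hBlt : volume (p.2.1 ∩ Set.Icc (0:ℝ) 1) < ∞ := lt_of_le_of_lt hB (by norm_num)
  have hAlt : volume (p.1.1 ∩ Set.Icc (0:ℝ) 1) < ∞ := lt_of_le_of_lt hA (by norm_num)
  have hinner : ∀ x, ‖∫ y in p.2.1 ∩ Set.Icc (0:ℝ) 1, u x y‖ ≤ 1 := by
    intro x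
    have := norm_setIntegral_le_of_norm_le_const (C := 1) hBlt
      (f := u x) (fun y _ => by simpa [Real.norm_eq_abs] using hu x y)
    calc ‖∫ y in p.2.1 ∩ Set.Icc (0:ℝ) 1, u x y‖
        ≤ 1 * (volume (p.2.1 ∩ Set.Icc (0:ℝ) 1)).toReal := this
      _ ≤ 1 := by
          rw [one_mul]
          exact ENNReal.toReal_le_of_le_ofReal one_pos.le (by simpa using hB)
  have houter := norm_setIntegral_le_of_norm_le_const (C := 1) hAlt
    (f := fun x => ∫ y in p.2.1 ∩ Set.Icc (0:ℝ) 1, u x y) (fun x _ => hinner x)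
  calc |∫ x in p.1.1 ∩ Set.Icc (0:ℝ) 1, ∫ y in p.2.1 ∩ Set.Icc (0:ℝ) 1, u x y|
      ≤ 1 * (volume (p.1.1 ∩ Set.Icc (0:ℝ) 1)).toReal := houter
    _ ≤ 1 := by
        rw [one_mul]
        exact ENNReal.toReal_le_of_le_ofReal one_pos.le (by simpa using hA)

lemma abs_setIntegral_deg_sub_le {w w' : ℝ → ℝ → ℝ} (hw : IsGraphon w) (hw' : IsGraphon w')
    {S : Set ℝ} (hS : MeasurableSet S) :
    |∫ x in S ∩ Set.Icc (0:ℝ) 1, (degreeFn w x - degreeFn w' x)| ≤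
      cutNorm (fun x y => w x y - w' x y) := by
  have hmeas : Measurable (Function.uncurry fun x y => w x y - w' x y) := by
    exact hw.1.sub hw'.1
  have hu : ∀ x y, |w x y - w' x y| ≤ 1 := by
    intro x y
    have h1 := hw.2.2 x y; have h2 := hw'.2.2 x y
    rw [abs_le]; exact ⟨by linarith [h1.1, h2.2], by linarith [h1.2, h2.1]⟩
  have hbdd : BddAbove (Set.range fun p :
      {S : Set ℝ // MeasurableSet S} × {T : Set ℝ // MeasurableSet T} =>
      |∫ x in p.1.1 ∩ Set.Icc (0:ℝ) 1, ∫ y in p.2.1 ∩ Set.Icc (0:ℝ) 1, (w x y - w' x y)|) := by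
    refine ⟨1, ?_⟩
    rintro - ⟨p, rfl⟩
    exact cutNorm_term_le hmeas hu p
  have hre : (∫ x in S ∩ Set.Icc (0:ℝ) 1, (degreeFn w x - degreeFn w' x)) =
      ∫ x in S ∩ Set.Icc (0:ℝ) 1,
        ∫ y in Set.univ ∩ Set.Icc (0:ℝ) 1, (w x y - w' x y) := by
    refine integral_congr_ae (Filter.Eventually.of_forall fun x => ?_)
    rw [Set.univ_inter]
    exact (integral_sub (slice_integrable hw x) (slice_integrable hw' x)).symm
  rw [hre]
  exact le_ciSup hbdd (⟨S, hS⟩, ⟨Set.univ, MeasurableSet.univ⟩)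

set_option synthInstance.maxHeartbeats 1000000 in
set_option maxHeartbeats 1000000 in
lemma key (w : ℝ → ℝ → ℝ) (hw : IsGraphon w) (wn : ℕ → ℝ → ℝ → ℝ) (hwn : ∀ n, IsGraphon (wn n))
    (hconv : Tendsto (fun n => cutNorm fun x y => wn n x y - w x y) atTop (nhds 0))
    {h : ℝ → ℝ} (hh : Integrable h (volume.restrict (Set.Icc (0:ℝ) 1))) :
    Tendsto (fun n => ∫ x, (degreeFn (wn n) x - degreeFn w x) * h x
      ∂(volume.restrict (Set.Icc (0:ℝ) 1))) atTop (nhds 0) := by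
  set μ := volume.restrict (Set.Icc (0:ℝ) 1) with hμ
  set u : ℕ → ℝ → ℝ := fun n x => degreeFn (wn n) x - degreeFn w x with hu_def
  have humeas : ∀ n, Measurable (u n) := fun n =>
    (measurable_degreeFn (hwn n).1).sub (measurable_degreeFn hw.1)
  have hubd : ∀ n x, |u n x| ≤ 1 := by
    intro n x
    show |degreeFn (wn n) x - degreeFn w x| ≤ 1
    have h1 := degreeFn_mem (hwn n) x; have h2 := degreeFn_mem hw x
    rw [abs_le]; exact ⟨by linarith [h1.1, h2.2], by linarith [h1.2, h2.1]⟩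
  have hint : ∀ n (φ : ℝ → ℝ), Integrable φ μ → Integrable (fun x => u n x * φ x) μ := by
    intro n φ hφ
    exact hφ.bdd_mul (humeas n).aestronglyMeasurable
      (c := 1) (Filter.Eventually.of_forall fun x => by simpa [Real.norm_eq_abs] using hubd n x)
  have main : ∀ ⦃φ : ℝ → ℝ⦄, Integrable φ μ →
      Tendsto (fun n => ∫ x, u n x * φ x ∂μ) atTop (nhds 0) := by
    refine Integrable.induction
      (P := fun φ => Tendsto (fun n => ∫ x, u n x * φ x ∂μ) atTop (nhds 0)) ?_ ?_ ?_ ?_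
    · -- indicators
      intro c s hs _
      have heq : ∀ n, ∫ x, u n x * s.indicator (fun _ => c) x ∂μ =
          (∫ x in s ∩ Set.Icc (0:ℝ) 1, u n x) * c := by
        intro n
        have : (fun x => u n x * s.indicator (fun _ => c) x) =
            s.indicator (fun x => u n x * c) := by
          funext x
          by_cases hx : x ∈ s <;> simp [hx]
        rw [this, integral_indicator hs, hμ, Measure.restrict_restrict hs,
          integral_mul_const]
      simp only [heq]
      refine squeeze_zero_norm (fun n => ?_)
        (by simpa using hconv.mul_const |c|)
      rw [Real.norm_eq_abs, abs_mul]
      exact mul_le_mul_of_nonneg_right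
        (abs_setIntegral_deg_sub_le (hwn n) hw hs) (abs_nonneg c)
    · -- additivity
      intro φ ψ _ hφ hψ Pφ Pψ
      have : (fun n => ∫ x, u n x * (φ + ψ) x ∂μ) =
          fun n => (∫ x, u n x * φ x ∂μ) + ∫ x, u n x * ψ x ∂μ := by
        funext n
        simp only [Pi.add_apply, mul_add]
        exact integral_add (hint n φ hφ) (hint n ψ hψ)
      rw [this]
      simpa using Pφ.add Pψ
    · -- closedness in L¹
      refine IsSeqClosed.isClosed ?_
      intro fk F hfk hlim
      have hnorm : Tendsto (fun k => ‖fk k - F‖) atTop (nhds 0) := by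
        have h0 : Tendsto (fun k => fk k - F) atTop (nhds (F - F)) :=
          hlim.sub tendsto_const_nhds
        simpa using h0.norm
      show Tendsto (fun n => ∫ x, u n x * (F : ℝ → ℝ) x ∂μ) atTop (nhds 0)
      rw [Metric.tendsto_atTop]
      intro ε hε
      obtain ⟨K, hK⟩ := Metric.tendsto_atTop.mp hnorm (ε / 2) (by linarith)
      set k := K with hkdef
      have hk := hK K le_rfl
      rw [Real.dist_eq, sub_zero] at hk
      have hk' : ‖fk k - F‖ < ε / 2 := lt_of_le_of_lt (le_abs_self _) hk
      obtain ⟨N, hN⟩ := Metric.tendsto_atTop.mp (hfk k) (ε / 2) (by linarith)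
      refine ⟨N, fun n hn => ?_⟩
      rw [Real.dist_eq, sub_zero]
      have hdiff : |∫ x, u n x * F x ∂μ - ∫ x, u n x * (fk k) x ∂μ| ≤ ‖F - fk k‖ := by
        have hFi : Integrable (F : ℝ → ℝ) μ := L1.integrable_coeFn F
        have hki : Integrable ((fk k : Lp ℝ 1 μ) : ℝ → ℝ) μ := L1.integrable_coeFn (fk k)
        rw [← integral_sub (hint n F hFi) (hint n _ hki)]
        calc |∫ x, (u n x * F x - u n x * (fk k) x) ∂μ|
            ≤ ∫ x, |u n x * F x - u n x * (fk k) x| ∂μ := by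
              simpa [Real.norm_eq_abs] using
                norm_integral_le_integral_norm (fun x => u n x * F x - u n x * (fk k) x)
          _ ≤ ∫ x, |F x - (fk k) x| ∂μ := by
              refine integral_mono_of_nonneg (Filter.Eventually.of_forall fun x => abs_nonneg _)
                ((hFi.sub hki).abs) (Filter.Eventually.of_forall fun x => ?_)
              dsimp only
              rw [← mul_sub, abs_mul]
              calc |u n x| * |F x - (fk k) x| ≤ 1 * |F x - (fk k) x| :=
                    mul_le_mul_of_nonneg_right (hubd n x) (abs_nonneg _)
                _ = |F x - (fk k) x| := one_mul _
          _ = ‖F - fk k‖ := by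
              rw [L1.norm_eq_integral_norm]
              refine (integral_congr_ae ?_).symm
              filter_upwards [Lp.coeFn_sub F (fk k)] with x hx
              rw [Real.norm_eq_abs, hx, Pi.sub_apply]
      have h2 : |∫ x, u n x * (fk k) x ∂μ| < ε / 2 := by
        have := hN n hn
        rwa [Real.dist_eq, sub_zero] at this
      have habs : |∫ x, u n x * F x ∂μ| ≤
          |∫ x, u n x * F x ∂μ - ∫ x, u n x * (fk k) x ∂μ| +
            |∫ x, u n x * (fk k) x ∂μ| := by
        have := abs_sub_abs_le_abs_sub (∫ x, u n x * F x ∂μ) (∫ x, u n x * (fk k) x ∂μ)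
        have := abs_nonneg (∫ x, u n x * (fk k) x ∂μ)
        linarith [abs_sub_abs_le_abs_sub (∫ x, u n x * F x ∂μ) (∫ x, u n x * (fk k) x ∂μ)]
      have hrev : ‖F - fk k‖ = ‖fk k - F‖ := norm_sub_rev _ _
      linarith [hdiff, h2]
    · -- a.e. congruence
      intro φ ψ hφψ _ Pφ
      have : (fun n => ∫ x, u n x * ψ x ∂μ) = fun n => ∫ x, u n x * φ x ∂μ := by
        funext n
        exact integral_congr_ae (hφψ.symm.mono fun x hx => by simp only [hx])
      rw [this]; exact Pφ
  exact main hh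

end CutNormAux

/-- Let `w` and `w_n` be graphons with `‖w_n − w‖_□ → 0`.  Then the
multiplication operators `M_{w_n}` (by the degree functions `d_{w_n}`) converge to `M_w`
in the weak operator topology on `L²[0,1]`: for all `f, g ∈ L²[0,1]`,
`⟨M_{w_n} f, g⟩ → ⟨M_w f, g⟩`. -/
theorem multiplication_operators_tendsto_WOT_of_cutNorm_tendsto_zero
    (w : ℝ → ℝ → ℝ) (hw : IsGraphon w)
    (wn : ℕ → ℝ → ℝ → ℝ) (hwn : ∀ n, IsGraphon (wn n))
    (hconv : Tendsto (fun n => cutNorm fun x y => wn n x y - w x y) atTop (nhds 0))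
    -- the multiplication operators
    (M : Lp ℝ 2 (volume.restrict (Set.Icc (0:ℝ) 1)) →L[ℝ]
      Lp ℝ 2 (volume.restrict (Set.Icc (0:ℝ) 1)))
    (Mn : ℕ → Lp ℝ 2 (volume.restrict (Set.Icc (0:ℝ) 1)) →L[ℝ]
      Lp ℝ 2 (volume.restrict (Set.Icc (0:ℝ) 1)))
    (hM : ∀ f : Lp ℝ 2 (volume.restrict (Set.Icc (0:ℝ) 1)),
      (M f : ℝ → ℝ) =ᵐ[volume.restrict (Set.Icc (0:ℝ) 1)] fun x => degreeFn w x * f x)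
    (hMn : ∀ n (f : Lp ℝ 2 (volume.restrict (Set.Icc (0:ℝ) 1))),
      (Mn n f : ℝ → ℝ) =ᵐ[volume.restrict (Set.Icc (0:ℝ) 1)]
        fun x => degreeFn (wn n) x * f x)
    (f g : Lp ℝ 2 (volume.restrict (Set.Icc (0:ℝ) 1))) :
    Tendsto (fun n => ⟪Mn n f, g⟫_ℝ) atTop (nhds ⟪M f, g⟫_ℝ) := by
  have hfg_int : Integrable (fun x => f x * g x) (volume.restrict (Set.Icc (0:ℝ) 1)) := by
    have := MeasureTheory.L2.integrable_inner (𝕜 := ℝ) f g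
    simpa [RCLike.inner_apply, mul_comm] using this
  have hmulint : ∀ (v : ℝ → ℝ → ℝ), IsGraphon v →
      Integrable (fun x => degreeFn v x * (f x * g x)) (volume.restrict (Set.Icc (0:ℝ) 1)) := by
    intro v hv
    refine hfg_int.bdd_mul (CutNormAux.measurable_degreeFn hv.1).aestronglyMeasurable (c := 1) (Filter.Eventually.of_forall fun x => ?_)
    have := CutNormAux.degreeFn_mem hv x
    rw [Real.norm_eq_abs, abs_le]
    exact ⟨by linarith [this.1], this.2⟩
  have hinner : ∀ (T : Lp ℝ 2 (volume.restrict (Set.Icc (0:ℝ) 1)) →L[ℝ] Lp ℝ 2 (volume.restrict (Set.Icc (0:ℝ) 1))) (v : ℝ → ℝ → ℝ),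
      ((T f : ℝ → ℝ) =ᵐ[volume.restrict (Set.Icc (0:ℝ) 1)] fun x => degreeFn v x * f x) →
      ⟪T f, g⟫_ℝ = ∫ x, degreeFn v x * (f x * g x) ∂(volume.restrict (Set.Icc (0:ℝ) 1)) := by
    intro T v hT
    rw [MeasureTheory.L2.inner_def]
    refine integral_congr_ae ?_
    filter_upwards [hT] with x hx
    simp [RCLike.inner_apply, hx, mul_assoc]; ring
  have heq : ∀ n, ⟪Mn n f, g⟫_ℝ - ⟪M f, g⟫_ℝ =
      ∫ x, (degreeFn (wn n) x - degreeFn w x) * (f x * g x) ∂(volume.restrict (Set.Icc (0:ℝ) 1)) := by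
    intro n
    rw [hinner (Mn n) (wn n) (hMn n f), hinner M w (hM f),
      ← integral_sub (hmulint (wn n) (hwn n)) (hmulint w hw)]
    refine integral_congr_ae (Filter.Eventually.of_forall fun x => ?_)
    ring
  have hkey := CutNormAux.key w hw wn hwn hconv hfg_int
  have : Tendsto (fun n => ⟪Mn n f, g⟫_ℝ - ⟪M f, g⟫_ℝ) atTop (nhds 0) := by
    have : (fun n => ⟪Mn n f, g⟫_ℝ - ⟪M f, g⟫_ℝ) =
        fun n => ∫ x, (degreeFn (wn n) x - degreeFn w x) * (f x * g x) ∂(volume.restrict (Set.Icc (0:ℝ) 1)) :=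
      funext heq
    rw [this]; exact hkey
  simpa using this.add_const ⟪M f, g⟫_ℝ
end
end

section
/- Let w and w_n (n ∈ ℕ) be graphons with ‖w_n − w‖_□ → 0 as n → ∞. Then the graphon Laplacians L_{w_n} converge to L_w in the weak operator topology on L²[0,1]; that is, for all f, g ∈ L²[0,1], ⟨L_{w_n} f, g⟩ → ⟨L_w f, g⟩ as n → ∞. -/
open MeasureTheory Filter
open scoped ENNReal InnerProductSpace

noncomputable section

namespace GraphonAux

abbrev I01 : Set ℝ := Set.Icc (0:ℝ) 1
abbrev μ01 : Measure ℝ := volume.restrict I01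

instance : IsFiniteMeasure μ01 := ⟨by simp [Real.volume_Icc]⟩

lemma vol_inter_lt_top (S : Set ℝ) : volume (S ∩ I01) < ∞ :=
  lt_of_le_of_lt (le_trans (measure_mono Set.inter_subset_right) (by simp [Real.volume_Icc]))
    ENNReal.one_lt_top

lemma toReal_vol_inter_le (S : Set ℝ) : (volume (S ∩ I01)).toReal ≤ 1 := by
  have h : volume (S ∩ I01) ≤ 1 := le_trans (measure_mono Set.inter_subset_right) (by simp [Real.volume_Icc])
  exact ENNReal.toReal_le_of_le_ofReal zero_le_one (by simpa using h)

lemma abs_inner_setIntegral_le {u : ℝ → ℝ → ℝ} (hu : ∀ x y, |u x y| ≤ 1) (x : ℝ) (T : Set ℝ) :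
    |∫ y in T ∩ I01, u x y| ≤ 1 := by
  have h := norm_setIntegral_le_of_norm_le_const_ae (μ := volume) (s := T ∩ I01) (C := 1)
      (f := fun y => u x y) (vol_inter_lt_top T)
      (Eventually.of_forall fun y => by simpa using hu x y)
  calc |∫ y in T ∩ I01, u x y| ≤ 1 * (volume (T ∩ I01)).toReal := by simpa [Measure.real] using h
    _ ≤ 1 := by rw [one_mul]; exact toReal_vol_inter_le T

lemma abs_setIntegral_le_cutNorm {u : ℝ → ℝ → ℝ} (hu : ∀ x y, |u x y| ≤ 1)
    {A B : Set ℝ} (hA : MeasurableSet A) (hB : MeasurableSet B) :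
    |∫ x in A ∩ I01, ∫ y in B ∩ I01, u x y| ≤ cutNorm u := by
  have hbdd : BddAbove (Set.range fun p : {S : Set ℝ // MeasurableSet S} × {T : Set ℝ // MeasurableSet T} =>
      |∫ x in p.1.1 ∩ I01, ∫ y in p.2.1 ∩ I01, u x y|) := by
    refine ⟨1, ?_⟩
    rintro r ⟨p, rfl⟩
    have h := norm_setIntegral_le_of_norm_le_const_ae (μ := volume) (s := p.1.1 ∩ I01) (C := 1)
        (f := fun x => ∫ y in p.2.1 ∩ I01, u x y) (vol_inter_lt_top p.1.1)
        (Eventually.of_forall fun x => by simpa using abs_inner_setIntegral_le hu x p.2.1)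
    calc |∫ x in p.1.1 ∩ I01, ∫ y in p.2.1 ∩ I01, u x y|
        ≤ 1 * (volume (p.1.1 ∩ I01)).toReal := by simpa [Measure.real] using h
      _ ≤ 1 := by rw [one_mul]; exact toReal_vol_inter_le _
  exact le_ciSup hbdd (⟨⟨A, hA⟩, ⟨B, hB⟩⟩ : {S : Set ℝ // MeasurableSet S} × {T : Set ℝ // MeasurableSet T})

lemma abs_integral_integral_le_cutNorm {u : ℝ → ℝ → ℝ} (hu : ∀ x y, |u x y| ≤ 1)
    {A B : Set ℝ} (hA : MeasurableSet A) (hB : MeasurableSet B) :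
    |∫ x in A, (∫ y in B, u x y ∂μ01) ∂μ01| ≤ cutNorm u := by
  have h2 : ∫ x in A, (∫ y in B, u x y ∂μ01) ∂μ01 = ∫ x in A ∩ I01, ∫ y in B ∩ I01, u x y := by
    rw [Measure.restrict_restrict hA]
    exact integral_congr_ae (Eventually.of_forall fun x => by rw [Measure.restrict_restrict hB])
  rw [h2]; exact abs_setIntegral_le_cutNorm hu hA hB

lemma abs_integral_integral_univ_le_cutNorm {u : ℝ → ℝ → ℝ} (hu : ∀ x y, |u x y| ≤ 1)
    {A : Set ℝ} (hA : MeasurableSet A) :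
    |∫ x in A, (∫ y, u x y ∂μ01) ∂μ01| ≤ cutNorm u := by
  have := abs_integral_integral_le_cutNorm hu hA MeasurableSet.univ (B := Set.univ)
  simpa [Measure.restrict_univ] using this


lemma isClosed_tendstoZero {X : Type*} [PseudoMetricSpace X] (F : ℕ → X → ℝ) (C : ℝ) (hC : 0 ≤ C)
    (hF : ∀ n (x y : X), |F n x - F n y| ≤ C * dist x y) :
    IsClosed {x | Tendsto (fun n => F n x) atTop (nhds 0)} := by
  refine isClosed_of_closure_subset fun x hx => ?_
  simp only [Set.mem_setOf_eq]
  rw [Metric.tendsto_atTop]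
  intro ε hε
  obtain ⟨y, hyS, hxy⟩ := Metric.mem_closure_iff.1 hx (ε / (2 * (C + 1))) (by positivity)
  obtain ⟨N, hN⟩ := (Metric.tendsto_atTop.1 (Set.mem_setOf_eq ▸ hyS)) (ε / 2) (by positivity)
  refine ⟨N, fun n hn => ?_⟩
  have h2 := hN n hn
  rw [Real.dist_eq, sub_zero] at h2 ⊢
  have h1 : |F n x| ≤ C * dist x y + |F n y| := by
    calc |F n x| = |(F n x - F n y) + F n y| := by ring_nf
      _ ≤ |F n x - F n y| + |F n y| := abs_add_le _ _
      _ ≤ C * dist x y + |F n y| := by linarith [hF n x y]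
  have hd : C * dist x y ≤ C * (ε / (2 * (C + 1))) :=
    mul_le_mul_of_nonneg_left hxy.le hC
  have hkey : C * (ε / (2 * (C + 1))) ≤ ε / 2 := by
    have hpos : (0:ℝ) < C + 1 := by linarith
    rw [mul_div_assoc' , div_le_div_iff₀ (by positivity) (by norm_num : (0:ℝ) < 2)]
    nlinarith [hε.le]
  linarith

lemma tendsto_integral_mul_of_small_sets
    (φ : ℕ → ℝ → ℝ) (hm : ∀ n, AEStronglyMeasurable (φ n) μ01)
    (hb : ∀ n x, |φ n x| ≤ 1)
    (ε : ℕ → ℝ) (hε : Tendsto ε atTop (nhds 0))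
    (hset : ∀ n (A : Set ℝ), MeasurableSet A → |∫ x in A, φ n x ∂μ01| ≤ ε n)
    {p : ℝ → ℝ} (hp : Integrable p μ01) :
    Tendsto (fun n => ∫ x, φ n x * p x ∂μ01) atTop (nhds 0) := by
  have hint : ∀ n (q : ℝ → ℝ), Integrable q μ01 → Integrable (fun x => φ n x * q x) μ01 :=
    fun n q hq => hq.bdd_mul (hm n) (c := 1) (Eventually.of_forall fun x => by simpa using hb n x)
  refine Integrable.induction (μ := μ01)
    (P := fun p => Tendsto (fun n => ∫ x, φ n x * p x ∂μ01) atTop (nhds 0)) ?_ ?_ ?_ ?_ hp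
  · intro c s hs hμs
    have key : ∀ n, ∫ x, φ n x * s.indicator (fun _ => c) x ∂μ01 = (∫ x in s, φ n x ∂μ01) * c := by
      intro n
      have heq : (fun x => φ n x * s.indicator (fun _ => c) x)
          = s.indicator (fun x => φ n x * c) := by
        ext x; by_cases hx : x ∈ s <;> simp [Set.indicator_of_mem, Set.indicator_of_notMem, hx]
      rw [heq, integral_indicator hs, integral_mul_const]
    simp only [key]
    refine squeeze_zero_norm (fun n => ?_) (by simpa using hε.mul_const |c|)
    rw [Real.norm_eq_abs, abs_mul]
    exact mul_le_mul_of_nonneg_right (hset n s hs) (abs_nonneg _)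
  · intro p q _ hpi hqi hP hQ
    have key : ∀ n, ∫ x, φ n x * (p + q) x ∂μ01
        = (∫ x, φ n x * p x ∂μ01) + ∫ x, φ n x * q x ∂μ01 := by
      intro n
      rw [← integral_add (hint n p hpi) (hint n q hqi)]
      refine integral_congr_ae (Eventually.of_forall fun x => ?_)
      simp [mul_add]
    simp only [key]
    simpa using hP.add hQ
  · have := isClosed_tendstoZero (X := Lp ℝ 1 μ01)
      (fun n q => ∫ x, φ n x * q x ∂μ01) 1 zero_le_one ?_
    · exact this
    · intro n q q'
      have hq := L1.integrable_coeFn q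
      have hq' := L1.integrable_coeFn q'
      rw [← integral_sub (hint n _ hq) (hint n _ hq')]
      have h1 : |∫ x, (φ n x * q x - φ n x * q' x) ∂μ01| ≤ ∫ x, |q x - q' x| ∂μ01 := by
        calc |∫ x, (φ n x * q x - φ n x * q' x) ∂μ01|
            ≤ ∫ x, |φ n x * q x - φ n x * q' x| ∂μ01 := by
              simpa using norm_integral_le_integral_norm (fun x => φ n x * q x - φ n x * q' x)
          _ ≤ ∫ x, |q x - q' x| ∂μ01 := by
              refine integral_mono ((hint n _ hq).sub (hint n _ hq')).abs (hq.sub hq').abs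
                fun x => ?_
              rw [← mul_sub, abs_mul]
              exact mul_le_mul_of_nonneg_right
                ((hb n x).trans (le_refl 1)) (abs_nonneg _) |>.trans (by rw [one_mul])
      have h2 : ∫ x, |q x - q' x| ∂μ01 = dist q q' := by
        rw [L1.dist_eq_integral_dist]
        exact integral_congr_ae (Eventually.of_forall fun x => (Real.dist_eq _ _).symm)
      rw [one_mul, ← h2]
      exact h1
  · intro p q hpq hpi hP
    have key : ∀ n, ∫ x, φ n x * q x ∂μ01 = ∫ x, φ n x * p x ∂μ01 := by
      intro n
      refine integral_congr_ae ?_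
      filter_upwards [hpq] with x hx
      rw [hx]
    simp only [key]
    exact hP

section Double

variable (u : ℕ → ℝ → ℝ → ℝ) (hmu : ∀ n, Measurable (Function.uncurry (u n)))
  (hb : ∀ n x y, |u n x y| ≤ 1)

include hmu hb

lemma innerInt (n : ℕ) (x : ℝ) {q : ℝ → ℝ} (hq : Integrable q μ01) :
    Integrable (fun y => u n x y * q y) μ01 :=
  hq.bdd_mul ((hmu n).of_uncurry_left.aestronglyMeasurable)
    (c := 1) (Eventually.of_forall fun y => by simpa using hb n x y)

lemma psiMeas (n : ℕ) {q : ℝ → ℝ} (hq : AEStronglyMeasurable q μ01) :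
    AEStronglyMeasurable (fun x => ∫ y, u n x y * q y ∂μ01) μ01 := by
  have h : AEStronglyMeasurable (fun z : ℝ × ℝ => u n z.1 z.2 * q z.2) (μ01.prod μ01) :=
    ((hmu n).aestronglyMeasurable).mul hq.comp_snd
  exact h.integral_prod_right'

lemma psiBound (n : ℕ) (x : ℝ) {q : ℝ → ℝ} (hq : Integrable q μ01) :
    |∫ y, u n x y * q y ∂μ01| ≤ ∫ y, |q y| ∂μ01 := by
  calc |∫ y, u n x y * q y ∂μ01| ≤ ∫ y, |u n x y| * |q y| ∂μ01 := by
        simpa [abs_mul] using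
          norm_integral_le_integral_norm (μ := μ01) (fun y => u n x y * q y)
    _ ≤ ∫ y, |q y| ∂μ01 := by
        refine integral_mono
          ((innerInt u hmu hb n x hq).abs.congr
            (Eventually.of_forall fun y => abs_mul _ _)) hq.abs fun y => ?_
        calc |u n x y| * |q y| ≤ 1 * |q y| :=
              mul_le_mul_of_nonneg_right (hb n x y) (abs_nonneg _)
          _ = |q y| := one_mul _

lemma outerInt (n : ℕ) {q G : ℝ → ℝ} (hq : Integrable q μ01) (hG : Integrable G μ01) :
    Integrable (fun x => (∫ y, u n x y * q y ∂μ01) * G x) μ01 :=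
  hG.bdd_mul (psiMeas u hmu hb n hq.1)
    (c := ∫ y, |q y| ∂μ01) (Eventually.of_forall fun x => by simpa using psiBound u hmu hb n x hq)

lemma tendsto_doubleIntegral
    (hcut : Tendsto (fun n => cutNorm (u n)) atTop (nhds 0))
    {G : ℝ → ℝ} (hG : Integrable G μ01)
    {f : ℝ → ℝ} (hf : Integrable f μ01) :
    Tendsto (fun n => ∫ x, (∫ y, u n x y * f y ∂μ01) * G x ∂μ01) atTop (nhds 0) := by
  refine Integrable.induction (μ := μ01)
    (P := fun f => Tendsto (fun n => ∫ x, (∫ y, u n x y * f y ∂μ01) * G x ∂μ01) atTop (nhds 0))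
    ?_ ?_ ?_ ?_ hf
  · -- indicator
    intro c s hs hμs
    set φ' : ℕ → ℝ → ℝ := fun n x => ∫ y in s, u n x y ∂μ01 with hφ'
    have hinner : ∀ n x, ∫ y, u n x y * s.indicator (fun _ => c) y ∂μ01 = φ' n x * c := by
      intro n x
      have heq : (fun y => u n x y * s.indicator (fun _ => c) y)
          = s.indicator (fun y => u n x y * c) := by
        ext y; by_cases hy : y ∈ s <;> simp [Set.indicator_of_mem, Set.indicator_of_notMem, hy]
      rw [heq, integral_indicator hs, integral_mul_const]
    have key : ∀ n, ∫ x, (∫ y, u n x y * s.indicator (fun _ => c) y ∂μ01) * G x ∂μ01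
        = ∫ x, φ' n x * (c * G x) ∂μ01 := by
      intro n
      refine integral_congr_ae (Eventually.of_forall fun x => ?_)
      dsimp only
      rw [hinner n x]; ring
    simp only [key]
    refine tendsto_integral_mul_of_small_sets φ' ?_ ?_ (fun n => cutNorm (u n)) hcut ?_
      (hG.const_mul c)
    · intro n
      exact (((hmu n).stronglyMeasurable).integral_prod_right (ν := μ01.restrict s)).aestronglyMeasurable
    · intro n x
      have h := norm_setIntegral_le_of_norm_le_const_ae (μ := μ01) (s := s) (C := 1)
          (f := fun y => u n x y) (measure_lt_top _ _)
          (Eventually.of_forall fun y => by simpa using hb n x y)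
      have h2 : (μ01 s).toReal ≤ 1 := by
        rw [Measure.restrict_apply hs]
        exact toReal_vol_inter_le s
      calc |φ' n x| ≤ 1 * (μ01 s).toReal := by simpa [Measure.real] using h
        _ ≤ 1 := by rw [one_mul]; exact h2
    · intro n A hA
      exact abs_integral_integral_le_cutNorm (hb n) hA hs
  · -- additivity
    intro p q _ hpi hqi hP hQ
    have key : ∀ n, ∫ x, (∫ y, u n x y * (p + q) y ∂μ01) * G x ∂μ01
        = (∫ x, (∫ y, u n x y * p y ∂μ01) * G x ∂μ01)
          + ∫ x, (∫ y, u n x y * q y ∂μ01) * G x ∂μ01 := by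
      intro n
      have hinner : ∀ x, ∫ y, u n x y * (p + q) y ∂μ01
          = (∫ y, u n x y * p y ∂μ01) + ∫ y, u n x y * q y ∂μ01 := by
        intro x
        rw [← integral_add (innerInt u hmu hb n x hpi) (innerInt u hmu hb n x hqi)]
        refine integral_congr_ae (Eventually.of_forall fun y => ?_)
        simp [mul_add]
      rw [← integral_add (outerInt u hmu hb n hpi hG) (outerInt u hmu hb n hqi hG)]
      refine integral_congr_ae (Eventually.of_forall fun x => ?_)
      dsimp only
      rw [hinner x]; ring
    simp only [key]
    simpa using hP.add hQ
  · -- closedness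
    have := isClosed_tendstoZero (X := Lp ℝ 1 μ01)
      (fun n q => ∫ x, (∫ y, u n x y * q y ∂μ01) * G x ∂μ01) (∫ x, |G x| ∂μ01)
      (integral_nonneg fun x => abs_nonneg _) ?_
    · exact this
    · intro n q q'
      have hq := L1.integrable_coeFn q
      have hq' := L1.integrable_coeFn q'
      have hD : ∫ y, |q y - q' y| ∂μ01 = dist q q' := by
        rw [L1.dist_eq_integral_dist]
        exact integral_congr_ae (Eventually.of_forall fun y => (Real.dist_eq _ _).symm)
      have hΨ : ∀ x, (∫ y, u n x y * q y ∂μ01) - (∫ y, u n x y * q' y ∂μ01)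
          = ∫ y, u n x y * (q y - q' y) ∂μ01 := by
        intro x
        rw [← integral_sub (innerInt u hmu hb n x hq) (innerInt u hmu hb n x hq')]
        refine integral_congr_ae (Eventually.of_forall fun y => ?_)
        simp [mul_sub]
      rw [← integral_sub (outerInt u hmu hb n hq hG) (outerInt u hmu hb n hq' hG)]
      have hsub : Integrable (fun y => q y - q' y) μ01 := hq.sub hq'
      have step1 : |∫ x, ((∫ y, u n x y * q y ∂μ01) * G x - (∫ y, u n x y * q' y ∂μ01) * G x) ∂μ01|
          ≤ ∫ x, (∫ y, |q y - q' y| ∂μ01) * |G x| ∂μ01 := by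
        calc |∫ x, ((∫ y, u n x y * q y ∂μ01) * G x - (∫ y, u n x y * q' y ∂μ01) * G x) ∂μ01|
            ≤ ∫ x, |(∫ y, u n x y * q y ∂μ01) * G x - (∫ y, u n x y * q' y ∂μ01) * G x| ∂μ01 := by
              simpa [Real.norm_eq_abs] using norm_integral_le_integral_norm (μ := μ01)
                (fun x => (∫ y, u n x y * q y ∂μ01) * G x - (∫ y, u n x y * q' y ∂μ01) * G x)
          _ ≤ ∫ x, (∫ y, |q y - q' y| ∂μ01) * |G x| ∂μ01 := by
              refine integral_mono ((outerInt u hmu hb n hq hG).sub (outerInt u hmu hb n hq' hG)).abs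
                (hG.abs.const_mul _) fun x => ?_
              rw [← sub_mul, abs_mul, hΨ x]
              exact mul_le_mul_of_nonneg_right (psiBound u hmu hb n x hsub) (abs_nonneg _)
      calc |∫ x, ((∫ y, u n x y * q y ∂μ01) * G x - (∫ y, u n x y * q' y ∂μ01) * G x) ∂μ01|
          ≤ ∫ x, (∫ y, |q y - q' y| ∂μ01) * |G x| ∂μ01 := step1
        _ = (∫ x, |G x| ∂μ01) * (∫ y, |q y - q' y| ∂μ01) := by
            rw [integral_const_mul]; ring
        _ = (∫ x, |G x| ∂μ01) * dist q q' := by rw [hD]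
  · -- ae congruence
    intro p q hpq hpi hP
    have key : ∀ n, ∫ x, (∫ y, u n x y * q y ∂μ01) * G x ∂μ01
        = ∫ x, (∫ y, u n x y * p y ∂μ01) * G x ∂μ01 := by
      intro n
      have hinner : ∀ x, ∫ y, u n x y * q y ∂μ01 = ∫ y, u n x y * p y ∂μ01 := fun x =>
        integral_congr_ae (by filter_upwards [hpq] with y hy; rw [hy])
      refine integral_congr_ae (Eventually.of_forall fun x => ?_)
      dsimp only
      rw [hinner x]
    simp only [key]
    exact hP

end Double

end GraphonAux

open GraphonAux

/-- Let `w` and `w_n` be graphons with `‖w_n − w‖_□ → 0`.  Then the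
graphon Laplacians `L_{w_n}` converge to `L_w` in the weak operator topology on `L²[0,1]`:
for all `f, g ∈ L²[0,1]`, `⟨L_{w_n} f, g⟩ → ⟨L_w f, g⟩`. -/
theorem laplacians_tendsto_WOT_of_cutNorm_tendsto_zero
    (w : ℝ → ℝ → ℝ) (hw : IsGraphon w)
    (wn : ℕ → ℝ → ℝ → ℝ) (hwn : ∀ n, IsGraphon (wn n))
    (hconv : Tendsto (fun n => cutNorm fun x y => wn n x y - w x y) atTop (nhds 0))
    -- the graphon Laplacians
    (L : Lp ℝ 2 (volume.restrict (Set.Icc (0:ℝ) 1)) →L[ℝ]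
      Lp ℝ 2 (volume.restrict (Set.Icc (0:ℝ) 1)))
    (Ln : ℕ → Lp ℝ 2 (volume.restrict (Set.Icc (0:ℝ) 1)) →L[ℝ]
      Lp ℝ 2 (volume.restrict (Set.Icc (0:ℝ) 1)))
    (hL : ∀ f : Lp ℝ 2 (volume.restrict (Set.Icc (0:ℝ) 1)),
      (L f : ℝ → ℝ) =ᵐ[volume.restrict (Set.Icc (0:ℝ) 1)]
        fun x => ∫ y in Set.Icc (0:ℝ) 1, w x y * (f x - f y))
    (hLn : ∀ n (f : Lp ℝ 2 (volume.restrict (Set.Icc (0:ℝ) 1))),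
      (Ln n f : ℝ → ℝ) =ᵐ[volume.restrict (Set.Icc (0:ℝ) 1)]
        fun x => ∫ y in Set.Icc (0:ℝ) 1, wn n x y * (f x - f y))
    (f g : Lp ℝ 2 (volume.restrict (Set.Icc (0:ℝ) 1))) :
    Tendsto (fun n => ⟪Ln n f, g⟫_ℝ) atTop (nhds ⟪L f, g⟫_ℝ) := by
  classical
  set F : ℝ → ℝ := (f : ℝ → ℝ) with hF
  set G : ℝ → ℝ := (g : ℝ → ℝ) with hG
  have hF1 : Integrable F μ01 := (Lp.memLp f).integrable one_le_two
  have hG1 : Integrable G μ01 := (Lp.memLp g).integrable one_le_two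
  have hFmeas : AEStronglyMeasurable F μ01 := (Lp.memLp f).1
  have hFG : Integrable (fun x => F x * G x) μ01 := by
    have h := L2.integrable_inner (𝕜 := ℝ) f g
    simp [RCLike.inner_apply, starRingEnd_apply, star_trivial] at h
    exact h.congr (Eventually.of_forall fun x => mul_comm _ _)
  -- the kernels u n
  set u : ℕ → ℝ → ℝ → ℝ := fun n x y => wn n x y - w x y with hu
  have hub : ∀ n x y, |u n x y| ≤ 1 := by
    intro n x y
    have h1 := (hwn n).2.2 x y; have h2 := hw.2.2 x y
    rw [Set.mem_Icc] at h1 h2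
    rw [hu, abs_le]
    constructor <;> simp only <;> linarith [h1.1, h1.2, h2.1, h2.2]
  have hum : ∀ n, Measurable (Function.uncurry (u n)) := by
    intro n
    have heq : Function.uncurry (u n)
        = fun z : ℝ × ℝ => Function.uncurry (wn n) z - Function.uncurry w z := rfl
    rw [heq]; exact ((hwn n).1).sub hw.1
  have hcut : Tendsto (fun n => cutNorm (u n)) atTop (nhds 0) := hconv
  -- integrability of y ↦ v x y * (F x - F y) for a graphon v
  have hker : ∀ (v : ℝ → ℝ → ℝ), IsGraphon v → ∀ x : ℝ,
      Integrable (fun y => v x y * (F x - F y)) μ01 := by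
    intro v hv x
    refine ((integrable_const (F x)).sub hF1).bdd_mul
      (hv.1.of_uncurry_left.aestronglyMeasurable) (c := 1) (Eventually.of_forall fun y => ?_)
    have h := hv.2.2 x y; rw [Set.mem_Icc] at h
    rw [Real.norm_eq_abs, abs_le]; exact ⟨by linarith [h.1], h.2⟩
  -- inner products as integrals
  have hinner2 : ∀ h : Lp ℝ 2 μ01, ⟪h, g⟫_ℝ = ∫ x, (h : ℝ → ℝ) x * G x ∂μ01 := by
    intro h
    rw [L2.inner_def]
    exact integral_congr_ae (Eventually.of_forall fun x => by
      simp [RCLike.inner_apply, starRingEnd_apply, star_trivial]; exact mul_comm _ _)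
  have hLn' : ∀ n, ⟪Ln n f, g⟫_ℝ
      = ∫ x, (∫ y, wn n x y * (F x - F y) ∂μ01) * G x ∂μ01 := by
    intro n
    rw [hinner2 (Ln n f)]
    refine integral_congr_ae ?_
    filter_upwards [hLn n f] with x hx
    rw [hx]
  have hL' : ⟪L f, g⟫_ℝ = ∫ x, (∫ y, w x y * (F x - F y) ∂μ01) * G x ∂μ01 := by
    rw [hinner2 (L f)]
    refine integral_congr_ae ?_
    filter_upwards [hL f] with x hx
    rw [hx]
  -- integrability of the outer integrands
  have houtn : ∀ n, Integrable (fun x => (∫ y, wn n x y * (F x - F y) ∂μ01) * G x) μ01 := by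
    intro n
    have h := L2.integrable_inner (𝕜 := ℝ) (Ln n f) g
    have h' : Integrable (fun x => ((Ln n f : ℝ → ℝ)) x * G x) μ01 := by
      simp [RCLike.inner_apply, starRingEnd_apply, star_trivial] at h
      exact h.congr (Eventually.of_forall fun x => mul_comm _ _)
    refine h'.congr ?_
    filter_upwards [hLn n f] with x hx
    rw [hx]
  have hout : Integrable (fun x => (∫ y, w x y * (F x - F y) ∂μ01) * G x) μ01 := by
    have h := L2.integrable_inner (𝕜 := ℝ) (L f) g
    have h' : Integrable (fun x => ((L f : ℝ → ℝ)) x * G x) μ01 := by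
      simp [RCLike.inner_apply, starRingEnd_apply, star_trivial] at h
      exact h.congr (Eventually.of_forall fun x => mul_comm _ _)
    refine h'.congr ?_
    filter_upwards [hL f] with x hx
    rw [hx]
  -- the two pieces
  set φ : ℕ → ℝ → ℝ := fun n x => ∫ y, u n x y ∂μ01 with hφ
  set Ψ : ℕ → ℝ → ℝ := fun n x => ∫ y, u n x y * F y ∂μ01 with hΨ
  have hφm : ∀ n, AEStronglyMeasurable (φ n) μ01 := fun n =>
    (((hum n).stronglyMeasurable).integral_prod_right (ν := μ01)).aestronglyMeasurable
  have hφb : ∀ n x, |φ n x| ≤ 1 := by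
    intro n x
    have h := norm_integral_le_of_norm_le_const (μ := μ01) (f := fun y => u n x y) (C := 1)
      (Eventually.of_forall fun y => by simpa using hub n x y)
    have h2 : (μ01 Set.univ).toReal = 1 := by
      simp [Real.volume_Icc]
    calc |φ n x| ≤ 1 * (μ01 Set.univ).toReal := by simpa using h
      _ = 1 := by rw [h2, one_mul]
  have hφset : ∀ n (A : Set ℝ), MeasurableSet A → |∫ x in A, φ n x ∂μ01| ≤ cutNorm (u n) :=
    fun n A hA => abs_integral_integral_univ_le_cutNorm (hub n) hA
  have hT1 : Tendsto (fun n => ∫ x, φ n x * (F x * G x) ∂μ01) atTop (nhds 0) :=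
    tendsto_integral_mul_of_small_sets φ hφm hφb (fun n => cutNorm (u n)) hcut hφset hFG
  have hT2 : Tendsto (fun n => ∫ x, Ψ n x * G x ∂μ01) atTop (nhds 0) :=
    tendsto_doubleIntegral u hum hub hcut hG1 hF1
  -- pointwise splitting of the inner integral
  have hsplit : ∀ n x,
      (∫ y, wn n x y * (F x - F y) ∂μ01) - (∫ y, w x y * (F x - F y) ∂μ01)
        = φ n x * F x - Ψ n x := by
    intro n x
    have msect : Measurable (u n x) := (hum n).of_uncurry_left
    have int1 : Integrable (fun y => u n x y * F x) μ01 :=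
      (integrable_const (F x)).bdd_mul msect.aestronglyMeasurable
        (c := 1) (Eventually.of_forall fun y => by simpa using hub n x y)
    have int2 : Integrable (fun y => u n x y * F y) μ01 :=
      hF1.bdd_mul msect.aestronglyMeasurable (c := 1) (Eventually.of_forall fun y => by simpa using hub n x y)
    have e1 : (∫ y, wn n x y * (F x - F y) ∂μ01) - (∫ y, w x y * (F x - F y) ∂μ01)
        = ∫ y, u n x y * (F x - F y) ∂μ01 := by
      rw [← integral_sub (hker (wn n) (hwn n) x) (hker w hw x)]
      refine integral_congr_ae (Eventually.of_forall fun y => ?_)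
      rw [hu]; ring
    have e2 : ∫ y, u n x y * (F x - F y) ∂μ01
        = (∫ y, u n x y * F x ∂μ01) - ∫ y, u n x y * F y ∂μ01 := by
      rw [← integral_sub int1 int2]
      refine integral_congr_ae (Eventually.of_forall fun y => ?_)
      ring
    rw [e1, e2, integral_mul_const]
  -- the difference of inner products
  have hdiff : ∀ n, ⟪Ln n f, g⟫_ℝ - ⟪L f, g⟫_ℝ
      = (∫ x, φ n x * (F x * G x) ∂μ01) - ∫ x, Ψ n x * G x ∂μ01 := by
    intro n
    have intA : Integrable (fun x => φ n x * (F x * G x)) μ01 :=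
      hFG.bdd_mul (hφm n) (c := 1) (Eventually.of_forall fun x => by simpa using hφb n x)
    have intB : Integrable (fun x => Ψ n x * G x) μ01 :=
      outerInt u hum hub n hF1 hG1
    rw [hLn' n, hL', ← integral_sub (houtn n) hout, ← integral_sub intA intB]
    refine integral_congr_ae (Eventually.of_forall fun x => ?_)
    dsimp only
    rw [← sub_mul, hsplit n x]
    ring
  have h0 : Tendsto (fun n => ⟪Ln n f, g⟫_ℝ - ⟪L f, g⟫_ℝ) atTop (nhds 0) := by
    have := hT1.sub hT2
    rw [sub_zero] at this
    exact this.congr fun n => (hdiff n).symm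
  simpa using tendsto_sub_nhds_zero_iff.mp h0
end
end
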